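/- arXiv:2303.16548 — 5 statements merged into one kernel-verified Lean document; each statement's English description precedes it below -/
import Mathlib

section
/- Let ξ be a centered real random variable with ‖ξ‖_{L^p} ≤ γp for all p ≥ 1, and let Q be a fixed symmetric n×n real matrix. Then for all |λ| < 1/(2eγ‖Q‖), the matrix moment generating function satisfies E[exp(λξQ)] ⪯ exp(λ² (2eγ‖Q‖)² I_n / 2) in the Loewner order. -/
open MeasureTheory Real
open scoped ENNReal NNReal

lemma moment_bound {Ω : Type*} [MeasurableSpace Ω] (μ : Measure Ω) [IsProbabilityMeasure μ]
    (ξ : Ω → ℝ) (γ : ℝ) (hγ : 0 < γ)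
    (hmom : ∀ p : ℝ, 1 ≤ p →
      eLpNorm ξ (ENNReal.ofReal p) μ ≤ ENNReal.ofReal (γ * p))
    (k : ℕ) (hk : 1 ≤ k) :
    ∫⁻ ω, (‖ξ ω‖₊ : ℝ≥0∞) ^ k ∂μ ≤ ENNReal.ofReal ((γ * k) ^ k) := by
  have hkR : (0:ℝ) < (k:ℝ) := by exact_mod_cast hk
  have hk0 : (k:ℝ≥0∞) ≠ 0 := by exact_mod_cast hkR.ne'
  have hk' : (1:ℝ) ≤ (k:ℝ) := by exact_mod_cast hk
  have h := hmom (k:ℝ) hk'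
  rw [ENNReal.ofReal_natCast] at h
  rw [eLpNorm_eq_lintegral_rpow_enorm_toReal hk0 (by simp)] at h
  simp only [ENNReal.toReal_natCast] at h
  have h2 := ENNReal.rpow_le_rpow h (le_of_lt hkR)
  rw [← ENNReal.rpow_mul, one_div, inv_mul_cancel₀ hkR.ne', ENNReal.rpow_one] at h2
  calc ∫⁻ ω, (‖ξ ω‖₊ : ℝ≥0∞) ^ k ∂μ
      = ∫⁻ ω, (‖ξ ω‖₊ : ℝ≥0∞) ^ (k:ℝ) ∂μ := by simp [ENNReal.rpow_natCast]
    _ ≤ ENNReal.ofReal (γ * k) ^ ((k:ℕ):ℝ) := h2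
    _ = ENNReal.ofReal ((γ * k) ^ k) := by
        rw [← Real.rpow_natCast (γ*(k:ℝ)) k, ENNReal.ofReal_rpow_of_nonneg (by positivity) (le_of_lt hkR)]

lemma fact_bound (k : ℕ) : (k:ℝ)^k / k.factorial ≤ Real.exp 1 ^ k := by
  have h1 : (k:ℝ)^k / k.factorial ≤ ∑ i ∈ Finset.range (k+1), (k:ℝ)^i / i.factorial := by
    have := Finset.single_le_sum (f := fun i => (k:ℝ)^i / i.factorial)
      (fun i _ => by positivity) (Finset.self_mem_range_succ k)
    simpa using this
  have h2 := Real.sum_le_exp_of_nonneg (x := (k:ℝ)) (by positivity) (k+1)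
  calc (k:ℝ)^k / k.factorial ≤ ∑ i ∈ Finset.range (k+1), (k:ℝ)^i / i.factorial := h1
    _ ≤ Real.exp k := h2
    _ = Real.exp 1 ^ k := by rw [← Real.exp_nat_mul]; norm_num

lemma term_lintegral_bound {Ω : Type*} [MeasurableSpace Ω] (μ : Measure Ω) [IsProbabilityMeasure μ]
    (ξ : Ω → ℝ) (hmeas : Measurable ξ) (γ : ℝ) (hγ : 0 < γ)
    (hmom : ∀ p : ℝ, 1 ≤ p →
      eLpNorm ξ (ENNReal.ofReal p) μ ≤ ENNReal.ofReal (γ * p))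
    (t : ℝ) (k : ℕ) :
    ∫⁻ ω, ENNReal.ofReal (|t * ξ ω| ^ k / k.factorial) ∂μ
      ≤ ENNReal.ofReal ((|t| * (γ * Real.exp 1)) ^ k) := by
  rcases Nat.eq_zero_or_pos k with hk | hk
  · subst hk; simp
  · have hmb := moment_bound μ ξ γ hγ hmom k hk
    have heq : ∀ ω, ENNReal.ofReal (|t * ξ ω| ^ k / k.factorial)
        = ENNReal.ofReal (|t| ^ k / k.factorial) * (‖ξ ω‖₊ : ℝ≥0∞) ^ k := by
      intro ω
      rw [show ((‖ξ ω‖₊ : ℝ≥0∞)) = ENNReal.ofReal |ξ ω| by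
        simp [← enorm_eq_nnnorm, Real.enorm_eq_ofReal_abs]]
      rw [← ENNReal.ofReal_pow (abs_nonneg _), ← ENNReal.ofReal_mul (by positivity)]
      congr 1
      rw [abs_mul, mul_pow]
      ring
    simp_rw [heq]
    rw [lintegral_const_mul _ (by measurability)]
    calc ENNReal.ofReal (|t| ^ k / k.factorial) * ∫⁻ ω, (‖ξ ω‖₊ : ℝ≥0∞) ^ k ∂μ
        ≤ ENNReal.ofReal (|t| ^ k / k.factorial) * ENNReal.ofReal ((γ * k) ^ k) :=
          mul_le_mul_right hmb _
      _ = ENNReal.ofReal (|t| ^ k / k.factorial * (γ * k) ^ k) := by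
          rw [← ENNReal.ofReal_mul (by positivity)]
      _ ≤ ENNReal.ofReal ((|t| * (γ * Real.exp 1)) ^ k) := by
          apply ENNReal.ofReal_le_ofReal
          have hfb := fact_bound k
          have hγk : (0:ℝ) ≤ γ ^ k := by positivity
          calc |t| ^ k / k.factorial * (γ * k) ^ k
              = |t| ^ k * γ ^ k * ((k:ℝ)^k / k.factorial) := by
                rw [mul_pow]; ring
            _ ≤ |t| ^ k * γ ^ k * Real.exp 1 ^ k := by
                apply mul_le_mul_of_nonneg_left hfb (by positivity)
            _ = (|t| * (γ * Real.exp 1)) ^ k := by rw [mul_pow, mul_pow]; ring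

lemma mgf_bound {Ω : Type*} [MeasurableSpace Ω] (μ : Measure Ω) [IsProbabilityMeasure μ]
    (ξ : Ω → ℝ) (hmeas : Measurable ξ) (hcent : ∫ ω, ξ ω ∂μ = 0) (γ : ℝ) (hγ : 0 < γ)
    (hmom : ∀ p : ℝ, 1 ≤ p →
      eLpNorm ξ (ENNReal.ofReal p) μ ≤ ENNReal.ofReal (γ * p))
    (t : ℝ) (ht : |t| * (γ * Real.exp 1) ≤ 1/2) :
    Integrable (fun ω => Real.exp (t * ξ ω)) μ ∧
    ∫ ω, Real.exp (t * ξ ω) ∂μ ≤ 1 + 2 * (|t| * (γ * Real.exp 1))^2 := by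
  set x : ℝ := |t| * (γ * Real.exp 1) with hx
  have hx0 : 0 ≤ x := by positivity
  have hx1 : x < 1 := lt_of_le_of_lt ht (by norm_num)
  set F : ℕ → Ω → ℝ := fun k ω => (t * ξ ω)^k / k.factorial with hF
  have hnormF : ∀ k ω, ‖F k ω‖ = |t * ξ ω| ^ k / k.factorial := by
    intro k ω
    rw [hF]; simp [abs_div, abs_pow, abs_mul]
  have hFnn : ∀ k ω, (‖F k ω‖₊ : ℝ≥0∞) = ENNReal.ofReal (|t * ξ ω| ^ k / k.factorial) := by
    intro k ω
    rw [← enorm_eq_nnnorm, ← ofReal_norm, hnormF]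
  have hFlint : ∀ k, ∫⁻ ω, (‖F k ω‖₊ : ℝ≥0∞) ∂μ ≤ ENNReal.ofReal (x ^ k) := by
    intro k
    simp_rw [hFnn]
    exact term_lintegral_bound μ ξ hmeas γ hγ hmom t k
  have hFmeas : ∀ k, AEStronglyMeasurable (F k) μ := by
    intro k
    exact ((hmeas.const_mul t).pow_const k |>.div_const _).aestronglyMeasurable
  have hsumx : Summable (fun k : ℕ => x ^ k) := summable_geometric_of_lt_one hx0 hx1
  have htsum_ne_top : (∑' k, ∫⁻ ω, (‖F k ω‖₊ : ℝ≥0∞) ∂μ) ≠ ∞ := by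
    apply ne_top_of_le_ne_top (b := ENNReal.ofReal (∑' k : ℕ, x ^ k))
    · exact ENNReal.ofReal_ne_top
    · rw [ENNReal.ofReal_tsum_of_nonneg (fun k => by positivity) hsumx]
      exact ENNReal.tsum_le_tsum hFlint
  -- pointwise expansion
  have hexp : ∀ ω, Real.exp (t * ξ ω) = ∑' k, F k ω := by
    intro ω
    rw [Real.exp_eq_exp_ℝ, NormedSpace.exp_eq_tsum_div]
  -- integrability of F k
  have hFint : ∀ k, Integrable (F k) μ := by
    intro k
    refine ⟨hFmeas k, ?_⟩
    show (∫⁻ ω, (‖F k ω‖₊ : ℝ≥0∞) ∂μ) < ⊤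
    exact lt_of_le_of_lt (hFlint k) ENNReal.ofReal_lt_top
  -- integrability of exp
  have hint : Integrable (fun ω => Real.exp (t * ξ ω)) μ := by
    refine ⟨(Real.measurable_exp.comp (hmeas.const_mul t)).aestronglyMeasurable, ?_⟩
    show (∫⁻ ω, (‖Real.exp (t * ξ ω)‖₊ : ℝ≥0∞) ∂μ) < ⊤
    have hb : ∀ ω, (‖Real.exp (t * ξ ω)‖₊ : ℝ≥0∞) ≤ ∑' k, (‖F k ω‖₊ : ℝ≥0∞) := by
      intro ω
      rw [← enorm_eq_nnnorm, ← ofReal_norm, Real.norm_eq_abs, abs_of_pos (Real.exp_pos _)]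
      have h1 : Real.exp (t * ξ ω) ≤ Real.exp |t * ξ ω| := Real.exp_le_exp.2 (le_abs_self _)
      have h2 : Real.exp |t * ξ ω| = ∑' k, |t * ξ ω| ^ k / k.factorial := by
        rw [Real.exp_eq_exp_ℝ, NormedSpace.exp_eq_tsum_div]
      calc ENNReal.ofReal (Real.exp (t * ξ ω)) ≤ ENNReal.ofReal (Real.exp |t * ξ ω|) :=
            ENNReal.ofReal_le_ofReal h1
        _ = ∑' k, ENNReal.ofReal (|t * ξ ω| ^ k / k.factorial) := by
            rw [h2, ENNReal.ofReal_tsum_of_nonneg (fun k => by positivity)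
              (Real.summable_pow_div_factorial _)]
        _ = ∑' k, (‖F k ω‖₊ : ℝ≥0∞) := by simp_rw [hFnn]
    calc ∫⁻ ω, (‖Real.exp (t * ξ ω)‖₊ : ℝ≥0∞) ∂μ
        ≤ ∫⁻ ω, ∑' k, (‖F k ω‖₊ : ℝ≥0∞) ∂μ := lintegral_mono hb
      _ = ∑' k, ∫⁻ ω, (‖F k ω‖₊ : ℝ≥0∞) ∂μ := lintegral_tsum
          (fun k => (hFmeas k).enorm)
      _ < ∞ := lt_top_iff_ne_top.2 htsum_ne_top
  refine ⟨hint, ?_⟩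
  -- swap integral and sum
  have hswap : ∫ ω, Real.exp (t * ξ ω) ∂μ = ∑' k, ∫ ω, F k ω ∂μ := by
    simp_rw [hexp]
    exact integral_tsum hFmeas htsum_ne_top
  set a : ℕ → ℝ := fun k => ∫ ω, F k ω ∂μ with ha
  have ha0 : a 0 = 1 := by simp [ha, hF]
  have ha1 : a 1 = 0 := by
    simp only [ha, hF, pow_one, Nat.factorial_one, Nat.cast_one, div_one]
    rw [integral_const_mul, hcent, mul_zero]
  have habs : ∀ k, |a k| ≤ x ^ k := by
    intro k
    calc |a k| = ‖∫ ω, F k ω ∂μ‖ := rfl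
      _ ≤ (∫⁻ ω, ENNReal.ofReal ‖F k ω‖ ∂μ).toReal := norm_integral_le_lintegral_norm _
      _ = (∫⁻ ω, (‖F k ω‖₊ : ℝ≥0∞) ∂μ).toReal := by simp only [ofReal_norm, enorm_eq_nnnorm]
      _ ≤ (ENNReal.ofReal (x ^ k)).toReal :=
          ENNReal.toReal_mono ENNReal.ofReal_ne_top (hFlint k)
      _ = x ^ k := ENNReal.toReal_ofReal (by positivity)
  have hasumm : Summable a := by
    apply Summable.of_norm_bounded hsumx
    intro k; exact habs k
  rw [hswap]
  have h2sum : Summable (fun k : ℕ => a (k + 2)) := by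
    exact (summable_nat_add_iff 2).2 hasumm
  have hsplit : ∑' k, a k = a 0 + (a 1 + ∑' k, a (k + 2)) := by
    rw [hasumm.tsum_eq_zero_add]
    congr 1
    rw [((summable_nat_add_iff 1).2 hasumm).tsum_eq_zero_add]
  rw [hsplit, ha0, ha1, zero_add]
  have htail : ∑' k, a (k + 2) ≤ 2 * x ^ 2 := by
    have h1 : ∑' k, a (k + 2) ≤ ∑' k : ℕ, x ^ (k + 2) := by
      apply h2sum.tsum_le_tsum _ ((summable_nat_add_iff 2).2 hsumx)
      intro k
      exact le_trans (le_abs_self _) (habs (k + 2))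
    have h2 : ∑' k : ℕ, x ^ (k + 2) = x ^ 2 * (1 - x)⁻¹ := by
      simp_rw [pow_add, mul_comm (x ^ _) (x ^ 2)]
      rw [tsum_mul_left, tsum_geometric_of_lt_one hx0 hx1]
    have h3 : (1 - x)⁻¹ ≤ 2 := by
      rw [inv_le_comm₀ (by linarith) (by norm_num)]
      linarith
    calc ∑' k, a (k + 2) ≤ x ^ 2 * (1 - x)⁻¹ := h1.trans_eq h2
      _ ≤ x ^ 2 * 2 := by nlinarith
      _ = 2 * x ^ 2 := by ring
  linarith

/-- The ℓ²→ℓ² operator (spectral) norm of a real matrix. -/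
noncomputable def opNorm {m n : ℕ} (M : Matrix (Fin m) (Fin n) ℝ) : ℝ :=
  ‖LinearMap.toContinuousLinearMap (Matrix.toEuclideanLin M)‖

/-- Entrywise expectation of a random matrix. -/
noncomputable def Emat {Ω : Type*} [MeasurableSpace Ω] (μ : Measure Ω) {a b : ℕ}
    (f : Ω → Matrix (Fin a) (Fin b) ℝ) : Matrix (Fin a) (Fin b) ℝ :=
  Matrix.of fun i j => ∫ ω, f ω i j ∂μ

lemma eigenvalue_abs_le {n : ℕ} (Q : Matrix (Fin n) (Fin n) ℝ) (hH : Q.IsHermitian) (i : Fin n) :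
    |hH.eigenvalues i| ≤ opNorm Q := by
  set v : EuclideanSpace ℝ (Fin n) := hH.eigenvectorBasis i with hv
  have hnv : ‖v‖ = 1 := hH.eigenvectorBasis.orthonormal.1 i
  have h1 : Matrix.toEuclideanLin Q v = hH.eigenvalues i • v := by
    apply (WithLp.equiv 2 _).injective
    rw [show (WithLp.equiv 2 (Fin n → ℝ)) (Matrix.toEuclideanLin Q v) = Matrix.mulVec Q ⇑v from rfl]
    rw [hH.mulVec_eigenvectorBasis i]
    rfl
  have h2 : ‖Matrix.toEuclideanLin Q v‖ = |hH.eigenvalues i| := by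
    rw [h1, norm_smul, hnv, mul_one, Real.norm_eq_abs]
  have h3 := (LinearMap.toContinuousLinearMap (Matrix.toEuclideanLin Q)).le_opNorm v
  rw [show (LinearMap.toContinuousLinearMap (Matrix.toEuclideanLin Q)) v
      = Matrix.toEuclideanLin Q v from rfl, h2, hnv, mul_one] at h3
  exact h3

lemma Emat_conj {Ω : Type*} [MeasurableSpace Ω] (μ : Measure Ω) [IsProbabilityMeasure μ]
    {n : ℕ} (V W : Matrix (Fin n) (Fin n) ℝ) (f : Ω → Fin n → ℝ)
    (hf : ∀ i, Integrable (fun ω => f ω i) μ) :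
    Emat μ (fun ω => V * Matrix.diagonal (f ω) * W)
      = V * Matrix.diagonal (fun i => ∫ ω, f ω i ∂μ) * W := by
  ext i j
  show ∫ ω, (V * Matrix.diagonal (f ω) * W) i j ∂μ = _
  have hentry : ∀ ω, (V * Matrix.diagonal (f ω) * W) i j
      = ∑ k, V i k * f ω k * W k j := by
    intro ω
    rw [Matrix.mul_assoc]
    simp [Matrix.mul_apply, Matrix.diagonal_apply, ite_mul, zero_mul, Finset.sum_ite_eq, mul_assoc]
  simp_rw [hentry]
  rw [integral_finset_sum _ (fun k _ => ((hf k).const_mul (V i k)).mul_const (W k j))]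
  have : (V * Matrix.diagonal (fun i => ∫ ω, f ω i ∂μ) * W) i j
      = ∑ k, V i k * (∫ ω, f ω k ∂μ) * W k j := by
    rw [Matrix.mul_assoc]
    simp [Matrix.mul_apply, Matrix.diagonal_apply, ite_mul, zero_mul, Finset.sum_ite_eq, mul_assoc]
  rw [this]
  congr 1
  ext k
  rw [integral_mul_const, integral_const_mul]

/-- If `ξ` is a centered sub-exponential scalar (`‖ξ‖_{L^p} ≤ γp`) and
`Q` a fixed symmetric matrix, then the matrix MGF satisfies
`E[exp(λξQ)] ⪯ exp(λ²(2eγ‖Q‖)² I / 2)` in the Loewner order, for `|λ| < 1/(2eγ‖Q‖)`. -/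
theorem matrix_mgf_bound_of_subexponential_scalar
    {Ω : Type*} [MeasurableSpace Ω] (μ : Measure Ω) [IsProbabilityMeasure μ]
    (ξ : Ω → ℝ) (hmeas : Measurable ξ)
    (hcent : ∫ ω, ξ ω ∂μ = 0)
    (γ : ℝ) (hγ : 0 < γ)
    (hmom : ∀ p : ℝ, 1 ≤ p →
      eLpNorm ξ (ENNReal.ofReal p) μ ≤ ENNReal.ofReal (γ * p))
    (n : ℕ) (Q : Matrix (Fin n) (Fin n) ℝ) (hQ : Q.IsSymm) :
    ∀ l : ℝ, |l| < 1 / (2 * Real.exp 1 * γ * opNorm Q) →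
      (NormedSpace.exp ((l ^ 2 * (2 * Real.exp 1 * γ * opNorm Q) ^ 2 / 2) •
          (1 : Matrix (Fin n) (Fin n) ℝ)) -
        Emat μ (fun ω => NormedSpace.exp ((l * ξ ω) • Q))).PosSemidef := by
  intro l hl
  have hop0 : 0 ≤ opNorm Q := norm_nonneg _
  have hop : 0 < opNorm Q := by
    rcases hop0.lt_or_eq with h | h
    · exact h
    · exfalso
      rw [← h] at hl
      simp at hl
      exact absurd hl (not_lt.2 (abs_nonneg l))
  have he1 : (0:ℝ) < Real.exp 1 := Real.exp_pos 1
  set c : ℝ := 2 * Real.exp 1 * γ * opNorm Q with hc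
  have hc0 : 0 < c := by positivity
  have hlc : |l| * c < 1 := by
    rw [lt_div_iff₀ hc0] at hl
    linarith [hl]
  -- Hermitian structure
  have hH : Q.IsHermitian := by
    rw [Matrix.IsHermitian, Matrix.conjTranspose_eq_transpose_of_trivial]
    exact hQ
  classical
  set d : Fin n → ℝ := hH.eigenvalues with hd
  set V : Matrix (Fin n) (Fin n) ℝ := (hH.eigenvectorUnitary : Matrix (Fin n) (Fin n) ℝ) with hV
  have hVW : V * star V = 1 := (Matrix.mem_unitaryGroup_iff).mp (hH.eigenvectorUnitary).2
  have hWV : star V * V = 1 := (Matrix.mem_unitaryGroup_iff').mp (hH.eigenvectorUnitary).2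
  set Vu : (Matrix (Fin n) (Fin n) ℝ)ˣ := ⟨V, star V, hVW, hWV⟩ with hVu
  have hspec : Q = V * Matrix.diagonal d * star V := by
    have := hH.spectral_theorem
    simpa [RCLike.ofReal_real_eq_id] using this
  have hdabs : ∀ i, |d i| ≤ opNorm Q := fun i => eigenvalue_abs_le Q hH i
  -- exp of s • Q
  have key2 : ∀ s : ℝ, NormedSpace.exp (s • Q)
      = V * Matrix.diagonal (fun i => Real.exp (s * d i)) * star V := by
    intro s
    have h1 : s • Q = V * Matrix.diagonal (s • d) * star V := by
      rw [hspec, Matrix.diagonal_smul, Matrix.mul_smul, Matrix.smul_mul]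
    rw [h1]
    have h2 := Matrix.exp_units_conj Vu (Matrix.diagonal (s • d))
    have hcoe : (↑Vu⁻¹ : Matrix (Fin n) (Fin n) ℝ) = star V := rfl
    rw [show (↑Vu : Matrix (Fin n) (Fin n) ℝ) = V from rfl, hcoe] at h2
    rw [h2, Matrix.exp_diagonal]
    have h3 : NormedSpace.exp (s • d) = fun i => Real.exp (s * d i) := by
      funext i
      rw [Pi.coe_exp, ← Real.exp_eq_exp_ℝ]
      simp
    rw [h3]
  -- scalar bounds
  have hti : ∀ i : Fin n, |l * d i| * (γ * Real.exp 1) ≤ 1/2 := by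
    intro i
    have h1 : |l * d i| ≤ |l| * opNorm Q := by
      rw [abs_mul]
      exact mul_le_mul_of_nonneg_left (hdabs i) (abs_nonneg l)
    have h2 : |l| * opNorm Q * (γ * Real.exp 1) = |l| * c / 2 := by
      rw [hc]; ring
    nlinarith [abs_nonneg (l * d i), mul_le_mul_of_nonneg_right h1 (by positivity : (0:ℝ) ≤ γ * Real.exp 1)]
  have hmgf := fun i : Fin n => mgf_bound μ ξ hmeas hcent γ hγ hmom (l * d i) (hti i)
  -- expectation matrix
  have key3 : Emat μ (fun ω => NormedSpace.exp ((l * ξ ω) • Q))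
      = V * Matrix.diagonal (fun i => ∫ ω, Real.exp ((l * d i) * ξ ω) ∂μ) * star V := by
    have hfun : (fun ω => NormedSpace.exp ((l * ξ ω) • Q))
        = fun ω => V * Matrix.diagonal (fun i => Real.exp ((l * d i) * ξ ω)) * star V := by
      funext ω
      rw [key2 (l * ξ ω)]
      have h9 : (fun i => Real.exp (l * ξ ω * d i)) = fun i => Real.exp ((l * d i) * ξ ω) := by
        funext i; rw [mul_right_comm]
      rw [h9]
    rw [hfun]
    exact Emat_conj μ V (star V) (fun ω i => Real.exp ((l * d i) * ξ ω))
      (fun i => (hmgf i).1)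
  set C : ℝ := l ^ 2 * c ^ 2 / 2 with hC
  have key4 : NormedSpace.exp (C • (1 : Matrix (Fin n) (Fin n) ℝ))
      = V * Matrix.diagonal (fun _ : Fin n => Real.exp C) * star V := by
    have h1 : C • (1 : Matrix (Fin n) (Fin n) ℝ)
        = Matrix.diagonal (fun _ : Fin n => C) := by
      ext i j
      by_cases h : i = j <;> simp [Matrix.one_apply, Matrix.diagonal_apply, h]
    rw [h1, Matrix.exp_diagonal]
    have h2 : NormedSpace.exp (fun _ : Fin n => C) = fun _ : Fin n => Real.exp C := by
      funext i
      rw [Pi.coe_exp, ← Real.exp_eq_exp_ℝ]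
    rw [h2]
    have h3 : Matrix.diagonal (fun _ : Fin n => Real.exp C)
        = Real.exp C • (1 : Matrix (Fin n) (Fin n) ℝ) := by
      ext i j
      by_cases h : i = j <;> simp [Matrix.one_apply, Matrix.diagonal_apply, h]
    rw [h3, Matrix.mul_smul, mul_one, Matrix.smul_mul, hVW]
  rw [key3, key4, ← Matrix.sub_mul, ← Matrix.mul_sub, Matrix.diagonal_sub,
    Matrix.star_eq_conjTranspose]
  apply Matrix.PosSemidef.mul_mul_conjTranspose_same
  apply Matrix.posSemidef_diagonal_iff.mpr
  intro i
  have hint := (hmgf i).2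
  set x : ℝ := |l * d i| * (γ * Real.exp 1) with hx
  have hx0 : 0 ≤ x := by positivity
  have h2x : 2 * x ^ 2 ≤ C := by
    rw [hC, hc, hx]
    have h1 : (d i) ^ 2 ≤ (opNorm Q) ^ 2 := by
      rw [← sq_abs (d i)]
      exact pow_le_pow_left₀ (abs_nonneg _) (hdabs i) 2
    have h2 : (l * d i) ^ 2 ≤ l ^ 2 * (opNorm Q) ^ 2 := by
      rw [mul_pow]
      exact mul_le_mul_of_nonneg_left h1 (sq_nonneg l)
    have h3 : x ^ 2 = (l * d i) ^ 2 * (γ * Real.exp 1) ^ 2 := by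
      rw [hx, mul_pow, sq_abs]
    nlinarith [sq_nonneg (γ * Real.exp 1), sq_nonneg l, sq_nonneg (opNorm Q)]
  have h4 : (1:ℝ) + 2 * x ^ 2 ≤ Real.exp (2 * x ^ 2) := by
    have := Real.add_one_le_exp (2 * x ^ 2)
    linarith
  have h5 : Real.exp (2 * x ^ 2) ≤ Real.exp C := Real.exp_le_exp.2 h2x
  linarith
end

section
/- Let x be a centered sub-Gaussian random vector in ℝ^n with parameter σ, i.e., ‖⟨u, x⟩‖_{L^p} ≤ σ√p for all unit vectors u and p ≥ 1, and suppose E[‖x‖²] ≤ K₀. Then for any symmetric n×n matrix M, the random variable x^T M x − E[x^T M x] satisfies ‖x^T M x − E[x^T M x]‖_{L^p} ≤ 4‖M‖(n·16(σ² + K₀) + K₀)·p for all p ≥ 1; in particular it is sub-exponential. -/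
open MeasureTheory Real Matrix
open scoped ENNReal NNReal

lemma abs_quad_le {n : ℕ} (M : Matrix (Fin n) (Fin n) ℝ) (v : Fin n → ℝ) :
    |v ⬝ᵥ M.mulVec v| ≤ opNorm M * ∑ i, v i ^ 2 := by
  classical
  set T := LinearMap.toContinuousLinearMap (Matrix.toEuclideanLin M) with hT
  set a : EuclideanSpace ℝ (Fin n) := (WithLp.equiv 2 (Fin n → ℝ)).symm v with ha
  have hTa : T a = (WithLp.equiv 2 (Fin n → ℝ)).symm (M.mulVec v) := by
    simp [hT, ha]
  have h1 : v ⬝ᵥ M.mulVec v = inner ℝ a (T a) := by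
    rw [hTa]
    simp [PiLp.inner_apply, RCLike.inner_apply, dotProduct, ha, mul_comm]
  have h2 : |inner ℝ a (T a)| ≤ ‖a‖ * ‖T a‖ := abs_real_inner_le_norm a (T a)
  have h3 : ‖T a‖ ≤ ‖T‖ * ‖a‖ := T.le_opNorm a
  have h4 : ‖a‖ ^ 2 = ∑ i, v i ^ 2 := by
    rw [EuclideanSpace.norm_eq, Real.sq_sqrt (by positivity)]
    simp [ha, sq_abs]
  have h5 : (0:ℝ) ≤ ‖a‖ := norm_nonneg _
  have h6 : (0:ℝ) ≤ ‖T a‖ := norm_nonneg _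
  have : opNorm M = ‖T‖ := rfl
  rw [h1, this, ← h4]
  nlinarith [h2, h3, norm_nonneg T]

/-- If `x` is a centered sub-Gaussian random vector with parameter `σ`
and `E‖x‖² ≤ K₀`, then for any symmetric matrix `M` the centered quadratic form
`xᵀMx − E[xᵀMx]` has `L^p` norms growing linearly in `p` (hence is sub-exponential). -/
theorem quadratic_form_subexponential_of_subgaussian
    {Ω : Type*} [MeasurableSpace Ω] (μ : Measure Ω) [IsProbabilityMeasure μ]
    (n : ℕ) (x : Ω → Fin n → ℝ) (hmeas : Measurable x)
    (σ K₀ : ℝ) (hσ : 0 < σ)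
    (hcent : ∀ i, ∫ ω, x ω i ∂μ = 0)
    (hsg : ∀ u : Fin n → ℝ, (∑ i, u i ^ 2) = 1 → ∀ p : ℝ, 1 ≤ p →
      eLpNorm (fun ω => ∑ i, u i * x ω i) (ENNReal.ofReal p) μ ≤
        ENNReal.ofReal (σ * Real.sqrt p))
    (hK : ∫ ω, ∑ i, (x ω i) ^ 2 ∂μ ≤ K₀)
    (M : Matrix (Fin n) (Fin n) ℝ) (hM : M.IsSymm) :
    ∀ p : ℝ, 1 ≤ p →
      eLpNorm (fun ω => (x ω ⬝ᵥ M.mulVec (x ω)) -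
          ∫ ω', x ω' ⬝ᵥ M.mulVec (x ω') ∂μ) (ENNReal.ofReal p) μ ≤
        ENNReal.ofReal (4 * opNorm M * (n * 16 * (σ ^ 2 + K₀) + K₀) * p) := by
  classical
  set f : Ω → ℝ := fun ω => x ω ⬝ᵥ M.mulVec (x ω) with hfdef
  set g : Ω → ℝ := fun ω => ∑ i, x ω i ^ 2 with hgdef
  set C : ℝ := opNorm M with hCdef
  have hC : 0 ≤ C := norm_nonneg _
  -- coordinate measurability
  have hxm : ∀ i, Measurable fun ω => x ω i := fun i => (measurable_pi_apply i).comp hmeas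
  -- coordinate subgaussian bound
  have hxi : ∀ i, ∀ p : ℝ, 1 ≤ p →
      eLpNorm (fun ω => x ω i) (ENNReal.ofReal p) μ ≤ ENNReal.ofReal (σ * Real.sqrt p) := by
    intro i p hp
    have hu : (∑ j, (Pi.single i (1:ℝ) : Fin n → ℝ) j ^ 2) = 1 := by
      simp [Pi.single_apply]
    have h := hsg (Pi.single i (1:ℝ)) hu p hp
    have heq : (fun ω => ∑ j, (Pi.single i (1:ℝ) : Fin n → ℝ) j * x ω j) = fun ω => x ω i := by
      funext ω; simp [Pi.single_apply]
    rwa [heq] at h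
  -- each coordinate is in L²
  have hmem : ∀ i, MemLp (fun ω => x ω i) 2 μ := by
    intro i
    refine ⟨(hxm i).aestronglyMeasurable, ?_⟩
    have h := hxi i 2 (by norm_num)
    rw [show ENNReal.ofReal (2:ℝ) = (2 : ℝ≥0∞) by norm_num] at h
    exact lt_of_le_of_lt h ENNReal.ofReal_lt_top
  have hgm : Measurable g := by
    apply Finset.measurable_sum
    intro i _
    exact (hxm i).pow_const 2
  have hgint : Integrable g μ := by
    apply integrable_finset_sum
    intro i _
    exact (hmem i).integrable_sq
  have hgnonneg : (0:ℝ) ≤ ∫ ω, g ω ∂μ := integral_nonneg fun ω => by positivity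
  have hK0 : 0 ≤ K₀ := le_trans hgnonneg hK
  have hfm : Measurable f := by
    simp only [hfdef, dotProduct, Matrix.mulVec]
    apply Finset.measurable_sum
    intro i _
    exact (hxm i).mul (Finset.measurable_sum _ fun j _ => measurable_const.mul (hxm j))
  have hfabs : ∀ ω, |f ω| ≤ C * g ω := fun ω => abs_quad_le M (x ω)
  have hfint : Integrable f μ := by
    refine (hgint.const_mul C).mono' hfm.aestronglyMeasurable (ae_of_all _ fun ω => ?_)
    simpa [Real.norm_eq_abs] using hfabs ω
  have hc : |∫ ω, f ω ∂μ| ≤ C * K₀ := by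
    calc |∫ ω, f ω ∂μ| ≤ ∫ ω, |f ω| ∂μ := by
          simpa [Real.norm_eq_abs] using norm_integral_le_integral_norm (μ := μ) f
      _ ≤ ∫ ω, C * g ω ∂μ := integral_mono hfint.abs (hgint.const_mul C) hfabs
      _ = C * ∫ ω, g ω ∂μ := integral_const_mul C g
      _ ≤ C * K₀ := mul_le_mul_of_nonneg_left hK hC
  intro p hp
  have hp0 : (0:ℝ) < p := lt_of_lt_of_le one_pos hp
  set P : ℝ≥0∞ := ENNReal.ofReal p with hPdef
  have hP1 : 1 ≤ P := by
    rw [hPdef, ← ENNReal.ofReal_one]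
    exact ENNReal.ofReal_le_ofReal hp
  have hP0 : P ≠ 0 := by
    intro h; rw [h] at hP1; exact absurd hP1 (by simp)
  -- bound on each squared coordinate
  have hsq : ∀ i, eLpNorm (fun ω => x ω i ^ 2) P μ ≤ ENNReal.ofReal (σ ^ 2 * (2 * p)) := by
    intro i
    have heq : (fun ω => x ω i ^ 2) = fun ω => ‖x ω i‖ ^ (2:ℝ) := by
      funext ω
      rw [show (2:ℝ) = ((2:ℕ):ℝ) by norm_num, Real.rpow_natCast, Real.norm_eq_abs, sq_abs]
    rw [heq, eLpNorm_norm_rpow _ (by norm_num : (0:ℝ) < 2)]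
    have hP2 : P * ENNReal.ofReal 2 = ENNReal.ofReal (2 * p) := by
      rw [hPdef, ← ENNReal.ofReal_mul hp0.le, mul_comm]
    rw [hP2]
    have h := hxi i (2 * p) (by linarith)
    have h2 : eLpNorm (fun ω => x ω i) (ENNReal.ofReal (2 * p)) μ ^ (2:ℝ)
        ≤ ENNReal.ofReal (σ * Real.sqrt (2 * p)) ^ (2:ℝ) :=
      ENNReal.rpow_le_rpow h (by norm_num)
    have h3 : ENNReal.ofReal (σ * Real.sqrt (2 * p)) ^ (2:ℝ)
        = ENNReal.ofReal (σ ^ 2 * (2 * p)) := by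
      rw [ENNReal.ofReal_rpow_of_nonneg (by positivity) (by norm_num : (0:ℝ) ≤ 2)]
      congr 1
      rw [show ((σ * Real.sqrt (2 * p)) ^ (2:ℝ)) = (σ * Real.sqrt (2 * p)) ^ (2:ℕ) by
        rw [← Real.rpow_natCast]; norm_num]
      rw [mul_pow, Real.sq_sqrt (by linarith : (0:ℝ) ≤ 2 * p)]
    exact le_trans h2 (le_of_eq h3)
  have hgsum : g = ∑ i : Fin n, fun ω => x ω i ^ 2 := by
    funext ω; simp [hgdef]
  have hgbound : eLpNorm g P μ ≤ (n : ℝ≥0∞) * ENNReal.ofReal (σ ^ 2 * (2 * p)) := by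
    rw [hgsum]
    calc eLpNorm (∑ i : Fin n, fun ω => x ω i ^ 2) P μ
        ≤ ∑ i : Fin n, eLpNorm (fun ω => x ω i ^ 2) P μ :=
          eLpNorm_sum_le (fun i _ => ((hxm i).pow_const 2).aestronglyMeasurable) hP1
      _ ≤ ∑ _i : Fin n, ENNReal.ofReal (σ ^ 2 * (2 * p)) := Finset.sum_le_sum fun i _ => hsq i
      _ = (n : ℝ≥0∞) * ENNReal.ofReal (σ ^ 2 * (2 * p)) := by
          simp [Finset.sum_const, Finset.card_univ, nsmul_eq_mul]
  have hfbound : eLpNorm f P μ ≤ ENNReal.ofReal (C * (n * (σ ^ 2 * (2 * p)))) := by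
    calc eLpNorm f P μ ≤ eLpNorm (fun ω => C * g ω) P μ :=
          eLpNorm_mono_real fun ω => by simpa [Real.norm_eq_abs] using hfabs ω
      _ = (‖C‖₊ : ℝ≥0∞) * eLpNorm g P μ := eLpNorm_const_smul C g P μ
      _ ≤ (‖C‖₊ : ℝ≥0∞) * ((n : ℝ≥0∞) * ENNReal.ofReal (σ ^ 2 * (2 * p))) :=
          mul_le_mul_right hgbound _
      _ = ENNReal.ofReal (C * (n * (σ ^ 2 * (2 * p)))) := by
          rw [← ENNReal.ofReal_natCast n,
            ← ENNReal.ofReal_mul (by positivity : (0:ℝ) ≤ (n:ℝ)),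
            show ((‖C‖₊ : ℝ≥0∞)) = ENNReal.ofReal C by
              rw [← enorm_eq_nnnorm, ← ofReal_norm, Real.norm_eq_abs, abs_of_nonneg hC],
            ← ENNReal.ofReal_mul hC]
  have hμ0 : μ ≠ 0 := IsProbabilityMeasure.ne_zero μ
  have hconstbound : eLpNorm (fun _ : Ω => ∫ ω', f ω' ∂μ) P μ ≤ ENNReal.ofReal (C * K₀) := by
    rw [eLpNorm_const _ hP0 hμ0]
    simp only [measure_univ, ENNReal.one_rpow, mul_one]
    rw [← ofReal_norm, Real.norm_eq_abs]
    exact ENNReal.ofReal_le_ofReal hc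
  have htri : eLpNorm (fun ω => f ω - ∫ ω', f ω' ∂μ) P μ ≤
      eLpNorm f P μ + eLpNorm (fun _ : Ω => ∫ ω', f ω' ∂μ) P μ :=
    eLpNorm_sub_le hfm.aestronglyMeasurable aestronglyMeasurable_const hP1
  calc eLpNorm (fun ω => f ω - ∫ ω', f ω' ∂μ) P μ
      ≤ eLpNorm f P μ + eLpNorm (fun _ : Ω => ∫ ω', f ω' ∂μ) P μ := htri
    _ ≤ ENNReal.ofReal (C * (n * (σ ^ 2 * (2 * p)))) + ENNReal.ofReal (C * K₀) :=
        add_le_add hfbound hconstbound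
    _ = ENNReal.ofReal (C * (n * (σ ^ 2 * (2 * p))) + C * K₀) :=
        (ENNReal.ofReal_add (by positivity) (by positivity)).symm
    _ ≤ ENNReal.ofReal (4 * opNorm M * (n * 16 * (σ ^ 2 + K₀) + K₀) * p) := by
        apply ENNReal.ofReal_le_ofReal
        have hn : (0:ℝ) ≤ (n:ℝ) := Nat.cast_nonneg n
        have hσ2 : (0:ℝ) ≤ σ ^ 2 := sq_nonneg σ
        rw [← hCdef]
        nlinarith [mul_nonneg hC hK0, mul_nonneg (mul_nonneg hC hn) hσ2,
          mul_nonneg hC hK0, mul_nonneg (mul_nonneg hC hn) (mul_nonneg hσ2 hp0.le),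
          mul_nonneg (mul_nonneg hC hn) (mul_nonneg hK0 hp0.le),
          mul_nonneg (mul_nonneg hC hK0) hp0.le]
end

section
/- Let P_L be a positive semidefinite solution of the stochastic Lyapunov equation P_L = E[Q] + L^T E[R] L + E[(A−BL)^T P_L (A−BL)], and suppose the state process x_{t+1} = (A_{t+1}−B_{t+1}L)x_t (with i.i.d. parameters independent of x_0) is mean-square stable. Then the total expected cost satisfies C(L) := E[∑_{t=0}^∞ x_t^T(Q_{t+1} + L^T R_{t+1} L)x_t] = tr(P_L Σ₀), where Σ₀ = E[x_0 x_0^T]. -/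
open MeasureTheory Real Matrix ProbabilityTheory Filter

/-- The Frobenius norm of a real matrix. -/
noncomputable def frobNorm {m n : ℕ} (M : Matrix (Fin m) (Fin n) ℝ) : ℝ :=
  Real.sqrt (∑ i, ∑ j, (M i j) ^ 2)

/-- Matrices inherit the product measurable structure. -/
noncomputable instance matrixMeasurableSpace {a b : ℕ} :
    MeasurableSpace (Matrix (Fin a) (Fin b) ℝ) :=
  (inferInstance : MeasurableSpace (Fin a → Fin b → ℝ))

instance matrixBorelSpace {a b : ℕ} : BorelSpace (Matrix (Fin a) (Fin b) ℝ) :=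
  inferInstanceAs (BorelSpace (Fin a → Fin b → ℝ))

namespace CostAux


abbrev ThetaT (n m : ℕ) := Matrix (Fin n) (Fin n) ℝ × Matrix (Fin n) (Fin m) ℝ ×
  Matrix (Fin n) (Fin n) ℝ × Matrix (Fin m) (Fin m) ℝ

variable {n m : ℕ}

noncomputable def gm (L : Matrix (Fin m) (Fin n) ℝ) (p : ThetaT n m) :
    Matrix (Fin n) (Fin n) ℝ := p.1 - p.2.1 * L

noncomputable def Psi (L : Matrix (Fin m) (Fin n) ℝ) : ℕ → (ℕ → ThetaT n m) →
    Matrix (Fin n) (Fin n) ℝ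
  | 0, _ => 1
  | (t+1), h => gm L (h t) * Psi L t h

lemma measurable_entry {a b : ℕ} (i : Fin a) (j : Fin b) :
    Measurable (fun M : Matrix (Fin a) (Fin b) ℝ => M i j) :=
  (measurable_pi_apply j).comp (measurable_pi_apply i)

lemma measurable_of_entries {α : Type*} [MeasurableSpace α] {a b : ℕ}
    {f : α → Matrix (Fin a) (Fin b) ℝ} (h : ∀ i j, Measurable fun x => f x i j) :
    Measurable f :=
  measurable_pi_lambda _ fun i => measurable_pi_lambda _ fun j => h i j

lemma measurable_matMul {α : Type*} [MeasurableSpace α] {a b c : ℕ}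
    {f : α → Matrix (Fin a) (Fin b) ℝ} {g : α → Matrix (Fin b) (Fin c) ℝ}
    (hf : Measurable f) (hg : Measurable g) : Measurable (fun x => f x * g x) := by
  refine measurable_of_entries fun i j => ?_
  simp only [Matrix.mul_apply]
  exact Finset.measurable_sum _ fun k _ =>
    (((measurable_entry i k).comp hf).mul ((measurable_entry k j).comp hg))

lemma measurable_gm (L : Matrix (Fin m) (Fin n) ℝ) : Measurable (gm (n := n) L) := by
  refine measurable_of_entries fun i j => ?_
  have h1 : Measurable fun p : ThetaT n m => p.1 := measurable_fst
  have h2 : Measurable fun p : ThetaT n m => p.2.1 := measurable_fst.comp measurable_snd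
  have hmul : Measurable fun p : ThetaT n m => p.2.1 * L :=
    measurable_matMul h2 measurable_const
  exact ((measurable_entry i j).comp h1).sub ((measurable_entry i j).comp hmul)

lemma measurable_psi (L : Matrix (Fin m) (Fin n) ℝ) (t : ℕ) :
    Measurable (Psi (n := n) (m := m) L t) := by
  induction t with
  | zero => exact measurable_const
  | succ t ih =>
      exact measurable_matMul ((measurable_gm L).comp (measurable_pi_apply t)) ih

lemma psi_congr (L : Matrix (Fin m) (Fin n) ℝ) (t : ℕ) {h h' : ℕ → ThetaT n m}
    (he : ∀ s, s < t → h s = h' s) : Psi L t h = Psi L t h' := by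
  induction t with
  | zero => rfl
  | succ t ih =>
      simp only [Psi, he t (Nat.lt_succ_self t),
        ih (fun s hs => he s (hs.trans (Nat.lt_succ_self t)))]

lemma quad_expand {a : ℕ} (N : Matrix (Fin a) (Fin a) ℝ) (v : Fin a → ℝ) :
    v ⬝ᵥ N.mulVec v = ∑ i, ∑ j, (v i * v j) * N i j := by
  simp only [dotProduct, Matrix.mulVec, Finset.mul_sum]
  exact Finset.sum_congr rfl fun i _ => Finset.sum_congr rfl fun j _ => by
    ring

lemma entry_expand {a b : ℕ} (Φ : Matrix (Fin a) (Fin b) ℝ) (Z : Matrix (Fin a) (Fin a) ℝ)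
    (i j : Fin b) :
    (Φᵀ * Z * Φ) i j = ∑ k, ∑ l, (Φ k i * Φ l j) * Z k l := by
  simp only [Matrix.mul_apply, Matrix.transpose_apply, Finset.sum_mul]
  rw [Finset.sum_comm]
  exact Finset.sum_congr rfl fun k _ => Finset.sum_congr rfl fun l _ => by ring

lemma quadform_transform {a b : ℕ} (G : Matrix (Fin a) (Fin b) ℝ)
    (Z : Matrix (Fin a) (Fin a) ℝ) (v : Fin b → ℝ) :
    (G.mulVec v) ⬝ᵥ Z.mulVec (G.mulVec v) = v ⬝ᵥ (Gᵀ * Z * G).mulVec v := by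
  rw [← Matrix.mulVec_mulVec, ← Matrix.mulVec_mulVec, Matrix.dotProduct_mulVec (v := v),
    Matrix.vecMul_transpose]



lemma opNorm_nonneg {a b : ℕ} (M : Matrix (Fin a) (Fin b) ℝ) : 0 ≤ opNorm M :=
  norm_nonneg _

lemma abs_entry_le_opNorm {a b : ℕ} (M : Matrix (Fin a) (Fin b) ℝ) (i : Fin a) (j : Fin b) :
    |M i j| ≤ opNorm M := by
  classical
  set T := LinearMap.toContinuousLinearMap (Matrix.toEuclideanLin M) with hT
  have happ : T (EuclideanSpace.single j (1:ℝ)) =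
      (WithLp.equiv 2 (Fin a → ℝ)).symm (M.mulVec (Pi.single j 1)) :=
    rfl
  have hmv : M.mulVec (Pi.single j (1:ℝ)) = fun k => M k j := by
    funext k
    rw [Matrix.mulVec_single]
    simp
  have hbound : ‖T (EuclideanSpace.single j (1:ℝ))‖ ≤ ‖T‖ := by
    calc ‖T (EuclideanSpace.single j (1:ℝ))‖ ≤ ‖T‖ * ‖EuclideanSpace.single j (1:ℝ)‖ :=
          T.le_opNorm _
      _ = ‖T‖ := by rw [EuclideanSpace.norm_single]; simp
  have hcoord : |M i j| ≤ ‖T (EuclideanSpace.single j (1:ℝ))‖ := by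
    rw [happ, hmv]
    have : ‖(WithLp.equiv 2 (Fin a → ℝ)).symm (fun k => M k j)‖ =
        Real.sqrt (∑ k, ‖M k j‖ ^ 2) := by
      rw [EuclideanSpace.norm_eq]
      rfl
    rw [this]
    have h1 : |M i j| = Real.sqrt (‖M i j‖ ^ 2) := by
      rw [Real.sqrt_sq_eq_abs]; simp
    rw [h1]
    apply Real.sqrt_le_sqrt
    exact Finset.single_le_sum (f := fun k => ‖M k j‖ ^ 2) (fun k _ => by positivity)
      (Finset.mem_univ i)
  exact hcoord.trans hbound

lemma continuous_opNorm {a b : ℕ} :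
    Continuous fun M : Matrix (Fin a) (Fin b) ℝ => opNorm M := by
  have hlin : Continuous fun M : Matrix (Fin a) (Fin b) ℝ =>
      LinearMap.toContinuousLinearMap (Matrix.toEuclideanLin M) := by
    exact LinearMap.continuous_of_finiteDimensional
      ((LinearMap.toContinuousLinearMap :
          (EuclideanSpace ℝ (Fin b) →ₗ[ℝ] EuclideanSpace ℝ (Fin a)) ≃ₗ[ℝ] _).toLinearMap.comp
        (Matrix.toEuclideanLin :
          Matrix (Fin a) (Fin b) ℝ ≃ₗ[ℝ] _).toLinearMap)
  exact continuous_norm.comp hlin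

-- NEW MATERIAL BELOW

noncomputable def zW (L : Matrix (Fin m) (Fin n) ℝ) (p : ThetaT n m) :
    Matrix (Fin n) (Fin n) ℝ := p.2.2.1 + Lᵀ * p.2.2.2 * L

noncomputable def zG (L : Matrix (Fin m) (Fin n) ℝ) (P : Matrix (Fin n) (Fin n) ℝ)
    (p : ThetaT n m) : Matrix (Fin n) (Fin n) ℝ := (gm L p)ᵀ * P * gm L p

noncomputable def cL (L : Matrix (Fin m) (Fin n) ℝ) : ℝ := ∑ k, ∑ j, |L k j|

lemma cL_nonneg (L : Matrix (Fin m) (Fin n) ℝ) : 0 ≤ cL L :=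
  Finset.sum_nonneg fun _ _ => Finset.sum_nonneg fun _ _ => abs_nonneg _

lemma col_abs_le_cL (L : Matrix (Fin m) (Fin n) ℝ) (k : Fin n) : ∑ s, |L s k| ≤ cL L :=
  Finset.sum_le_sum fun s _ =>
    Finset.single_le_sum (f := fun j => |L s j|) (fun _ _ => abs_nonneg _) (Finset.mem_univ k)

noncomputable def bnd (p : ThetaT n m) : ℝ :=
  opNorm p.1 ^ 2 + opNorm p.2.1 ^ 2 + opNorm p.2.2.1 + opNorm p.2.2.2 + 1

lemma bnd_nonneg (p : ThetaT n m) : 0 ≤ bnd p := by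
  have h1 := opNorm_nonneg p.1
  have h2 := opNorm_nonneg p.2.1
  have h3 := opNorm_nonneg p.2.2.1
  have h4 := opNorm_nonneg p.2.2.2
  unfold bnd; positivity

lemma measurable_bnd : Measurable (bnd (n := n) (m := m)) := by
  have h1 : Measurable fun p : ThetaT n m => p.1 := measurable_fst
  have h2 : Measurable fun p : ThetaT n m => p.2.1 := measurable_fst.comp measurable_snd
  have h3 : Measurable fun p : ThetaT n m => p.2.2.1 :=
    measurable_fst.comp (measurable_snd.comp measurable_snd)
  have h4 : Measurable fun p : ThetaT n m => p.2.2.2 :=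
    measurable_snd.comp (measurable_snd.comp measurable_snd)
  exact (((((continuous_opNorm.measurable.comp h1).pow_const 2).add
    ((continuous_opNorm.measurable.comp h2).pow_const 2)).add
    (continuous_opNorm.measurable.comp h3)).add
    (continuous_opNorm.measurable.comp h4)).add measurable_const

lemma measurable_zW (L : Matrix (Fin m) (Fin n) ℝ) : Measurable (zW (n := n) L) := by
  have h3 : Measurable fun p : ThetaT n m => p.2.2.1 :=
    measurable_fst.comp (measurable_snd.comp measurable_snd)
  have h4 : Measurable fun p : ThetaT n m => p.2.2.2 :=
    measurable_snd.comp (measurable_snd.comp measurable_snd)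
  refine measurable_of_entries fun i j => ?_
  have hm : Measurable fun p : ThetaT n m => Lᵀ * p.2.2.2 * L :=
    measurable_matMul (measurable_matMul measurable_const h4) measurable_const
  exact ((measurable_entry i j).comp h3).add ((measurable_entry i j).comp hm)

lemma measurable_zG (L : Matrix (Fin m) (Fin n) ℝ) (P : Matrix (Fin n) (Fin n) ℝ) :
    Measurable (zG (n := n) L P) := by
  have hg := measurable_gm (n := n) L
  have hgt : Measurable fun p : ThetaT n m => (gm L p)ᵀ :=
    measurable_of_entries fun i j => (measurable_entry j i).comp hg
  exact measurable_matMul (measurable_matMul hgt measurable_const) hg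

lemma abs_gm_le (L : Matrix (Fin m) (Fin n) ℝ) (p : ThetaT n m) (i k : Fin n) :
    |gm L p i k| ≤ opNorm p.1 + opNorm p.2.1 * cL L := by
  have h1 : |p.1 i k - (p.2.1 * L) i k| ≤ |p.1 i k| + |(p.2.1 * L) i k| := abs_sub _ _
  have h2 : |(p.2.1 * L) i k| ≤ opNorm p.2.1 * cL L := by
    rw [Matrix.mul_apply]
    calc |∑ s, p.2.1 i s * L s k| ≤ ∑ s, |p.2.1 i s * L s k| :=
          Finset.abs_sum_le_sum_abs _ _
      _ ≤ ∑ s, opNorm p.2.1 * |L s k| := Finset.sum_le_sum fun s _ => by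
          rw [abs_mul]
          exact mul_le_mul_of_nonneg_right (abs_entry_le_opNorm _ i s) (abs_nonneg _)
      _ = opNorm p.2.1 * ∑ s, |L s k| := by rw [Finset.mul_sum]
      _ ≤ opNorm p.2.1 * cL L :=
          mul_le_mul_of_nonneg_left (col_abs_le_cL L k) (opNorm_nonneg _)
  calc |gm L p i k| = |p.1 i k - (p.2.1 * L) i k| := rfl
    _ ≤ |p.1 i k| + |(p.2.1 * L) i k| := h1
    _ ≤ opNorm p.1 + opNorm p.2.1 * cL L :=
        add_le_add (abs_entry_le_opNorm _ i k) h2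

lemma sq_gm_le (L : Matrix (Fin m) (Fin n) ℝ) (p : ThetaT n m) (i k : Fin n) :
    (gm L p i k) ^ 2 ≤ (2 + 2 * cL L ^ 2) * bnd p := by
  have h := abs_gm_le L p i k
  have hA := opNorm_nonneg p.1
  have hB := opNorm_nonneg p.2.1
  have hQ := opNorm_nonneg p.2.2.1
  have hR := opNorm_nonneg p.2.2.2
  have hcl := cL_nonneg L
  have habs : 0 ≤ |gm L p i k| := abs_nonneg _
  have hsq : (gm L p i k)^2 ≤ (opNorm p.1 + opNorm p.2.1 * cL L)^2 := by
    rw [← sq_abs]; exact pow_le_pow_left₀ habs h 2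
  unfold bnd
  nlinarith [sq_nonneg (opNorm p.1 - opNorm p.2.1 * cL L), sq_nonneg (opNorm p.2.1),
    sq_nonneg (cL L), mul_nonneg hB hcl, sq_nonneg (opNorm p.2.1 * cL L)]

lemma abs_zW_le (L : Matrix (Fin m) (Fin n) ℝ) (p : ThetaT n m) (k l : Fin n) :
    |zW L p k l| ≤ (1 + cL L ^ 2) * bnd p := by
  have hQ := opNorm_nonneg p.2.2.1
  have hR := opNorm_nonneg p.2.2.2
  have hA := opNorm_nonneg p.1
  have hB := opNorm_nonneg p.2.1
  have hcl := cL_nonneg L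
  have h2 : |(Lᵀ * p.2.2.2 * L) k l| ≤ cL L ^ 2 * opNorm p.2.2.2 := by
    rw [entry_expand]
    calc |∑ a, ∑ b, (L a k * L b l) * p.2.2.2 a b|
        ≤ ∑ a, ∑ b, |(L a k * L b l) * p.2.2.2 a b| := by
          refine (Finset.abs_sum_le_sum_abs _ _).trans (Finset.sum_le_sum fun a _ => ?_)
          exact Finset.abs_sum_le_sum_abs _ _
      _ ≤ ∑ a, ∑ b, (|L a k| * |L b l|) * opNorm p.2.2.2 := by
          refine Finset.sum_le_sum fun a _ => Finset.sum_le_sum fun b _ => ?_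
          rw [abs_mul, abs_mul]
          exact mul_le_mul_of_nonneg_left (abs_entry_le_opNorm _ a b)
            (mul_nonneg (abs_nonneg _) (abs_nonneg _))
      _ = ((∑ a, |L a k|) * (∑ b, |L b l|)) * opNorm p.2.2.2 := by
          rw [Finset.sum_mul_sum, Finset.sum_mul]
          exact Finset.sum_congr rfl fun a _ => by rw [Finset.sum_mul]
      _ ≤ (cL L * cL L) * opNorm p.2.2.2 := by
          refine mul_le_mul_of_nonneg_right ?_ hR
          exact mul_le_mul (col_abs_le_cL L k) (col_abs_le_cL L l)
            (Finset.sum_nonneg fun _ _ => abs_nonneg _) hcl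
      _ = cL L ^ 2 * opNorm p.2.2.2 := by ring
  have h1 : |zW L p k l| ≤ |p.2.2.1 k l| + |(Lᵀ * p.2.2.2 * L) k l| := by
    calc |zW L p k l| = |p.2.2.1 k l + (Lᵀ * p.2.2.2 * L) k l| := rfl
      _ ≤ _ := abs_add_le _ _
  have h0 : |p.2.2.1 k l| ≤ opNorm p.2.2.1 := abs_entry_le_opNorm _ k l
  unfold bnd
  nlinarith [sq_nonneg (opNorm p.1), sq_nonneg (opNorm p.2.1), sq_nonneg (cL L)]

lemma abs_zG_le (L : Matrix (Fin m) (Fin n) ℝ) (P : Matrix (Fin n) (Fin n) ℝ)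
    (p : ThetaT n m) (k l : Fin n) :
    |zG L P p k l| ≤ ((∑ a, ∑ b, |P a b|) * (2 + 2 * cL L ^ 2)) * bnd p := by
  have hmg : ∀ i j : Fin n, |gm L p i j| ≤ opNorm p.1 + opNorm p.2.1 * cL L :=
    abs_gm_le L p
  set g := opNorm p.1 + opNorm p.2.1 * cL L with hg
  have hg0 : 0 ≤ g := le_trans (abs_nonneg _) (hmg k k)
  have hstep : |zG L P p k l| ≤ ∑ a, ∑ b, (g * g) * |P a b| := by
    unfold zG
    rw [entry_expand]
    calc |∑ a, ∑ b, (gm L p a k * gm L p b l) * P a b|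
        ≤ ∑ a, ∑ b, |(gm L p a k * gm L p b l) * P a b| := by
          refine (Finset.abs_sum_le_sum_abs _ _).trans (Finset.sum_le_sum fun a _ => ?_)
          exact Finset.abs_sum_le_sum_abs _ _
      _ ≤ ∑ a, ∑ b, (g * g) * |P a b| := by
          refine Finset.sum_le_sum fun a _ => Finset.sum_le_sum fun b _ => ?_
          rw [abs_mul, abs_mul]
          exact mul_le_mul_of_nonneg_right
            (mul_le_mul (hmg a k) (hmg b l) (abs_nonneg _) hg0) (abs_nonneg _)
  have hsum : ∑ a, ∑ b, (g * g) * |P a b| = (g * g) * ∑ a, ∑ b, |P a b| := by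
    rw [Finset.mul_sum]
    exact Finset.sum_congr rfl fun a _ => by rw [Finset.mul_sum]
  have hgg : g * g ≤ (2 + 2 * cL L ^ 2) * bnd p := by
    have hA := opNorm_nonneg p.1
    have hB := opNorm_nonneg p.2.1
    have hQ := opNorm_nonneg p.2.2.1
    have hR := opNorm_nonneg p.2.2.2
    have hcl := cL_nonneg L
    unfold bnd
    rw [hg]
    nlinarith [sq_nonneg (opNorm p.1 - opNorm p.2.1 * cL L), sq_nonneg (opNorm p.2.1 * cL L),
      mul_nonneg hB hcl]
  have hPs : 0 ≤ ∑ a, ∑ b, |P a b| :=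
    Finset.sum_nonneg fun _ _ => Finset.sum_nonneg fun _ _ => abs_nonneg _
  calc |zG L P p k l| ≤ (g * g) * ∑ a, ∑ b, |P a b| := by rw [← hsum]; exact hstep
    _ ≤ ((2 + 2 * cL L ^ 2) * bnd p) * ∑ a, ∑ b, |P a b| :=
        mul_le_mul_of_nonneg_right hgg hPs
    _ = ((∑ a, ∑ b, |P a b|) * (2 + 2 * cL L ^ 2)) * bnd p := by ring

lemma quad_le_sum_sq {a : ℕ} (P : Matrix (Fin a) (Fin a) ℝ) (v : Fin a → ℝ) :
    v ⬝ᵥ P.mulVec v ≤ (∑ k, ∑ l, |P k l|) * ∑ i, v i ^ 2 := by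
  rw [quad_expand]
  have hs : ∀ k : Fin a, v k ^ 2 ≤ ∑ i, v i ^ 2 := fun k =>
    Finset.single_le_sum (f := fun i => v i ^ 2) (fun _ _ => sq_nonneg _) (Finset.mem_univ k)
  have key : ∀ k l : Fin a, (v k * v l) * P k l ≤ |P k l| * ∑ i, v i ^ 2 := by
    intro k l
    have h1 := hs k
    have h2 := hs l
    have h3 : (v k * v l) * P k l ≤ |v k| * |v l| * |P k l| := by
      calc (v k * v l) * P k l ≤ |(v k * v l) * P k l| := le_abs_self _
        _ = |v k| * |v l| * |P k l| := by rw [abs_mul, abs_mul]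
    have h4 : |v k| * |v l| ≤ ∑ i, v i ^ 2 := by
      nlinarith [sq_nonneg (|v k| - |v l|), sq_abs (v k), sq_abs (v l),
        abs_nonneg (v k), abs_nonneg (v l)]
    calc (v k * v l) * P k l ≤ |v k| * |v l| * |P k l| := h3
      _ ≤ (∑ i, v i ^ 2) * |P k l| := mul_le_mul_of_nonneg_right h4 (abs_nonneg _)
      _ = |P k l| * ∑ i, v i ^ 2 := mul_comm _ _
  calc ∑ k, ∑ l, (v k * v l) * P k l ≤ ∑ k, ∑ l, |P k l| * ∑ i, v i ^ 2 :=
        Finset.sum_le_sum fun k _ => Finset.sum_le_sum fun l _ => key k l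
    _ = (∑ k, ∑ l, |P k l|) * ∑ i, v i ^ 2 := by
        rw [Finset.sum_mul]
        exact Finset.sum_congr rfl fun k _ => by rw [Finset.sum_mul]

lemma measurable_mulVec {α : Type*} [MeasurableSpace α] {a b : ℕ}
    {f : α → Matrix (Fin a) (Fin b) ℝ} {g : α → Fin b → ℝ}
    (hf : Measurable f) (hg : Measurable g) : Measurable fun x => (f x).mulVec (g x) := by
  refine measurable_pi_lambda _ fun i => ?_
  simp only [Matrix.mulVec, dotProduct]
  exact Finset.measurable_sum _ fun k _ =>
    ((measurable_entry i k).comp hf).mul ((measurable_pi_apply k).comp hg)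

lemma integrable_mul_of_sq {Ω : Type*} [MeasurableSpace Ω] {μ : Measure Ω} {f g : Ω → ℝ}
    (hf : Measurable f) (hg : Measurable g)
    (hf2 : Integrable (fun ω => f ω ^ 2) μ) (hg2 : Integrable (fun ω => g ω ^ 2) μ) :
    Integrable (fun ω => f ω * g ω) μ := by
  refine (hf2.add hg2).mono ((hf.mul hg).aestronglyMeasurable) (ae_of_all _ fun ω => ?_)
  rw [Real.norm_eq_abs, Real.norm_eq_abs, abs_mul]
  have h1 : |f ω| * |g ω| ≤ f ω ^ 2 + g ω ^ 2 := by
    nlinarith [sq_nonneg (|f ω| - |g ω|), sq_abs (f ω), sq_abs (g ω),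
      abs_nonneg (f ω), abs_nonneg (g ω)]
  exact h1.trans (le_abs_self _)


end CostAux
namespace CostAux

open Finset in
theorem main {Ω : Type*} [MeasurableSpace Ω] (μ : Measure Ω) [IsProbabilityMeasure μ]
    {n m : ℕ} (L : Matrix (Fin m) (Fin n) ℝ) (P : Matrix (Fin n) (Fin n) ℝ)
    (Θ : ℕ → Ω → ThetaT n m) (x0 : Ω → Fin n → ℝ) (x : ℕ → Ω → Fin n → ℝ)
    (hΘmeas : ∀ t, Measurable (Θ t))
    (hmap : ∀ s t : ℕ, μ.map (Θ s) = μ.map (Θ t))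
    (hindep : iIndepFun Θ μ)
    (hx0meas : Measurable x0)
    (hindep0 : IndepFun x0 (fun ω => fun t : ℕ => Θ t ω) μ)
    (hpsd : ∀ t, ∀ᵐ ω ∂μ, ((Θ t ω).2.2.1).PosSemidef ∧ ((Θ t ω).2.2.2).PosSemidef)
    (hA2 : Integrable (fun ω => opNorm (Θ 0 ω).1 ^ 2) μ)
    (hB2 : Integrable (fun ω => opNorm (Θ 0 ω).2.1 ^ 2) μ)
    (hQ1 : Integrable (fun ω => opNorm (Θ 0 ω).2.2.1) μ)
    (hR1 : Integrable (fun ω => opNorm (Θ 0 ω).2.2.2) μ)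
    (hx0L2 : Integrable (fun ω => ∑ i, (x0 ω i) ^ 2) μ)
    (hX0 : ∀ ω, x 0 ω = x0 ω)
    (hXrec : ∀ t ω, x (t + 1) ω = (gm L (Θ t ω)).mulVec (x t ω))
    (hP : P.PosSemidef)
    (hLyap : P = Emat μ (fun ω => (Θ 0 ω).2.2.1) + Lᵀ * Emat μ (fun ω => (Θ 0 ω).2.2.2) * L +
      Emat μ (fun ω => (gm L (Θ 0 ω))ᵀ * P * gm L (Θ 0 ω)))
    (hstab : Tendsto (fun t => ∫⁻ ω, ENNReal.ofReal (∑ i, (x t ω i) ^ 2) ∂μ) atTop (nhds 0)) :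
    (∑' t : ℕ, ∫ ω, (x t ω) ⬝ᵥ ((zW L (Θ t ω)).mulVec (x t ω)) ∂μ)
      = (P * Emat μ (fun ω => Matrix.vecMulVec (x0 ω) (x0 ω))).trace := by
  classical
  have hseq : Measurable (fun ω => (fun s => Θ s ω)) := measurable_pi_lambda _ hΘmeas
  have hΦmeas : ∀ t, Measurable (fun ω => Psi L t (fun s => Θ s ω)) :=
    fun t => (measurable_psi L t).comp hseq
  have hΦe : ∀ t (k i : Fin n), Measurable (fun ω => Psi L t (fun s => Θ s ω) k i) :=
    fun t k i => (measurable_entry k i).comp (hΦmeas t)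
  have hxPhi : ∀ t ω, x t ω = (Psi L t (fun s => Θ s ω)).mulVec (x0 ω) := by
    intro t
    induction t with
    | zero => intro ω; rw [hX0 ω]; simp [Psi, Matrix.one_mulVec]
    | succ t ih =>
        intro ω
        rw [hXrec t ω, ih ω, Matrix.mulVec_mulVec]
        simp [Psi]
  have hxmeas : ∀ t, Measurable (x t) := by
    intro t
    have h : x t = fun ω => (Psi L t (fun s => Θ s ω)).mulVec (x0 ω) := funext (hxPhi t)
    rw [h]; exact measurable_mulVec (hΦmeas t) hx0meas
  -- transfer along identical distribution
  have transferInt : ∀ (t : ℕ) (F : ThetaT n m → ℝ), Measurable F →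
      Integrable (fun ω => F (Θ 0 ω)) μ → Integrable (fun ω => F (Θ t ω)) μ := by
    intro t F hF h0
    have h1 : Integrable F (μ.map (Θ 0)) :=
      (integrable_map_measure hF.aestronglyMeasurable (hΘmeas 0).aemeasurable).2 h0
    rw [← hmap t 0] at h1
    exact (integrable_map_measure hF.aestronglyMeasurable (hΘmeas t).aemeasurable).1 h1
  have transferEq : ∀ (t : ℕ) (F : ThetaT n m → ℝ), Measurable F →
      ∫ ω, F (Θ t ω) ∂μ = ∫ ω, F (Θ 0 ω) ∂μ := by
    intro t F hF
    rw [← integral_map (hΘmeas t).aemeasurable hF.aestronglyMeasurable, hmap t 0,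
      integral_map (hΘmeas 0).aemeasurable hF.aestronglyMeasurable]
  have hbnd0 : Integrable (fun ω => bnd (Θ 0 ω)) μ :=
    ((((hA2.add hB2).add hQ1).add hR1).add (integrable_const 1))
  have intOfBound : ∀ (t : ℕ) (F : ThetaT n m → ℝ) (c : ℝ), Measurable F →
      (∀ p, |F p| ≤ c * bnd p) → Integrable (fun ω => F (Θ t ω)) μ := by
    intro t F c hF hb
    refine transferInt t F hF ?_
    refine (hbnd0.const_mul c).mono (hF.comp (hΘmeas 0)).aestronglyMeasurable
      (ae_of_all _ fun ω => ?_)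
    rw [Real.norm_eq_abs, Real.norm_eq_abs]
    exact (hb (Θ 0 ω)).trans (le_abs_self _)
  have hzWint : ∀ (t : ℕ) (k l : Fin n), Integrable (fun ω => zW L (Θ t ω) k l) μ :=
    fun t k l => intOfBound t (fun p => zW L p k l) (1 + cL L ^ 2)
      ((measurable_entry k l).comp (measurable_zW L)) (fun p => abs_zW_le L p k l)
  have hzGint : ∀ (t : ℕ) (k l : Fin n), Integrable (fun ω => zG L P (Θ t ω) k l) μ :=
    fun t k l => intOfBound t (fun p => zG L P p k l) _
      ((measurable_entry k l).comp (measurable_zG L P)) (fun p => abs_zG_le L P p k l)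
  have hgm2int : ∀ (t : ℕ) (i k : Fin n), Integrable (fun ω => (gm L (Θ t ω) i k) ^ 2) μ :=
    fun t i k => intOfBound t (fun p => (gm L p i k) ^ 2) (2 + 2 * cL L ^ 2)
      (((measurable_entry i k).comp (measurable_gm L)).pow_const 2)
      (fun p => by rw [abs_of_nonneg (sq_nonneg _)]; exact sq_gm_le L p i k)
  -- independence of Ψ_t and Θ_t
  have hPhiTheta : ∀ t, IndepFun (fun ω => Psi L t (fun s => Θ s ω)) (Θ t) μ := by
    intro t
    have hdisj : Disjoint (Finset.range t) ({t} : Finset ℕ) := by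
      simp [Finset.disjoint_singleton_right]
    have hbase := hindep.indepFun_finset (Finset.range t) {t} hdisj hΘmeas
    set ext : ((i : (Finset.range t : Finset ℕ)) → ThetaT n m) → (ℕ → ThetaT n m) :=
      fun v s => if h : s ∈ Finset.range t then v ⟨s, h⟩ else 0 with hext
    have hextmeas : Measurable ext := by
      refine measurable_pi_lambda _ fun s => ?_
      by_cases h : s ∈ Finset.range t
      · simp only [hext, dif_pos h]; exact measurable_pi_apply _
      · simp only [hext, dif_neg h]; exact measurable_const
    have hcomp := hbase.comp (_mγ' := inferInstance) (φ := fun v => Psi L t (ext v))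
      (ψ := fun v : ((i : ({t} : Finset ℕ)) → ThetaT n m) => v ⟨t, Finset.mem_singleton_self t⟩)
      ((measurable_psi L t).comp hextmeas) (measurable_pi_apply _)
    refine hcomp.congr (ae_of_all _ fun ω => ?_) (ae_of_all _ fun ω => rfl)
    show Psi L t (ext (fun i : (Finset.range t : Finset ℕ) => Θ i ω)) = _
    refine psi_congr L t fun s hs => ?_
    simp only [hext]
    rw [dif_pos (Finset.mem_range.2 hs)]
  -- x0 second moments
  have hx0sq : ∀ i, Integrable (fun ω => (x0 ω i) ^ 2) μ := by
    intro i
    refine hx0L2.mono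
      (((measurable_pi_apply i).comp hx0meas).pow_const 2).aestronglyMeasurable
      (ae_of_all _ fun ω => ?_)
    rw [Real.norm_eq_abs, Real.norm_eq_abs, abs_of_nonneg (sq_nonneg _)]
    exact le_trans (Finset.single_le_sum (f := fun k => (x0 ω k) ^ 2)
      (fun _ _ => sq_nonneg _) (Finset.mem_univ i)) (le_abs_self _)
  have hx0prod : ∀ i j, Integrable (fun ω => x0 ω i * x0 ω j) μ :=
    fun i j => integrable_mul_of_sq ((measurable_pi_apply i).comp hx0meas)
      ((measurable_pi_apply j).comp hx0meas) (hx0sq i) (hx0sq j)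
  -- Ψ entries are square integrable
  have hPhiSq : ∀ (t : ℕ) (k i : Fin n),
      Integrable (fun ω => (Psi L t (fun s => Θ s ω) k i) ^ 2) μ := by
    intro t
    induction t with
    | zero =>
        intro k i
        exact integrable_const (((1 : Matrix (Fin n) (Fin n) ℝ) k i) ^ 2)
    | succ t ih =>
        intro k i
        have hrw : (fun ω => (Psi L (t + 1) (fun s => Θ s ω) k i) ^ 2) =
            fun ω => (∑ r, gm L (Θ t ω) k r * Psi L t (fun s => Θ s ω) r i) ^ 2 := by
          funext ω
          simp [Psi, Matrix.mul_apply]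
        rw [hrw]
        have hint : Integrable (fun ω => (n : ℝ) *
            ∑ r, (gm L (Θ t ω) k r * Psi L t (fun s => Θ s ω) r i) ^ 2) μ := by
          refine (integrable_finset_sum _ fun r _ => ?_).const_mul _
          have hind : IndepFun (fun ω => (Psi L t (fun s => Θ s ω) r i) ^ 2)
              (fun ω => (gm L (Θ t ω) k r) ^ 2) μ :=
            (hPhiTheta t).comp ((measurable_entry r i).pow_const 2)
              (((measurable_entry k r).comp (measurable_gm L)).pow_const 2)
          have h2 := hind.integrable_mul (ih r i) (hgm2int t k r)
          refine h2.congr (ae_of_all _ fun ω => ?_)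
          show (Psi L t (fun s => Θ s ω) r i) ^ 2 * (gm L (Θ t ω) k r) ^ 2 = _
          rw [← mul_pow, mul_comm]
        refine hint.mono ((Finset.measurable_sum _ fun r _ =>
          (((measurable_entry k r).comp ((measurable_gm L).comp (hΘmeas t))).mul
            (hΦe t r i))).pow_const 2).aestronglyMeasurable (ae_of_all _ fun ω => ?_)
        rw [Real.norm_eq_abs, Real.norm_eq_abs, abs_of_nonneg (sq_nonneg _)]
        refine le_trans ?_ (le_abs_self _)
        have := sq_sum_le_card_mul_sum_sq (s := (Finset.univ : Finset (Fin n)))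
          (f := fun r => gm L (Θ t ω) k r * Psi L t (fun s => Θ s ω) r i)
        simpa using this
  have hPhiProd : ∀ (t : ℕ) (k i l j : Fin n),
      Integrable (fun ω => Psi L t (fun s => Θ s ω) k i * Psi L t (fun s => Θ s ω) l j) μ :=
    fun t k i l j => integrable_mul_of_sq (hΦe t k i) (hΦe t l j) (hPhiSq t k i) (hPhiSq t l j)
  -- the master computation
  have masterCore : ∀ (t : ℕ) (ζ : ThetaT n m → Matrix (Fin n) (Fin n) ℝ), Measurable ζ →
      (∀ k l, Integrable (fun ω => ζ (Θ t ω) k l) μ) →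
      Integrable (fun ω => (x t ω) ⬝ᵥ ((ζ (Θ t ω)).mulVec (x t ω))) μ ∧
      ∫ ω, (x t ω) ⬝ᵥ ((ζ (Θ t ω)).mulVec (x t ω)) ∂μ =
        ∑ i, ∑ j, (∫ ω, x0 ω i * x0 ω j ∂μ) *
          (∑ k, ∑ l, (∫ ω, Psi L t (fun s => Θ s ω) k i * Psi L t (fun s => Θ s ω) l j ∂μ) *
            (∫ ω, ζ (Θ t ω) k l ∂μ)) := by
    intro t ζ hζm hζi
    have hpt : (fun ω => (x t ω) ⬝ᵥ ((ζ (Θ t ω)).mulVec (x t ω))) =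
        fun ω => ∑ i, ∑ j, (x0 ω i * x0 ω j) *
          (((Psi L t (fun s => Θ s ω))ᵀ * ζ (Θ t ω) * Psi L t (fun s => Θ s ω)) i j) := by
      funext ω
      rw [hxPhi t ω, quadform_transform, quad_expand]
    have hNrw : ∀ i j : Fin n, (fun ω =>
        ((Psi L t (fun s => Θ s ω))ᵀ * ζ (Θ t ω) * Psi L t (fun s => Θ s ω)) i j) =
        fun ω => ∑ k, ∑ l, (Psi L t (fun s => Θ s ω) k i * Psi L t (fun s => Θ s ω) l j) *
          ζ (Θ t ω) k l :=
      fun i j => funext fun ω => entry_expand _ _ i j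
    have hPhiZind : ∀ (k i l j : Fin n), IndepFun
        (fun ω => Psi L t (fun s => Θ s ω) k i * Psi L t (fun s => Θ s ω) l j)
        (fun ω => ζ (Θ t ω) k l) μ :=
      fun k i l j => (hPhiTheta t).comp
        ((measurable_entry k i).mul (measurable_entry l j))
        ((measurable_entry k l).comp hζm)
    have hprodkl : ∀ (i j k l : Fin n), Integrable (fun ω =>
        (Psi L t (fun s => Θ s ω) k i * Psi L t (fun s => Θ s ω) l j) * ζ (Θ t ω) k l) μ :=
      fun i j k l => (hPhiZind k i l j).integrable_mul (hPhiProd t k i l j) (hζi k l)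
    have hNint : ∀ i j : Fin n, Integrable (fun ω =>
        ((Psi L t (fun s => Θ s ω))ᵀ * ζ (Θ t ω) * Psi L t (fun s => Θ s ω)) i j) μ := by
      intro i j
      rw [hNrw i j]
      exact integrable_finset_sum _ fun k _ => integrable_finset_sum _ fun l _ =>
        hprodkl i j k l
    have hx0Nind : ∀ i j : Fin n, IndepFun (fun ω => x0 ω i * x0 ω j)
        (fun ω => ((Psi L t (fun s => Θ s ω))ᵀ * ζ (Θ t ω) * Psi L t (fun s => Θ s ω)) i j)
        μ := by
      intro i j
      have hm2 : Measurable (fun h : ℕ → ThetaT n m =>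
          ((Psi L t h)ᵀ * ζ (h t) * Psi L t h) i j) := by
        refine (measurable_entry i j).comp
          (measurable_matMul (measurable_matMul ?_ (hζm.comp (measurable_pi_apply t)))
            (measurable_psi L t))
        exact measurable_of_entries fun a b => (measurable_entry b a).comp (measurable_psi L t)
      exact hindep0.comp ((measurable_pi_apply i).mul (measurable_pi_apply j)) hm2
    have hterm : ∀ i j : Fin n, Integrable (fun ω => (x0 ω i * x0 ω j) *
        ((Psi L t (fun s => Θ s ω))ᵀ * ζ (Θ t ω) * Psi L t (fun s => Θ s ω)) i j) μ :=
      fun i j => (hx0Nind i j).integrable_mul (hx0prod i j) (hNint i j)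
    constructor
    · rw [hpt]
      exact integrable_finset_sum _ fun i _ => integrable_finset_sum _ fun j _ => hterm i j
    · rw [hpt]
      rw [integral_finset_sum _ fun i _ => integrable_finset_sum _ fun j _ => hterm i j]
      refine Finset.sum_congr rfl fun i _ => ?_
      rw [integral_finset_sum _ fun j _ => hterm i j]
      refine Finset.sum_congr rfl fun j _ => ?_
      have hsplit : ∫ ω, (x0 ω i * x0 ω j) *
          ((Psi L t (fun s => Θ s ω))ᵀ * ζ (Θ t ω) * Psi L t (fun s => Θ s ω)) i j ∂μ =
          (∫ ω, x0 ω i * x0 ω j ∂μ) * ∫ ω,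
            ((Psi L t (fun s => Θ s ω))ᵀ * ζ (Θ t ω) * Psi L t (fun s => Θ s ω)) i j ∂μ :=
        (hx0Nind i j).integral_fun_mul_eq_mul_integral (hx0prod i j).aestronglyMeasurable
          (hNint i j).aestronglyMeasurable
      rw [hsplit]
      congr 1
      rw [hNrw i j]
      rw [integral_finset_sum _ fun k _ => integrable_finset_sum _ fun l _ => hprodkl i j k l]
      refine Finset.sum_congr rfl fun k _ => ?_
      rw [integral_finset_sum _ fun l _ => hprodkl i j k l]
      exact Finset.sum_congr rfl fun l _ =>
        (hPhiZind k i l j).integral_fun_mul_eq_mul_integral (hPhiProd t k i l j).aestronglyMeasurable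
          (hζi k l).aestronglyMeasurable
  -- integrability of the quadratic forms
  have hPint : ∀ t, Integrable (fun ω => (x t ω) ⬝ᵥ (P.mulVec (x t ω))) μ :=
    fun t => (masterCore t (fun _ => P) measurable_const (fun k l => integrable_const _)).1
  have hxsqInt : ∀ t, Integrable (fun ω => ∑ i, (x t ω i) ^ 2) μ := by
    intro t
    have h := (masterCore t (fun _ => (1 : Matrix (Fin n) (Fin n) ℝ)) measurable_const
      (fun k l => integrable_const _)).1
    refine h.congr (ae_of_all _ fun ω => ?_)
    show (x t ω) ⬝ᵥ ((1 : Matrix (Fin n) (Fin n) ℝ).mulVec (x t ω)) = ∑ i, (x t ω i) ^ 2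
    rw [Matrix.one_mulVec]
    simp [dotProduct, sq]
  have hVnonneg : ∀ t, 0 ≤ ∫ ω, (x t ω) ⬝ᵥ (P.mulVec (x t ω)) ∂μ := by
    intro t
    refine integral_nonneg fun ω => ?_
    have h := hP.dotProduct_mulVec_nonneg (x t ω)
    simpa using h
  -- the Lyapunov identity, entrywise, at every time
  have hQ0int : ∀ k l : Fin n, Integrable (fun ω => (Θ 0 ω).2.2.1 k l) μ := by
    intro k l
    refine intOfBound 0 (fun p => p.2.2.1 k l) 1 ((measurable_entry k l).comp
      (measurable_fst.comp (measurable_snd.comp measurable_snd))) fun p => ?_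
    have h1 := abs_entry_le_opNorm p.2.2.1 k l
    have h2 := opNorm_nonneg p.1
    have h3 := opNorm_nonneg p.2.1
    have h4 := opNorm_nonneg p.2.2.2
    unfold bnd
    nlinarith [sq_nonneg (opNorm p.1), sq_nonneg (opNorm p.2.1)]
  have hR0int : ∀ a b : Fin m, Integrable (fun ω => (Θ 0 ω).2.2.2 a b) μ := by
    intro a b
    refine intOfBound 0 (fun p => p.2.2.2 a b) 1 ((measurable_entry a b).comp
      (measurable_snd.comp (measurable_snd.comp measurable_snd))) fun p => ?_
    have h1 := abs_entry_le_opNorm p.2.2.2 a b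
    have h2 := opNorm_nonneg p.1
    have h3 := opNorm_nonneg p.2.1
    have h4 := opNorm_nonneg p.2.2.1
    unfold bnd
    nlinarith [sq_nonneg (opNorm p.1), sq_nonneg (opNorm p.2.1)]
  have hLyapkl : ∀ (t : ℕ) (k l : Fin n),
      (∫ ω, zW L (Θ t ω) k l ∂μ) + (∫ ω, zG L P (Θ t ω) k l ∂μ) = P k l := by
    intro t k l
    rw [transferEq t (fun p => zW L p k l) ((measurable_entry k l).comp (measurable_zW L)),
      transferEq t (fun p => zG L P p k l) ((measurable_entry k l).comp (measurable_zG L P))]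
    have hLRLint : Integrable (fun ω => (Lᵀ * (Θ 0 ω).2.2.2 * L) k l) μ := by
      have hrw : (fun ω => (Lᵀ * (Θ 0 ω).2.2.2 * L) k l) =
          fun ω => ∑ a, ∑ b, (L a k * L b l) * (Θ 0 ω).2.2.2 a b :=
        funext fun ω => entry_expand L ((Θ 0 ω).2.2.2) k l
      rw [hrw]
      exact integrable_finset_sum _ fun a _ => integrable_finset_sum _ fun b _ =>
        (hR0int a b).const_mul _
    have h1 : ∫ ω, zW L (Θ 0 ω) k l ∂μ =
        Emat μ (fun ω => (Θ 0 ω).2.2.1) k l +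
          (Lᵀ * Emat μ (fun ω => (Θ 0 ω).2.2.2) * L) k l := by
      have hsplit : (fun ω => zW L (Θ 0 ω) k l) =
          fun ω => (Θ 0 ω).2.2.1 k l + (Lᵀ * (Θ 0 ω).2.2.2 * L) k l := rfl
      rw [hsplit, integral_add (hQ0int k l) hLRLint]
      congr 1
      rw [show (fun ω => (Lᵀ * (Θ 0 ω).2.2.2 * L) k l) =
          fun ω => ∑ a, ∑ b, (L a k * L b l) * (Θ 0 ω).2.2.2 a b from
        funext fun ω => entry_expand _ _ k l]
      rw [integral_finset_sum _ fun a _ => integrable_finset_sum _ fun b _ =>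
        (hR0int a b).const_mul _]
      rw [entry_expand L (Emat μ fun ω => (Θ 0 ω).2.2.2) k l]
      refine Finset.sum_congr rfl fun a _ => ?_
      rw [integral_finset_sum _ fun b _ => (hR0int a b).const_mul _]
      refine Finset.sum_congr rfl fun b _ => ?_
      rw [integral_const_mul]
      rfl
    have h2 : ∫ ω, zG L P (Θ 0 ω) k l ∂μ =
        Emat μ (fun ω => (gm L (Θ 0 ω))ᵀ * P * gm L (Θ 0 ω)) k l := rfl
    rw [h1, h2]
    conv_rhs => rw [hLyap]
    rfl
  -- one step of the Lyapunov recursion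
  have hstep : ∀ t : ℕ, (∫ ω, (x t ω) ⬝ᵥ ((zW L (Θ t ω)).mulVec (x t ω)) ∂μ) +
      (∫ ω, (x (t + 1) ω) ⬝ᵥ (P.mulVec (x (t + 1) ω)) ∂μ) =
      ∫ ω, (x t ω) ⬝ᵥ (P.mulVec (x t ω)) ∂μ := by
    intro t
    have hVt1 : (fun ω => (x (t + 1) ω) ⬝ᵥ (P.mulVec (x (t + 1) ω))) =
        fun ω => (x t ω) ⬝ᵥ ((zG L P (Θ t ω)).mulVec (x t ω)) :=
      funext fun ω => by rw [hXrec t ω, quadform_transform]; rfl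
    have hW := (masterCore t (zW L) (measurable_zW L) (fun k l => hzWint t k l)).2
    have hG := (masterCore t (zG L P) (measurable_zG L P) (fun k l => hzGint t k l)).2
    have hPf := (masterCore t (fun _ => P) measurable_const (fun k l => integrable_const _)).2
    rw [hVt1, hW, hG, hPf, ← Finset.sum_add_distrib]
    refine Finset.sum_congr rfl fun i _ => ?_
    rw [← Finset.sum_add_distrib]
    refine Finset.sum_congr rfl fun j _ => ?_
    rw [← mul_add]
    congr 1
    rw [← Finset.sum_add_distrib]
    refine Finset.sum_congr rfl fun k _ => ?_
    rw [← Finset.sum_add_distrib]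
    refine Finset.sum_congr rfl fun l _ => ?_
    rw [← mul_add, hLyapkl t k l]
    congr 1
    rw [integral_const]
    simp
  -- nonnegativity of the running cost
  have hcnonneg : ∀ t, 0 ≤ ∫ ω, (x t ω) ⬝ᵥ ((zW L (Θ t ω)).mulVec (x t ω)) ∂μ := by
    intro t
    refine integral_nonneg_of_ae ?_
    filter_upwards [hpsd t] with ω hω
    have h2 := hω.2.conjTranspose_mul_mul_same (B := L)
    rw [Matrix.conjTranspose_eq_transpose_of_trivial] at h2
    have hpsdW : (zW L (Θ t ω)).PosSemidef := hω.1.add h2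
    have h := hpsdW.dotProduct_mulVec_nonneg (x t ω)
    simpa using h
  -- mean square stability kills the terminal term
  have hNtend : Tendsto (fun t => ∫ ω, ∑ i, (x t ω i) ^ 2 ∂μ) atTop (nhds 0) := by
    have heq : (fun t => ∫ ω, ∑ i, (x t ω i) ^ 2 ∂μ) =
        fun t => (∫⁻ ω, ENNReal.ofReal (∑ i, (x t ω i) ^ 2) ∂μ).toReal := by
      funext t
      rw [integral_eq_lintegral_of_nonneg_ae (f := fun ω => ∑ i, (x t ω i) ^ 2)
        (ae_of_all _ fun ω => by positivity)
        ((Finset.measurable_sum (f := fun i ω => (x t ω i) ^ 2) _ fun i _ =>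
          ((measurable_pi_apply i).comp (hxmeas t)).pow_const 2)).aestronglyMeasurable]
    rw [heq]
    have h := (ENNReal.tendsto_toReal (a := 0) (by simp)).comp hstab
    simpa [Function.comp_def] using h
  have hVtend : Tendsto (fun t => ∫ ω, (x t ω) ⬝ᵥ (P.mulVec (x t ω)) ∂μ) atTop (nhds 0) := by
    refine squeeze_zero (g := fun t => (∑ k, ∑ l, |P k l|) * ∫ ω, ∑ i, (x t ω i) ^ 2 ∂μ)
      hVnonneg (fun t => ?_) ?_
    · calc ∫ ω, (x t ω) ⬝ᵥ (P.mulVec (x t ω)) ∂μ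
          ≤ ∫ ω, (∑ k, ∑ l, |P k l|) * ∑ i, (x t ω i) ^ 2 ∂μ :=
            integral_mono (hPint t) ((hxsqInt t).const_mul _)
              (fun ω => quad_le_sum_sq P (x t ω))
        _ = (∑ k, ∑ l, |P k l|) * ∫ ω, ∑ i, (x t ω i) ^ 2 ∂μ := integral_const_mul _ _
    · have h := hNtend.const_mul (∑ k, ∑ l, |P k l|)
      simpa using h
  -- telescoping
  have hsum : ∀ N : ℕ, ∑ t ∈ Finset.range N,
      (∫ ω, (x t ω) ⬝ᵥ ((zW L (Θ t ω)).mulVec (x t ω)) ∂μ) =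
      (∫ ω, (x 0 ω) ⬝ᵥ (P.mulVec (x 0 ω)) ∂μ) -
        (∫ ω, (x N ω) ⬝ᵥ (P.mulVec (x N ω)) ∂μ) := by
    intro N
    induction N with
    | zero => simp
    | succ N ih =>
        rw [Finset.sum_range_succ, ih]
        have h := hstep N
        linarith
  have hsummable : Summable (fun t => ∫ ω, (x t ω) ⬝ᵥ ((zW L (Θ t ω)).mulVec (x t ω)) ∂μ) :=
    summable_of_sum_range_le hcnonneg (fun N => by
      rw [hsum N]; have h := hVnonneg N; linarith)
  have hlim : Tendsto (fun N => ∑ t ∈ Finset.range N,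
      (∫ ω, (x t ω) ⬝ᵥ ((zW L (Θ t ω)).mulVec (x t ω)) ∂μ)) atTop
      (nhds (∫ ω, (x 0 ω) ⬝ᵥ (P.mulVec (x 0 ω)) ∂μ)) := by
    rw [funext hsum]
    simpa using tendsto_const_nhds.sub hVtend
  have htsum : (∑' t : ℕ, ∫ ω, (x t ω) ⬝ᵥ ((zW L (Θ t ω)).mulVec (x t ω)) ∂μ) =
      ∫ ω, (x 0 ω) ⬝ᵥ (P.mulVec (x 0 ω)) ∂μ :=
    tendsto_nhds_unique hsummable.hasSum.tendsto_sum_nat hlim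
  -- initial value equals the trace
  have hsym : ∀ a b : Fin n, P a b = P b a := by
    intro a b
    have h := hP.1
    calc P a b = Pᴴ a b := by rw [h]
      _ = star (P b a) := rfl
      _ = P b a := by simp
  have hV0 : ∫ ω, (x 0 ω) ⬝ᵥ (P.mulVec (x 0 ω)) ∂μ =
      (P * Emat μ (fun ω => Matrix.vecMulVec (x0 ω) (x0 ω))).trace := by
    have h1 : (fun ω => (x 0 ω) ⬝ᵥ (P.mulVec (x 0 ω))) =
        fun ω => ∑ k, ∑ l, (x0 ω k * x0 ω l) * P k l := by
      funext ω; rw [hX0 ω, quad_expand]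
    rw [h1, integral_finset_sum _ fun k _ => integrable_finset_sum _ fun l _ =>
      (hx0prod k l).mul_const (P k l)]
    have h2 : ∀ k, ∫ ω, ∑ l, (x0 ω k * x0 ω l) * P k l ∂μ =
        ∑ l, (∫ ω, x0 ω k * x0 ω l ∂μ) * P k l := by
      intro k
      rw [integral_finset_sum _ fun l _ => (hx0prod k l).mul_const (P k l)]
      exact Finset.sum_congr rfl fun l _ => integral_mul_const _ _
    rw [Finset.sum_congr rfl fun k _ => h2 k]
    rw [Matrix.trace]
    simp only [Matrix.diag, Matrix.mul_apply]
    rw [Finset.sum_comm]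
    refine Finset.sum_congr rfl fun k _ => Finset.sum_congr rfl fun i _ => ?_
    rw [hsym k i, mul_comm]
    rfl
  exact htsum.trans hV0

end CostAux

/-- The total expected cost of a mean-square stabilizing feedback `L`
equals `tr(P_L Σ₀)`, where `P_L` is a PSD solution of the stochastic Lyapunov equation. -/
theorem cost_eq_trace_lyapunov
    {Ω : Type*} [MeasurableSpace Ω] (μ : Measure Ω) [IsProbabilityMeasure μ]
    (n m : ℕ)
    -- the i.i.d. random parameters of the LQ problem
    (A : ℕ → Ω → Matrix (Fin n) (Fin n) ℝ) (B : ℕ → Ω → Matrix (Fin n) (Fin m) ℝ)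
    (Qp : ℕ → Ω → Matrix (Fin n) (Fin n) ℝ) (Rp : ℕ → Ω → Matrix (Fin m) (Fin m) ℝ)
    (hAmeas : ∀ t, Measurable (A t)) (hBmeas : ∀ t, Measurable (B t))
    (hQmeas : ∀ t, Measurable (Qp t)) (hRmeas : ∀ t, Measurable (Rp t))
    (hiid : ∀ s t : ℕ,
      μ.map (fun ω => (A (s + 1) ω, B (s + 1) ω, Qp (s + 1) ω, Rp (s + 1) ω)) =
      μ.map (fun ω => (A (t + 1) ω, B (t + 1) ω, Qp (t + 1) ω, Rp (t + 1) ω)))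
    (hindep : iIndepFun
      (fun t ω => (A (t + 1) ω, B (t + 1) ω, Qp (t + 1) ω, Rp (t + 1) ω)) μ)
    -- the initial state, independent of the parameters
    (x0 : Ω → Fin n → ℝ) (hx0meas : Measurable x0)
    (hindep0 : IndepFun x0
      (fun ω => fun t : ℕ => (A (t + 1) ω, B (t + 1) ω, Qp (t + 1) ω, Rp (t + 1) ω)) μ)
    -- positive semidefinite weights
    (hpsd : ∀ t, ∀ᵐ ω ∂μ, (Qp (t + 1) ω).PosSemidef ∧ (Rp (t + 1) ω).PosSemidef)
    -- finite second moments
    (hA2 : Integrable (fun ω => opNorm (A 1 ω) ^ 2) μ)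
    (hB2 : Integrable (fun ω => opNorm (B 1 ω) ^ 2) μ)
    (hQ1 : Integrable (fun ω => opNorm (Qp 1 ω)) μ)
    (hR1 : Integrable (fun ω => opNorm (Rp 1 ω)) μ)
    (hx0L2 : Integrable (fun ω => ∑ i, (x0 ω i) ^ 2) μ)
    -- the closed-loop trajectory generated by an arbitrary feedback matrix
    (X : Matrix (Fin m) (Fin n) ℝ → ℕ → Ω → Fin n → ℝ)
    (hX0 : ∀ M ω, X M 0 ω = x0 ω)
    (hXrec : ∀ M t ω,
      X M (t + 1) ω = (A (t + 1) ω - B (t + 1) ω * M).mulVec (X M t ω))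
    -- the total expected cost of a feedback matrix
    (C : Matrix (Fin m) (Fin n) ℝ → ℝ)
    (hC : ∀ M, C M = ∑' t : ℕ, ∫ ω,
      (X M t ω) ⬝ᵥ ((Qp (t + 1) ω + Mᵀ * Rp (t + 1) ω * M).mulVec (X M t ω)) ∂μ)
    -- mean-square stabilization
    (Stab : Matrix (Fin m) (Fin n) ℝ → Prop)
    (hStabDef : ∀ M, Stab M ↔ Tendsto
      (fun t => ∫⁻ ω, ENNReal.ofReal (∑ i, (X M t ω i) ^ 2) ∂μ) atTop (nhds 0))
    -- `P` is a PSD solution of the stochastic Lyapunov equation for `L`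
    (L : Matrix (Fin m) (Fin n) ℝ) (P : Matrix (Fin n) (Fin n) ℝ)
    (hP : P.PosSemidef)
    (hLyap : P = Emat μ (fun ω => Qp 1 ω) + Lᵀ * Emat μ (fun ω => Rp 1 ω) * L +
      Emat μ (fun ω => (A 1 ω - B 1 ω * L)ᵀ * P * (A 1 ω - B 1 ω * L)))
    (hstab : Stab L) :
    C L = (P * Emat μ (fun ω => Matrix.vecMulVec (x0 ω) (x0 ω))).trace := by
  rw [hStabDef L] at hstab
  rw [hC L]
  exact CostAux.main μ L P
    (fun t ω => (A (t + 1) ω, B (t + 1) ω, Qp (t + 1) ω, Rp (t + 1) ω)) x0 (X L)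
    (fun t => ((hAmeas (t + 1)).prodMk ((hBmeas (t + 1)).prodMk
      ((hQmeas (t + 1)).prodMk (hRmeas (t + 1))))))
    (fun s t => hiid s t) hindep hx0meas hindep0 hpsd hA2 hB2 hQ1 hR1 hx0L2
    (hX0 L) (fun t ω => hXrec L t ω) hP hLyap hstab
end

section
/- (Value difference / advantage identity) In the stochastic LQ problem, for mean-square stabilizing L and any L', the advantage of the one-step deviation u = −L'x from the policy L at state x is A_L(x, −L'x) = x^T(L'−L)^T R_L (L'−L)x + 2 x^T (L'−L)^T E_L x, where R_L = E[R] + E[B^T P_L B] and E_L = R_L L − E[B^T P_L A]. -/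
open MeasureTheory Real Matrix ProbabilityTheory Filter

section helpers
variable {Ω : Type*} [MeasurableSpace Ω] {μ : Measure Ω}

/-- Each entry of a matrix is bounded by its operator norm. -/
lemma abs_entry_le_opNorm {a b : ℕ} (M : Matrix (Fin a) (Fin b) ℝ) (i : Fin a) (j : Fin b) :
    |M i j| ≤ opNorm M := by
  classical
  set T := LinearMap.toContinuousLinearMap (Matrix.toEuclideanLin M) with hT
  have hv : ‖(EuclideanSpace.single j (1:ℝ) : EuclideanSpace ℝ (Fin b))‖ = 1 := by
    simp [EuclideanSpace.norm_single]
  have happ : T (EuclideanSpace.single j (1:ℝ)) i = M i j := by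
    show Matrix.toEuclideanLin M (EuclideanSpace.single j (1:ℝ)) i = M i j
    rw [Matrix.toEuclideanLin_apply]
    simp only [EuclideanSpace.single, Equiv.apply_symm_apply, Matrix.mulVec_single,
      PiLp.ofLp_single, Pi.smul_apply, MulOpposite.smul_eq_mul_unop, MulOpposite.unop_op,
      Matrix.col_apply, mul_one]
  have h2 : |M i j| ≤ ‖T (EuclideanSpace.single j (1:ℝ))‖ := by
    rw [← happ]
    set v := T (EuclideanSpace.single j (1:ℝ))
    rw [EuclideanSpace.norm_eq v]
    have h1 : |v i| = Real.sqrt (‖v i‖ ^ 2) := by rw [Real.sqrt_sq_eq_abs]; simp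
    rw [h1]
    apply Real.sqrt_le_sqrt
    exact Finset.single_le_sum (f := fun k => ‖v k‖ ^ 2) (fun k _ => by positivity)
      (Finset.mem_univ i)
  calc |M i j| ≤ ‖T (EuclideanSpace.single j (1:ℝ))‖ := h2
    _ ≤ ‖T‖ * ‖(EuclideanSpace.single j (1:ℝ) : EuclideanSpace ℝ (Fin b))‖ := T.le_opNorm _
    _ = opNorm M := by rw [hv, mul_one]; rfl

/-- All entries of a random matrix are in L². -/
def Ent2 (μ : Measure Ω) {a b : ℕ} (f : Ω → Matrix (Fin a) (Fin b) ℝ) : Prop :=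
  ∀ i j, MemLp (fun ω => f ω i j) 2 μ

lemma ent2_of_opNorm_sq {a b : ℕ} {f : Ω → Matrix (Fin a) (Fin b) ℝ}
    (hm : Measurable f) (h2 : Integrable (fun ω => opNorm (f ω) ^ 2) μ) : Ent2 μ f := by
  intro i j
  have hmeas : Measurable (fun ω => f ω i j) :=
    (measurable_pi_apply j).comp ((measurable_pi_apply i).comp hm)
  rw [memLp_two_iff_integrable_sq hmeas.aestronglyMeasurable]
  refine h2.mono' ((hmeas.pow_const 2).aestronglyMeasurable) ?_
  filter_upwards with ω
  have h := abs_entry_le_opNorm (f ω) i j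
  have h0 : (0:ℝ) ≤ |f ω i j| := abs_nonneg _
  have h1 : ‖(f ω i j) ^ 2‖ = |f ω i j| ^ 2 := by
    rw [Real.norm_eq_abs, abs_pow, sq_abs]
  rw [h1]
  have h2' : (0:ℝ) ≤ opNorm (f ω) := le_trans h0 h
  nlinarith

lemma memL2_integrable_mul {f g : Ω → ℝ} (hf : MemLp f 2 μ) (hg : MemLp g 2 μ) :
    Integrable (fun ω => f ω * g ω) μ := by
  have h := memLp_one_iff_integrable.mp (MemLp.smul (E := ℝ) (𝕜 := ℝ) (r := 1) hf hg)
  have heq : (fun ω => f ω * g ω) = g • f := by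
    funext ω; simp [Pi.smul_apply, smul_eq_mul, mul_comm]
  rw [heq]; exact h

lemma Ent2.mul_const {a b c : ℕ} {f : Ω → Matrix (Fin a) (Fin b) ℝ} (hf : Ent2 μ f)
    (N : Matrix (Fin b) (Fin c) ℝ) : Ent2 μ (fun ω => f ω * N) := by
  intro i j
  have h : (fun ω => (f ω * N) i j) = fun ω => ∑ k, N k j * f ω i k := by
    funext ω; simp [Matrix.mul_apply, mul_comm]
  rw [h]
  exact memLp_finset_sum _ (fun k _ => (hf i k).const_mul (N k j))

lemma Ent2.sub {a b : ℕ} {f g : Ω → Matrix (Fin a) (Fin b) ℝ} (hf : Ent2 μ f) (hg : Ent2 μ g) :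
    Ent2 μ (fun ω => f ω - g ω) := by
  intro i j
  have h : (fun ω => (f ω - g ω) i j) = fun ω => f ω i j - g ω i j := rfl
  rw [h]; exact (hf i j).sub (hg i j)

lemma int_entry_tPg {a b c : ℕ} {f : Ω → Matrix (Fin c) (Fin a) ℝ}
    {g : Ω → Matrix (Fin c) (Fin b) ℝ} (hf : Ent2 μ f) (hg : Ent2 μ g)
    (P : Matrix (Fin c) (Fin c) ℝ) (i : Fin a) (j : Fin b) :
    Integrable (fun ω => ((f ω)ᵀ * P * g ω) i j) μ := by
  have hrw : (fun ω => ((f ω)ᵀ * P * g ω) i j)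
      = fun ω => ∑ l, ∑ k, (f ω k i * g ω l j) * P k l := by
    funext ω
    simp only [Matrix.mul_apply, Matrix.transpose_apply, Finset.sum_mul]
    exact Finset.sum_congr rfl fun l _ => Finset.sum_congr rfl fun k _ => by ring
  rw [hrw]
  exact integrable_finset_sum _ fun l _ => integrable_finset_sum _ fun k _ =>
    (memL2_integrable_mul (hf k i) (hg l j)).mul_const _

lemma int_entries_mul_const {a b c : ℕ} {f : Ω → Matrix (Fin a) (Fin b) ℝ}
    (hf : ∀ i j, Integrable (fun ω => f ω i j) μ) (N : Matrix (Fin b) (Fin c) ℝ) :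
    ∀ i j, Integrable (fun ω => (f ω * N) i j) μ := by
  intro i j
  have h : (fun ω => (f ω * N) i j) = fun ω => ∑ k, f ω i k * N k j := by
    funext ω; simp [Matrix.mul_apply]
  rw [h]; exact integrable_finset_sum _ fun k _ => (hf i k).mul_const _

lemma int_entries_const_mul {a b c : ℕ} {f : Ω → Matrix (Fin b) (Fin c) ℝ}
    (hf : ∀ i j, Integrable (fun ω => f ω i j) μ) (N : Matrix (Fin a) (Fin b) ℝ) :
    ∀ i j, Integrable (fun ω => (N * f ω) i j) μ := by
  intro i j
  have h : (fun ω => (N * f ω) i j) = fun ω => ∑ k, N i k * f ω k j := by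
    funext ω; simp [Matrix.mul_apply]
  rw [h]; exact integrable_finset_sum _ fun k _ => (hf k j).const_mul _

lemma Emat_add {a b : ℕ} {f g : Ω → Matrix (Fin a) (Fin b) ℝ}
    (hf : ∀ i j, Integrable (fun ω => f ω i j) μ) (hg : ∀ i j, Integrable (fun ω => g ω i j) μ) :
    Emat μ (fun ω => f ω + g ω) = Emat μ f + Emat μ g := by
  ext i j
  show (∫ ω, (f ω i j + g ω i j) ∂μ) = _
  rw [integral_add (hf i j) (hg i j)]; rfl

lemma Emat_sub {a b : ℕ} {f g : Ω → Matrix (Fin a) (Fin b) ℝ}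
    (hf : ∀ i j, Integrable (fun ω => f ω i j) μ) (hg : ∀ i j, Integrable (fun ω => g ω i j) μ) :
    Emat μ (fun ω => f ω - g ω) = Emat μ f - Emat μ g := by
  ext i j
  show (∫ ω, (f ω i j - g ω i j) ∂μ) = _
  rw [integral_sub (hf i j) (hg i j)]; rfl

lemma Emat_mul_const {a b c : ℕ} {f : Ω → Matrix (Fin a) (Fin b) ℝ}
    (hf : ∀ i j, Integrable (fun ω => f ω i j) μ) (N : Matrix (Fin b) (Fin c) ℝ) :
    Emat μ (fun ω => f ω * N) = Emat μ f * N := by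
  ext i j
  show (∫ ω, (∑ k, f ω i k * N k j) ∂μ) = ∑ k, (∫ ω, f ω i k ∂μ) * N k j
  rw [integral_finset_sum _ (fun k _ => (hf i k).mul_const _)]
  exact Finset.sum_congr rfl fun k _ => integral_mul_const _ _

lemma Emat_const_mul {a b c : ℕ} {f : Ω → Matrix (Fin b) (Fin c) ℝ}
    (hf : ∀ i j, Integrable (fun ω => f ω i j) μ) (N : Matrix (Fin a) (Fin b) ℝ) :
    Emat μ (fun ω => N * f ω) = N * Emat μ f := by
  ext i j
  show (∫ ω, (∑ k, N i k * f ω k j) ∂μ) = ∑ k, N i k * (∫ ω, f ω k j ∂μ)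
  rw [integral_finset_sum _ (fun k _ => (hf k j).const_mul _)]
  exact Finset.sum_congr rfl fun k _ => integral_const_mul _ _

lemma integral_quad {a b : ℕ} {f : Ω → Matrix (Fin a) (Fin b) ℝ}
    (hf : ∀ i j, Integrable (fun ω => f ω i j) μ) (x : Fin a → ℝ) (y : Fin b → ℝ) :
    ∫ ω, x ⬝ᵥ (f ω).mulVec y ∂μ = x ⬝ᵥ (Emat μ f).mulVec y := by
  have hx : ∀ (M : Matrix (Fin a) (Fin b) ℝ),
      x ⬝ᵥ M.mulVec y = ∑ i, ∑ j, x i * (M i j * y j) := by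
    intro M; simp [dotProduct, Matrix.mulVec, Finset.mul_sum]
  simp only [hx]
  rw [integral_finset_sum _ (fun i _ => integrable_finset_sum _
    (fun j _ => ((hf i j).mul_const (y j)).const_mul (x i)))]
  refine Finset.sum_congr rfl fun i _ => ?_
  rw [integral_finset_sum _ (fun j _ => ((hf i j).mul_const (y j)).const_mul (x i))]
  refine Finset.sum_congr rfl fun j _ => ?_
  rw [integral_const_mul, integral_mul_const]; rfl

lemma quad_conj {a b : ℕ} (N : Matrix (Fin a) (Fin b) ℝ) (M : Matrix (Fin a) (Fin a) ℝ)
    (x : Fin b → ℝ) :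
    (N.mulVec x) ⬝ᵥ M.mulVec (N.mulVec x) = x ⬝ᵥ (Nᵀ * M * N).mulVec x := by
  rw [Matrix.mul_assoc, ← Matrix.mulVec_mulVec, Matrix.dotProduct_mulVec x,
    Matrix.vecMul_transpose, ← Matrix.mulVec_mulVec]

lemma quad_transpose {a : ℕ} (M : Matrix (Fin a) (Fin a) ℝ) (x : Fin a → ℝ) :
    x ⬝ᵥ Mᵀ.mulVec x = x ⬝ᵥ M.mulVec x := by
  rw [Matrix.dotProduct_mulVec, Matrix.vecMul_transpose, dotProduct_comm]

end helpers

/-- The advantage of the one-step deviation `u = −L'x` from the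
policy `L` satisfies
`A_L(x, −L'x) = xᵀ(L'−L)ᵀR_L(L'−L)x + 2xᵀ(L'−L)ᵀE_L x`. -/
theorem advantage_identity
    {Ω : Type*} [MeasurableSpace Ω] (μ : Measure Ω) [IsProbabilityMeasure μ]
    (n m : ℕ)
    -- the i.i.d. random parameters of the LQ problem
    (A : ℕ → Ω → Matrix (Fin n) (Fin n) ℝ) (B : ℕ → Ω → Matrix (Fin n) (Fin m) ℝ)
    (Qp : ℕ → Ω → Matrix (Fin n) (Fin n) ℝ) (Rp : ℕ → Ω → Matrix (Fin m) (Fin m) ℝ)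
    (hAmeas : ∀ t, Measurable (A t)) (hBmeas : ∀ t, Measurable (B t))
    (hQmeas : ∀ t, Measurable (Qp t)) (hRmeas : ∀ t, Measurable (Rp t))
    (hiid : ∀ s t : ℕ,
      μ.map (fun ω => (A (s + 1) ω, B (s + 1) ω, Qp (s + 1) ω, Rp (s + 1) ω)) =
      μ.map (fun ω => (A (t + 1) ω, B (t + 1) ω, Qp (t + 1) ω, Rp (t + 1) ω)))
    (hindep : iIndepFun
      (fun t ω => (A (t + 1) ω, B (t + 1) ω, Qp (t + 1) ω, Rp (t + 1) ω)) μ)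
    -- the initial state, independent of the parameters
    (x0 : Ω → Fin n → ℝ) (hx0meas : Measurable x0)
    (hindep0 : IndepFun x0
      (fun ω => fun t : ℕ => (A (t + 1) ω, B (t + 1) ω, Qp (t + 1) ω, Rp (t + 1) ω)) μ)
    -- positive semidefinite weights
    (hpsd : ∀ t, ∀ᵐ ω ∂μ, (Qp (t + 1) ω).PosSemidef ∧ (Rp (t + 1) ω).PosSemidef)
    -- finite second moments
    (hA2 : Integrable (fun ω => opNorm (A 1 ω) ^ 2) μ)
    (hB2 : Integrable (fun ω => opNorm (B 1 ω) ^ 2) μ)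
    (hQ1 : Integrable (fun ω => opNorm (Qp 1 ω)) μ)
    (hR1 : Integrable (fun ω => opNorm (Rp 1 ω)) μ)
    (hx0L2 : Integrable (fun ω => ∑ i, (x0 ω i) ^ 2) μ)
    -- the closed-loop trajectory generated by an arbitrary feedback matrix
    (X : Matrix (Fin m) (Fin n) ℝ → ℕ → Ω → Fin n → ℝ)
    (hX0 : ∀ M ω, X M 0 ω = x0 ω)
    (hXrec : ∀ M t ω,
      X M (t + 1) ω = (A (t + 1) ω - B (t + 1) ω * M).mulVec (X M t ω))
    -- the total expected cost of a feedback matrix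
    (C : Matrix (Fin m) (Fin n) ℝ → ℝ)
    (hC : ∀ M, C M = ∑' t : ℕ, ∫ ω,
      (X M t ω) ⬝ᵥ ((Qp (t + 1) ω + Mᵀ * Rp (t + 1) ω * M).mulVec (X M t ω)) ∂μ)
    -- mean-square stabilization
    (Stab : Matrix (Fin m) (Fin n) ℝ → Prop)
    (hStabDef : ∀ M, Stab M ↔ Tendsto
      (fun t => ∫⁻ ω, ENNReal.ofReal (∑ i, (X M t ω i) ^ 2) ∂μ) atTop (nhds 0))
    -- `P` is a PSD solution of the stochastic Lyapunov equation for `L`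
    (L : Matrix (Fin m) (Fin n) ℝ) (P : Matrix (Fin n) (Fin n) ℝ)
    (hP : P.PosSemidef)
    (hLyap : P = Emat μ (fun ω => Qp 1 ω) + Lᵀ * Emat μ (fun ω => Rp 1 ω) * L +
      Emat μ (fun ω => (A 1 ω - B 1 ω * L)ᵀ * P * (A 1 ω - B 1 ω * L)))
    -- the matrices `R_L` and `E_L`
    (RL : Matrix (Fin m) (Fin m) ℝ)
    (hRL : RL = Emat μ (fun ω => Rp 1 ω) + Emat μ (fun ω => (B 1 ω)ᵀ * P * B 1 ω))
    (EL : Matrix (Fin m) (Fin n) ℝ)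
    (hEL : EL = RL * L - Emat μ (fun ω => (B 1 ω)ᵀ * P * A 1 ω))
    (hstab : Stab L) :
    ∀ (xv : Fin n → ℝ) (L' : Matrix (Fin m) (Fin n) ℝ),
      (xv ⬝ᵥ (Emat μ (fun ω => Qp 1 ω)).mulVec xv +
        (L'.mulVec xv) ⬝ᵥ (Emat μ (fun ω => Rp 1 ω)).mulVec (L'.mulVec xv) +
        (∫ ω, ((A 1 ω).mulVec xv - (B 1 ω).mulVec (L'.mulVec xv)) ⬝ᵥ
          P.mulVec ((A 1 ω).mulVec xv - (B 1 ω).mulVec (L'.mulVec xv)) ∂μ)) -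
      xv ⬝ᵥ P.mulVec xv =
        xv ⬝ᵥ ((L' - L)ᵀ * RL * (L' - L)).mulVec xv +
          2 * (xv ⬝ᵥ ((L' - L)ᵀ * EL).mulVec xv) := by
  intro xv L'
  have hA2' : Ent2 μ (A 1) := ent2_of_opNorm_sq (hAmeas 1) hA2
  have hB2' : Ent2 μ (B 1) := ent2_of_opNorm_sq (hBmeas 1) hB2
  have hPs : Pᵀ = P := by
    ext i j
    show P j i = P i j
    calc P j i = Pᴴ i j := by simp [Matrix.conjTranspose_apply]
      _ = P i j := by rw [hP.1]
  -- entrywise integrability of the quadratic pieces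
  have hAA := int_entry_tPg hA2' hA2' P
  have hAB := int_entry_tPg hA2' hB2' P
  have hBA := int_entry_tPg hB2' hA2' P
  have hBB := int_entry_tPg hB2' hB2' P
  have hCL : ∀ N : Matrix (Fin m) (Fin n) ℝ, Ent2 μ (fun ω => A 1 ω - B 1 ω * N) :=
    fun N => hA2'.sub (hB2'.mul_const N)
  -- expansion of the closed-loop second moment
  have hEcl : ∀ N : Matrix (Fin m) (Fin n) ℝ,
      Emat μ (fun ω => (A 1 ω - B 1 ω * N)ᵀ * P * (A 1 ω - B 1 ω * N)) =
        Emat μ (fun ω => (A 1 ω)ᵀ * P * A 1 ω)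
          - Emat μ (fun ω => (A 1 ω)ᵀ * P * B 1 ω) * N
          - Nᵀ * Emat μ (fun ω => (B 1 ω)ᵀ * P * A 1 ω)
          + Nᵀ * (Emat μ (fun ω => (B 1 ω)ᵀ * P * B 1 ω) * N) := by
    intro N
    have hpt : (fun ω => (A 1 ω - B 1 ω * N)ᵀ * P * (A 1 ω - B 1 ω * N)) =
        fun ω => (((A 1 ω)ᵀ * P * A 1 ω - ((A 1 ω)ᵀ * P * B 1 ω) * N)
          - Nᵀ * ((B 1 ω)ᵀ * P * A 1 ω)) + Nᵀ * (((B 1 ω)ᵀ * P * B 1 ω) * N) := by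
      funext ω
      simp only [Matrix.transpose_sub, Matrix.transpose_mul, Matrix.sub_mul, Matrix.mul_sub,
        Matrix.mul_assoc]
      abel
    have hI2 : ∀ i j, Integrable (fun ω => (((A 1 ω)ᵀ * P * B 1 ω) * N) i j) μ :=
      int_entries_mul_const hAB N
    have hI3 : ∀ i j, Integrable (fun ω => (Nᵀ * ((B 1 ω)ᵀ * P * A 1 ω)) i j) μ :=
      int_entries_const_mul hBA Nᵀ
    have hI4 : ∀ i j, Integrable (fun ω => (Nᵀ * (((B 1 ω)ᵀ * P * B 1 ω) * N)) i j) μ :=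
      int_entries_const_mul (int_entries_mul_const hBB N) Nᵀ
    have hI12 : ∀ i j, Integrable
        (fun ω => ((A 1 ω)ᵀ * P * A 1 ω - ((A 1 ω)ᵀ * P * B 1 ω) * N) i j) μ :=
      fun i j => (hAA i j).sub (hI2 i j)
    have hI123 : ∀ i j, Integrable (fun ω => ((A 1 ω)ᵀ * P * A 1 ω
        - ((A 1 ω)ᵀ * P * B 1 ω) * N - Nᵀ * ((B 1 ω)ᵀ * P * A 1 ω)) i j) μ :=
      fun i j => (hI12 i j).sub (hI3 i j)
    rw [hpt,
      Emat_add (f := fun ω => (A 1 ω)ᵀ * P * A 1 ω - ((A 1 ω)ᵀ * P * B 1 ω) * N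
          - Nᵀ * ((B 1 ω)ᵀ * P * A 1 ω))
        (g := fun ω => Nᵀ * (((B 1 ω)ᵀ * P * B 1 ω) * N)) hI123 hI4,
      Emat_sub (f := fun ω => (A 1 ω)ᵀ * P * A 1 ω - ((A 1 ω)ᵀ * P * B 1 ω) * N)
        (g := fun ω => Nᵀ * ((B 1 ω)ᵀ * P * A 1 ω)) hI12 hI3,
      Emat_sub (f := fun ω => (A 1 ω)ᵀ * P * A 1 ω)
        (g := fun ω => ((A 1 ω)ᵀ * P * B 1 ω) * N) hAA hI2,
      Emat_mul_const (f := fun ω => (A 1 ω)ᵀ * P * B 1 ω) hAB N,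
      Emat_const_mul (f := fun ω => (B 1 ω)ᵀ * P * A 1 ω) hBA Nᵀ,
      Emat_const_mul (f := fun ω => ((B 1 ω)ᵀ * P * B 1 ω) * N)
        (int_entries_mul_const hBB N) Nᵀ,
      Emat_mul_const (f := fun ω => (B 1 ω)ᵀ * P * B 1 ω) hBB N]
  -- symmetry facts
  have hEABs : Emat μ (fun ω => (A 1 ω)ᵀ * P * B 1 ω)
      = (Emat μ (fun ω => (B 1 ω)ᵀ * P * A 1 ω))ᵀ := by
    ext i j
    show (∫ ω, ((A 1 ω)ᵀ * P * B 1 ω) i j ∂μ) = ∫ ω, ((B 1 ω)ᵀ * P * A 1 ω) j i ∂μ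
    refine integral_congr_ae (Filter.Eventually.of_forall fun ω => ?_)
    have h : ((B 1 ω)ᵀ * P * A 1 ω)ᵀ = (A 1 ω)ᵀ * P * B 1 ω := by
      rw [Matrix.transpose_mul, Matrix.transpose_mul, Matrix.transpose_transpose, hPs,
        Matrix.mul_assoc]
    calc ((A 1 ω)ᵀ * P * B 1 ω) i j = ((B 1 ω)ᵀ * P * A 1 ω)ᵀ i j := by rw [h]
      _ = ((B 1 ω)ᵀ * P * A 1 ω) j i := rfl
  have hGs : (Emat μ (fun ω => (B 1 ω)ᵀ * P * B 1 ω))ᵀ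
      = Emat μ (fun ω => (B 1 ω)ᵀ * P * B 1 ω) := by
    ext i j
    show (∫ ω, ((B 1 ω)ᵀ * P * B 1 ω) j i ∂μ) = ∫ ω, ((B 1 ω)ᵀ * P * B 1 ω) i j ∂μ
    refine integral_congr_ae (Filter.Eventually.of_forall fun ω => ?_)
    have h : ((B 1 ω)ᵀ * P * B 1 ω)ᵀ = (B 1 ω)ᵀ * P * B 1 ω := by
      rw [Matrix.transpose_mul, Matrix.transpose_mul, Matrix.transpose_transpose, hPs,
        Matrix.mul_assoc]
    calc ((B 1 ω)ᵀ * P * B 1 ω) j i = ((B 1 ω)ᵀ * P * B 1 ω)ᵀ i j := rfl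
      _ = ((B 1 ω)ᵀ * P * B 1 ω) i j := by rw [h]
  have hERs : (Emat μ (fun ω => Rp 1 ω))ᵀ = Emat μ (fun ω => Rp 1 ω) := by
    ext i j
    show (∫ ω, Rp 1 ω j i ∂μ) = ∫ ω, Rp 1 ω i j ∂μ
    refine integral_congr_ae ?_
    filter_upwards [hpsd 0] with ω hω
    calc Rp 1 ω j i = (Rp 1 ω)ᴴ i j := by simp [Matrix.conjTranspose_apply]
      _ = Rp 1 ω i j := by rw [hω.2.1]
  -- compute the integral in the goal
  have hintg : (∫ ω, ((A 1 ω).mulVec xv - (B 1 ω).mulVec (L'.mulVec xv)) ⬝ᵥ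
        P.mulVec ((A 1 ω).mulVec xv - (B 1 ω).mulVec (L'.mulVec xv)) ∂μ) =
      xv ⬝ᵥ (Emat μ (fun ω => (A 1 ω)ᵀ * P * A 1 ω)
          - (Emat μ (fun ω => (B 1 ω)ᵀ * P * A 1 ω))ᵀ * L'
          - L'ᵀ * Emat μ (fun ω => (B 1 ω)ᵀ * P * A 1 ω)
          + L'ᵀ * (Emat μ (fun ω => (B 1 ω)ᵀ * P * B 1 ω) * L')).mulVec xv := by
    have hpt : ∀ ω, ((A 1 ω).mulVec xv - (B 1 ω).mulVec (L'.mulVec xv)) ⬝ᵥ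
          P.mulVec ((A 1 ω).mulVec xv - (B 1 ω).mulVec (L'.mulVec xv)) =
        xv ⬝ᵥ ((A 1 ω - B 1 ω * L')ᵀ * P * (A 1 ω - B 1 ω * L')).mulVec xv := by
      intro ω
      rw [show (A 1 ω).mulVec xv - (B 1 ω).mulVec (L'.mulVec xv)
            = (A 1 ω - B 1 ω * L').mulVec xv by
          rw [Matrix.sub_mulVec, Matrix.mulVec_mulVec], quad_conj]
    simp only [hpt]
    rw [integral_quad (int_entry_tPg (hCL L') (hCL L') P) xv xv, hEcl L', hEABs]
  rw [hintg, quad_conj L' (Emat μ (fun ω => Rp 1 ω)) xv]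
  -- the key matrix identity
  have hP' : P = Emat μ (fun ω => Qp 1 ω) + Lᵀ * Emat μ (fun ω => Rp 1 ω) * L +
      (Emat μ (fun ω => (A 1 ω)ᵀ * P * A 1 ω)
        - (Emat μ (fun ω => (B 1 ω)ᵀ * P * A 1 ω))ᵀ * L
        - Lᵀ * Emat μ (fun ω => (B 1 ω)ᵀ * P * A 1 ω)
        + Lᵀ * (Emat μ (fun ω => (B 1 ω)ᵀ * P * B 1 ω) * L)) := by
    conv_lhs => rw [hLyap]
    rw [hEcl L, hEABs]
  obtain ⟨EQ, hEQg⟩ : ∃ M, Emat μ (fun ω => Qp 1 ω) = M := ⟨_, rfl⟩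
  obtain ⟨ER, hERg⟩ : ∃ M, Emat μ (fun ω => Rp 1 ω) = M := ⟨_, rfl⟩
  obtain ⟨S, hSg⟩ : ∃ M, Emat μ (fun ω => (A 1 ω)ᵀ * P * A 1 ω) = M := ⟨_, rfl⟩
  obtain ⟨K, hKg⟩ : ∃ M, Emat μ (fun ω => (B 1 ω)ᵀ * P * A 1 ω) = M := ⟨_, rfl⟩
  obtain ⟨G, hGg⟩ : ∃ M, Emat μ (fun ω => (B 1 ω)ᵀ * P * B 1 ω) = M := ⟨_, rfl⟩
  rw [hEQg, hERg, hSg, hKg, hGg] at hP' ⊢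
  rw [hERg] at hERs
  rw [hGg] at hGs
  rw [hERg, hGg] at hRL
  rw [hKg] at hEL
  have hmat : EQ + L'ᵀ * ER * L' + (S - Kᵀ * L' - L'ᵀ * K + L'ᵀ * (G * L')) - P =
      (L' - L)ᵀ * RL * (L' - L) + ((L' - L)ᵀ * EL + ((L' - L)ᵀ * EL)ᵀ) := by
    rw [hP', hEL, hRL]
    simp only [Matrix.transpose_sub, Matrix.transpose_add, Matrix.transpose_mul,
      Matrix.transpose_transpose, hERs, hGs, Matrix.sub_mul, Matrix.mul_sub,
      Matrix.add_mul, Matrix.mul_add, Matrix.mul_assoc]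
    abel
  have e1 : xv ⬝ᵥ EQ.mulVec xv + xv ⬝ᵥ (L'ᵀ * ER * L').mulVec xv +
        xv ⬝ᵥ (S - Kᵀ * L' - L'ᵀ * K + L'ᵀ * (G * L')).mulVec xv - xv ⬝ᵥ P.mulVec xv =
      xv ⬝ᵥ ((EQ + L'ᵀ * ER * L' + (S - Kᵀ * L' - L'ᵀ * K + L'ᵀ * (G * L')) - P)).mulVec xv := by
    simp [Matrix.add_mulVec, Matrix.sub_mulVec, dotProduct_add, dotProduct_sub]
  rw [e1, hmat]
  rw [Matrix.add_mulVec, dotProduct_add, Matrix.add_mulVec, dotProduct_add,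
    quad_transpose]
  ring
end

section
/- (Norm bound of the aggregate operator) Suppose L is mean-square stabilizing for the stochastic LQ system, Σ₀ ⪰ μ I with μ > 0, and let T_L = ∑_{t=0}^∞ F_L^t where F_L(X) = E[(A−BL)X(A−BL)^T]. Then the operator norm of T_L satisfies ‖T_L‖ ≤ C(L)/(μ·σ_min(E[Q])). -/
open MeasureTheory Real Matrix ProbabilityTheory Filter

namespace AggAux


/-- Frobenius square of a matrix. -/
def fsq {a b : ℕ} (M : Matrix (Fin a) (Fin b) ℝ) : ℝ := ∑ i, ∑ j, (M i j) ^ 2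

lemma fsq_nonneg {a b : ℕ} (M : Matrix (Fin a) (Fin b) ℝ) : 0 ≤ fsq M := by
  refine Finset.sum_nonneg fun i _ => Finset.sum_nonneg fun j _ => sq_nonneg _

lemma sq_entry_le_fsq {a b : ℕ} (M : Matrix (Fin a) (Fin b) ℝ) (i j) :
    (M i j) ^ 2 ≤ fsq M := by
  have h1 : (M i j) ^ 2 ≤ ∑ j', (M i j') ^ 2 :=
    Finset.single_le_sum (f := fun j' => (M i j') ^ 2) (fun j' _ => sq_nonneg _)
      (Finset.mem_univ j)
  refine h1.trans (Finset.single_le_sum (f := fun i' => ∑ j', (M i' j') ^ 2)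
    (fun i' _ => Finset.sum_nonneg fun j' _ => sq_nonneg _) (Finset.mem_univ i))

/-- Cauchy–Schwarz row-wise bound for `mulVec`. -/
lemma sum_sq_mulVec_le {a b : ℕ} (M : Matrix (Fin a) (Fin b) ℝ) (v : Fin b → ℝ) :
    ∑ i, (M.mulVec v i) ^ 2 ≤ fsq M * ∑ j, (v j) ^ 2 := by
  have h : ∀ i, (M.mulVec v i) ^ 2 ≤ (∑ j, (M i j) ^ 2) * ∑ j, (v j) ^ 2 := fun i => by
    simpa [Matrix.mulVec, dotProduct] using
      Finset.sum_mul_sq_le_sq_mul_sq Finset.univ (fun j => M i j) v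
  calc ∑ i, (M.mulVec v i) ^ 2 ≤ ∑ i, (∑ j, (M i j) ^ 2) * ∑ j, (v j) ^ 2 :=
        Finset.sum_le_sum fun i _ => h i
    _ = fsq M * ∑ j, (v j) ^ 2 := by rw [fsq, ← Finset.sum_mul]



/-- embed a plain vector into Euclidean space -/
noncomputable def eu {k : ℕ} (v : Fin k → ℝ) : EuclideanSpace ℝ (Fin k) :=
  (WithLp.equiv 2 (Fin k → ℝ)).symm v

lemma norm_eu {k : ℕ} (v : Fin k → ℝ) : ‖eu v‖ = Real.sqrt (∑ i, (v i) ^ 2) := by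
  rw [EuclideanSpace.norm_eq]
  congr 1
  refine Finset.sum_congr rfl fun i _ => ?_
  rw [Real.norm_eq_abs, sq_abs]
  rfl

lemma toCLM_apply {a b : ℕ} (M : Matrix (Fin a) (Fin b) ℝ) (v : Fin b → ℝ) :
    (LinearMap.toContinuousLinearMap (Matrix.toEuclideanLin M)) (eu v) = eu (M.mulVec v) := by
  simp [eu, Matrix.toEuclideanLin_apply, LinearMap.coe_toContinuousLinearMap']

lemma opNorm_nonneg' {a b : ℕ} (M : Matrix (Fin a) (Fin b) ℝ) : 0 ≤ opNorm M :=
  norm_nonneg _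

lemma sqrt_sum_sq_mulVec_le {a b : ℕ} (M : Matrix (Fin a) (Fin b) ℝ) (v : Fin b → ℝ) :
    Real.sqrt (∑ i, (M.mulVec v i) ^ 2) ≤ opNorm M * Real.sqrt (∑ j, (v j) ^ 2) := by
  have := (LinearMap.toContinuousLinearMap (Matrix.toEuclideanLin M)).le_opNorm (eu v)
  rwa [toCLM_apply, norm_eu, norm_eu] at this

lemma opNorm_le_of_bound {a b : ℕ} (M : Matrix (Fin a) (Fin b) ℝ) {c : ℝ} (hc : 0 ≤ c)
    (h : ∀ v : Fin b → ℝ, Real.sqrt (∑ i, (M.mulVec v i) ^ 2) ≤ c * Real.sqrt (∑ j, (v j) ^ 2)) :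
    opNorm M ≤ c := by
  refine ContinuousLinearMap.opNorm_le_bound _ hc fun x => ?_
  have hx : x = eu ((WithLp.equiv 2 (Fin b → ℝ)) x) := rfl
  rw [hx, toCLM_apply, norm_eu, norm_eu]
  exact h _

lemma abs_entry_le_opNorm {a b : ℕ} (M : Matrix (Fin a) (Fin b) ℝ) (i j) :
    |M i j| ≤ opNorm M := by
  have h := sqrt_sum_sq_mulVec_le M (Pi.single j 1)
  have hv : ∑ j', ((Pi.single j 1 : Fin b → ℝ) j') ^ 2 = 1 := by
    simp [Pi.single_apply, Finset.sum_ite_eq']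
  rw [hv, Real.sqrt_one, mul_one] at h
  have h2 : |M i j| ≤ Real.sqrt (∑ i', (M.mulVec (Pi.single j 1) i') ^ 2) := by
    have : (M i j) ^ 2 ≤ ∑ i', (M.mulVec (Pi.single j 1) i') ^ 2 := by
      have hmv : ∀ i', M.mulVec (Pi.single j (1:ℝ)) i' = M i' j := by
        intro i'; simp [Matrix.mulVec_single]
      calc (M i j) ^ 2 = (M.mulVec (Pi.single j 1) i) ^ 2 := by rw [hmv]
        _ ≤ ∑ i', (M.mulVec (Pi.single j 1) i') ^ 2 :=
          Finset.single_le_sum (f := fun i' => (M.mulVec (Pi.single j 1) i') ^ 2)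
            (fun _ _ => sq_nonneg _) (Finset.mem_univ i)
    calc |M i j| = Real.sqrt ((M i j) ^ 2) := (Real.sqrt_sq_eq_abs _).symm
      _ ≤ _ := Real.sqrt_le_sqrt this
  exact h2.trans h



variable {k : ℕ}

lemma star_id (v : Fin k → ℝ) : star v = v := rfl

lemma psd_iff (Z : Matrix (Fin k) (Fin k) ℝ) :
    Z.PosSemidef ↔ Z.IsHermitian ∧ ∀ v : Fin k → ℝ, 0 ≤ v ⬝ᵥ Z.mulVec v := by
  rw [Matrix.posSemidef_iff_dotProduct_mulVec]
  simp [star_id]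

open scoped MatrixOrder in
lemma psd_exists_ctm {Z : Matrix (Fin k) (Fin k) ℝ} (h : Z.PosSemidef) :
    ∃ B : Matrix (Fin k) (Fin k) ℝ, Z = Bᴴ * B := by
  have h0 : 0 ≤ Z := h.nonneg
  obtain ⟨X, hX, -, hXX⟩ := CFC.exists_sqrt_of_isSelfAdjoint_of_quasispectrumRestricts
    (A := Matrix (Fin k) (Fin k) ℝ) h.isHermitian (QuasispectrumRestricts.nnreal_of_nonneg h0)
  refine ⟨X, ?_⟩
  rw [← hXX, show Xᴴ = X from hX.star_eq]

lemma issymm_of_hermitian {Z : Matrix (Fin k) (Fin k) ℝ} (h : Z.IsHermitian) : Z.IsSymm := by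
  rwa [Matrix.IsHermitian, Matrix.conjTranspose_eq_transpose_of_trivial] at h

lemma hermitian_of_issymm {Z : Matrix (Fin k) (Fin k) ℝ} (h : Z.IsSymm) : Z.IsHermitian := by
  rwa [Matrix.IsHermitian, Matrix.conjTranspose_eq_transpose_of_trivial]

lemma psd_diag_nonneg {Z : Matrix (Fin k) (Fin k) ℝ} (h : Z.PosSemidef) (i : Fin k) :
    0 ≤ Z i i := by
  have := ((psd_iff Z).mp h).2 (Pi.single i 1)
  simpa [Matrix.mulVec_single, dotProduct, Pi.single_apply, Finset.sum_ite_eq'] using this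

lemma psd_trace_nonneg {Z : Matrix (Fin k) (Fin k) ℝ} (h : Z.PosSemidef) : 0 ≤ Z.trace := by
  refine Finset.sum_nonneg fun i _ => psd_diag_nonneg h i

lemma two_abs_entry_le {Z : Matrix (Fin k) (Fin k) ℝ} (h : Z.PosSemidef) (i j : Fin k) :
    2 * |Z i j| ≤ Z i i + Z j j := by
  rcases eq_or_ne i j with rfl | hij
  · have := psd_diag_nonneg h i
    rw [abs_of_nonneg this]; linarith
  have hsym : Z j i = Z i j := by
    have := issymm_of_hermitian ((psd_iff Z).mp h).1
    calc Z j i = Zᵀ i j := rfl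
      _ = Z i j := by rw [this]
  have key : ∀ c : ℝ, 0 ≤ Z i i + c * (Z i j + Z j i) + c^2 * Z j j := by
    intro c
    have := ((psd_iff Z).mp h).2 ((Pi.single i 1 : Fin k → ℝ) + c • (Pi.single j 1 : Fin k → ℝ))
    have hexp : ((Pi.single i 1 : Fin k → ℝ) + c • (Pi.single j 1 : Fin k → ℝ)) ⬝ᵥ
        Z.mulVec ((Pi.single i 1 : Fin k → ℝ) + c • (Pi.single j 1 : Fin k → ℝ))
        = Z i i + c * (Z i j + Z j i) + c^2 * Z j j := by
      simp only [Matrix.mulVec_add, Matrix.mulVec_smul, dotProduct_add,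
        add_dotProduct, smul_dotProduct, dotProduct_smul,
        Matrix.mulVec_single]
      simp [dotProduct, Pi.single_apply, Finset.sum_ite_eq', mul_comm, hij]
      ring
    rw [hexp] at this; exact this
  have h1 := key 1
  have h2 := key (-1)
  rw [hsym] at h1 h2
  rcases le_or_gt 0 (Z i j) with hpos | hneg
  · rw [abs_of_nonneg hpos]; nlinarith
  · rw [abs_of_neg hneg]; nlinarith

lemma abs_entry_le_trace {Z : Matrix (Fin k) (Fin k) ℝ} (h : Z.PosSemidef) (i j : Fin k) :
    |Z i j| ≤ Z.trace := by
  have h1 := two_abs_entry_le h i j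
  have h2 : Z i i + Z j j ≤ 2 * Z.trace := by
    rcases eq_or_ne i j with rfl | hij
    · have : Z i i ≤ Z.trace := by
        refine Finset.single_le_sum (f := fun i' => Z i' i') (fun i' _ => psd_diag_nonneg h i')
          (Finset.mem_univ i)
      linarith
    · have : Z i i + Z j j ≤ Z.trace := by
        rw [Matrix.trace]
        have := Finset.add_sum_erase Finset.univ (fun i' => Z.diag i') (Finset.mem_univ i)
        calc Z i i + Z j j ≤ Z i i + ∑ x ∈ Finset.univ.erase i, Z.diag x := by
              have hj : Z j j ≤ ∑ x ∈ Finset.univ.erase i, Z.diag x :=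
                Finset.single_le_sum (f := fun i' => Z.diag i')
                  (fun i' _ => psd_diag_nonneg h i')
                  (Finset.mem_erase.mpr ⟨hij.symm, Finset.mem_univ j⟩)
              linarith
          _ = ∑ i', Z.diag i' := this
      have htr : 0 ≤ Z.trace := psd_trace_nonneg h
      linarith
  linarith

/-- quadratic form bounded by trace times norm squared -/
lemma quadform_le_trace {Z : Matrix (Fin k) (Fin k) ℝ} (h : Z.PosSemidef) (v : Fin k → ℝ) :
    v ⬝ᵥ Z.mulVec v ≤ Z.trace * ∑ i, (v i) ^ 2 := by
  obtain ⟨B, rfl⟩ := psd_exists_ctm h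
  have hform : v ⬝ᵥ (Bᴴ * B).mulVec v = ∑ i, (B.mulVec v i) ^ 2 := by
    rw [← Matrix.mulVec_mulVec, dotProduct_mulVec]
    have : Matrix.vecMul v Bᴴ = B.mulVec v := by
      ext i
      simp [Matrix.vecMul, Matrix.mulVec, dotProduct, Matrix.conjTranspose_apply,
        mul_comm]
    rw [this]
    simp [dotProduct, sq]
  have htr : (Bᴴ * B).trace = fsq B := by
    simp [Matrix.trace, Matrix.diag, Matrix.mul_apply, Matrix.conjTranspose_apply, fsq, sq]
    rw [Finset.sum_comm]
  rw [hform, htr]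
  exact sum_sq_mulVec_le B v

lemma trace_mul_nonneg {P Z : Matrix (Fin k) (Fin k) ℝ} (hP : P.PosSemidef)
    (hZ : Z.PosSemidef) : 0 ≤ (P * Z).trace := by
  obtain ⟨B, rfl⟩ := psd_exists_ctm hP
  have : (Bᴴ * B * Z).trace = (B * Z * Bᴴ).trace := by
    rw [Matrix.mul_assoc, Matrix.trace_mul_comm, Matrix.mul_assoc]
  rw [this]
  exact psd_trace_nonneg (hZ.mul_mul_conjTranspose_same B)

lemma trace_mul_le {P Z : Matrix (Fin k) (Fin k) ℝ} (hP : P.PosSemidef)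
    (hZ : Z.PosSemidef) : (P * Z).trace ≤ P.trace * Z.trace := by
  obtain ⟨B, rfl⟩ := psd_exists_ctm hP
  have h1 : (Bᴴ * B * Z).trace = (B * Z * Bᴴ).trace := by
    rw [Matrix.mul_assoc, Matrix.trace_mul_comm, Matrix.mul_assoc]
  have htr : (Bᴴ * B).trace = fsq B := by
    simp [Matrix.trace, Matrix.diag, Matrix.mul_apply, Matrix.conjTranspose_apply, fsq, sq]
    rw [Finset.sum_comm]
  rw [h1, htr]
  have hdiag : ∀ i, (B * Z * Bᴴ) i i = (fun j => B i j) ⬝ᵥ Z.mulVec (fun j => B i j) := by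
    intro i
    simp only [Matrix.mul_apply, dotProduct, Matrix.mulVec, Matrix.conjTranspose_apply,
      Finset.mul_sum, Finset.sum_mul, star_trivial]
    rw [Finset.sum_comm]
    refine Finset.sum_congr rfl fun a _ => Finset.sum_congr rfl fun b _ => by ring
  calc (B * Z * Bᴴ).trace = ∑ i, (fun j => B i j) ⬝ᵥ Z.mulVec (fun j => B i j) := by
        rw [Matrix.trace]; exact Finset.sum_congr rfl fun i _ => hdiag i
    _ ≤ ∑ i, Z.trace * ∑ j, (B i j) ^ 2 :=
        Finset.sum_le_sum fun i _ => quadform_le_trace hZ _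
    _ = fsq B * Z.trace := by rw [← Finset.mul_sum, fsq, mul_comm]



lemma dotProduct_self_eq (v : Fin k → ℝ) : v ⬝ᵥ v = ∑ i, (v i) ^ 2 := by
  simp [dotProduct, sq]

lemma quadform_smul_one (c : ℝ) (v : Fin k → ℝ) :
    v ⬝ᵥ (c • (1 : Matrix (Fin k) (Fin k) ℝ)).mulVec v = c * ∑ i, (v i) ^ 2 := by
  rw [Matrix.smul_mulVec, Matrix.one_mulVec, dotProduct_smul,
    dotProduct_self_eq]
  rfl

lemma sym_dot {X : Matrix (Fin k) (Fin k) ℝ} (hX : X.IsSymm) (u w : Fin k → ℝ) :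
    u ⬝ᵥ X.mulVec w = w ⬝ᵥ X.mulVec u := by
  have hab : ∀ a b, X a b = X b a := fun a b => (congrFun (congrFun hX a) b).symm
  simp only [dotProduct, Matrix.mulVec, Finset.mul_sum]
  rw [Finset.sum_comm]
  refine Finset.sum_congr rfl fun a _ => Finset.sum_congr rfl fun b _ => ?_
  rw [hab b a]; ring

lemma abs_quadform_le_opNorm (X : Matrix (Fin k) (Fin k) ℝ) (v : Fin k → ℝ) :
    |v ⬝ᵥ X.mulVec v| ≤ opNorm X * ∑ i, (v i) ^ 2 := by
  have hcs : (v ⬝ᵥ X.mulVec v) ^ 2 ≤ (∑ i, (v i) ^ 2) * ∑ i, (X.mulVec v i) ^ 2 := by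
    simpa [dotProduct] using
      Finset.sum_mul_sq_le_sq_mul_sq Finset.univ v (X.mulVec v)
  have h1 : |v ⬝ᵥ X.mulVec v| ≤ Real.sqrt (∑ i, (v i) ^ 2) * Real.sqrt (∑ i, (X.mulVec v i) ^ 2) := by
    rw [← Real.sqrt_mul_self (abs_nonneg _), ← Real.sqrt_mul (Finset.sum_nonneg fun i _ => sq_nonneg _)]
    · rw [abs_mul_abs_self] at *
      refine Real.sqrt_le_sqrt ?_
      rw [← sq]; exact hcs
  have h2 := sqrt_sum_sq_mulVec_le X v
  calc |v ⬝ᵥ X.mulVec v| ≤ Real.sqrt (∑ i, (v i) ^ 2) * Real.sqrt (∑ i, (X.mulVec v i) ^ 2) := h1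
    _ ≤ Real.sqrt (∑ i, (v i) ^ 2) * (opNorm X * Real.sqrt (∑ i, (v i) ^ 2)) := by
        exact mul_le_mul_of_nonneg_left h2 (Real.sqrt_nonneg _)
    _ = opNorm X * (Real.sqrt (∑ i, (v i) ^ 2) * Real.sqrt (∑ i, (v i) ^ 2)) := by ring
    _ = opNorm X * ∑ i, (v i) ^ 2 := by
        rw [Real.mul_self_sqrt (Finset.sum_nonneg fun i _ => sq_nonneg _)]

/-- For symmetric `Y`, `‖Y‖·I − Y` and `‖Y‖·I + Y` are PSD. -/
lemma opNorm_smul_one_sub_psd {Y : Matrix (Fin k) (Fin k) ℝ} (hY : Y.IsSymm) :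
    ((opNorm Y) • (1 : Matrix (Fin k) (Fin k) ℝ) - Y).PosSemidef ∧
    ((opNorm Y) • (1 : Matrix (Fin k) (Fin k) ℝ) + Y).PosSemidef := by
  have herm1 : ((opNorm Y) • (1 : Matrix (Fin k) (Fin k) ℝ)).IsHermitian := by
    refine hermitian_of_issymm ?_
    simp [Matrix.IsSymm, Matrix.transpose_smul]
  have hermY := hermitian_of_issymm hY
  have key : ∀ v : Fin k → ℝ, |v ⬝ᵥ Y.mulVec v| ≤ opNorm Y * ∑ i, (v i) ^ 2 :=
    fun v => abs_quadform_le_opNorm Y v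
  constructor
  · refine (psd_iff _).mpr ⟨herm1.sub hermY, fun v => ?_⟩
    rw [Matrix.sub_mulVec, dotProduct_sub, quadform_smul_one]
    have := (abs_le.mp (key v)).2; linarith
  · refine (psd_iff _).mpr ⟨herm1.add hermY, fun v => ?_⟩
    rw [Matrix.add_mulVec, dotProduct_add, quadform_smul_one]
    have := (abs_le.mp (key v)).1; linarith

/-- Sandwich bound: if `D - X` and `D + X` are PSD and `X` is symmetric then
`opNorm X ≤ trace D`. -/
lemma opNorm_le_trace_of_sandwich {X D : Matrix (Fin k) (Fin k) ℝ} (hX : X.IsSymm)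
    (h1 : (D - X).PosSemidef) (h2 : (D + X).PosSemidef) : opNorm X ≤ D.trace := by
  have htrD : 0 ≤ D.trace := by
    have ha := psd_trace_nonneg h1
    have hb := psd_trace_nonneg h2
    rw [Matrix.trace_sub] at ha
    rw [Matrix.trace_add] at hb
    linarith
  -- |q_X(v)| ≤ trace D * ∑ v²
  have hq : ∀ v : Fin k → ℝ, |v ⬝ᵥ X.mulVec v| ≤ D.trace * ∑ i, (v i) ^ 2 := by
    intro v
    have e1 : v ⬝ᵥ (D - X).mulVec v = v ⬝ᵥ D.mulVec v - v ⬝ᵥ X.mulVec v := by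
      rw [Matrix.sub_mulVec, dotProduct_sub]
    have e2 : v ⬝ᵥ (D + X).mulVec v = v ⬝ᵥ D.mulVec v + v ⬝ᵥ X.mulVec v := by
      rw [Matrix.add_mulVec, dotProduct_add]
    have p1 := ((psd_iff _).mp h1).2 v
    have p2 := ((psd_iff _).mp h2).2 v
    have q1 := quadform_le_trace h1 v
    have q2 := quadform_le_trace h2 v
    rw [e1] at p1 q1
    rw [e2] at p2 q2
    rw [Matrix.trace_sub] at q1
    rw [Matrix.trace_add] at q2
    rw [abs_le]
    constructor <;> nlinarith
  -- polarization: bilinear bound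
  have hbil : ∀ u w : Fin k → ℝ,
      u ⬝ᵥ X.mulVec w ≤ D.trace * (∑ i, (u i) ^ 2 + ∑ i, (w i) ^ 2) / 2 := by
    intro u w
    have hplus := (abs_le.mp (hq (u + w))).2
    have hminus := (abs_le.mp (hq (u - w))).1
    have eplus : (u + w) ⬝ᵥ X.mulVec (u + w)
        = u ⬝ᵥ X.mulVec u + w ⬝ᵥ X.mulVec w + 2 * (u ⬝ᵥ X.mulVec w) := by
      rw [Matrix.mulVec_add, dotProduct_add, add_dotProduct,
        add_dotProduct]
      rw [sym_dot hX w u]; ring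
    have eminus : (u - w) ⬝ᵥ X.mulVec (u - w)
        = u ⬝ᵥ X.mulVec u + w ⬝ᵥ X.mulVec w - 2 * (u ⬝ᵥ X.mulVec w) := by
      rw [Matrix.mulVec_sub, dotProduct_sub, sub_dotProduct,
        sub_dotProduct]
      rw [sym_dot hX w u]; ring
    have esum : ∀ i, ((u + w) i) ^ 2 = (u i) ^ 2 + 2 * u i * w i + (w i) ^ 2 := by
      intro i; simp [Pi.add_apply]; ring
    have esum2 : ∀ i, ((u - w) i) ^ 2 = (u i) ^ 2 - 2 * u i * w i + (w i) ^ 2 := by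
      intro i; simp [Pi.sub_apply]; ring
    have s1 : ∑ i, ((u + w) i) ^ 2 = ∑ i, (u i) ^ 2 + 2 * ∑ i, u i * w i + ∑ i, (w i) ^ 2 := by
      simp_rw [esum]
      rw [Finset.sum_add_distrib, Finset.sum_add_distrib, Finset.mul_sum]
      ring_nf
    have s2 : ∑ i, ((u - w) i) ^ 2 = ∑ i, (u i) ^ 2 - 2 * ∑ i, u i * w i + ∑ i, (w i) ^ 2 := by
      simp_rw [esum2]
      rw [Finset.sum_add_distrib, Finset.sum_sub_distrib, Finset.mul_sum]
      ring_nf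
    rw [eplus, s1] at hplus
    rw [eminus, s2] at hminus
    nlinarith
  refine opNorm_le_of_bound X htrD fun v => ?_
  set s := ∑ i, (X.mulVec v i) ^ 2 with hs
  set r := ∑ i, (v i) ^ 2 with hr
  have hs0 : 0 ≤ s := Finset.sum_nonneg fun i _ => sq_nonneg _
  have hr0 : 0 ≤ r := Finset.sum_nonneg fun i _ => sq_nonneg _
  rcases eq_or_lt_of_le hs0 with hseq | hslt
  · rw [← hseq, Real.sqrt_zero]
    exact mul_nonneg htrD (Real.sqrt_nonneg _)
  · have hrpos : 0 < r := by
      rcases eq_or_lt_of_le hr0 with hreq | h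
      · exfalso
        have hv : ∀ i, v i = 0 := by
          intro i
          have := Finset.sum_eq_zero_iff_of_nonneg (fun i (_ : i ∈ Finset.univ) => sq_nonneg (v i))
          rw [← hr, ← hreq] at this
          have := (this.mp rfl) i (Finset.mem_univ i)
          exact pow_eq_zero_iff (n := 2) (by norm_num) |>.mp this
        have hXv : X.mulVec v = 0 := by
          ext i
          simp [Matrix.mulVec, dotProduct]
          refine Finset.sum_eq_zero fun j _ => by rw [hv j, mul_zero]
        rw [hs] at hslt
        simp [hXv] at hslt
      · exact h
    set c := Real.sqrt r / Real.sqrt s with hc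
    have hsqs : Real.sqrt s > 0 := Real.sqrt_pos.mpr hslt
    have hsqr : Real.sqrt r > 0 := Real.sqrt_pos.mpr hrpos
    have hw := hbil v (c • X.mulVec v)
    have e1 : v ⬝ᵥ X.mulVec (c • X.mulVec v) = c * s := by
      rw [sym_dot hX v (c • X.mulVec v), smul_dotProduct]
      rw [dotProduct_self_eq, ← hs]
      rfl
    have e2 : ∑ i, ((c • X.mulVec v) i) ^ 2 = c ^ 2 * s := by
      simp_rw [Pi.smul_apply, smul_eq_mul, mul_pow]
      rw [← Finset.mul_sum, ← hs]
    have e3 : c ^ 2 * s = r := by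
      rw [hc, div_pow, Real.sq_sqrt hr0, Real.sq_sqrt hs0]
      · field_simp
    rw [e1, e2, e3] at hw
    -- hw : c * s ≤ D.trace * (r + r) / 2 = D.trace * r
    have hw2 : c * s ≤ D.trace * r := by linarith
    have e4 : c * s = Real.sqrt r * Real.sqrt s := by
      calc c * s = Real.sqrt r * (s / Real.sqrt s) := by rw [hc]; ring
        _ = Real.sqrt r * Real.sqrt s := by rw [Real.div_sqrt]
    rw [e4] at hw2
    have e5 : D.trace * r = (D.trace * Real.sqrt r) * Real.sqrt r := by
      rw [mul_assoc, Real.mul_self_sqrt hr0]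
    rw [e5] at hw2
    have hw3 : Real.sqrt r * Real.sqrt s ≤ Real.sqrt r * (D.trace * Real.sqrt r) := by
      linarith [hw2, (by ring : (D.trace * Real.sqrt r) * Real.sqrt r = Real.sqrt r * (D.trace * Real.sqrt r))]
    exact le_of_mul_le_mul_left hw3 hsqr



/-- If `f ⫫ (g,h)` and `g ⫫ h` then `(f,g) ⫫ h`. -/
lemma indepFun_pair_of_indepFun {Ω α β γ : Type*} [MeasurableSpace Ω] [MeasurableSpace α]
    [MeasurableSpace β] [MeasurableSpace γ]
    (μ : Measure Ω) [IsProbabilityMeasure μ] {f : Ω → α} {g : Ω → β} {h : Ω → γ}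
    (hf : Measurable f) (hg : Measurable g) (hh : Measurable h)
    (h1 : IndepFun f (fun ω => (g ω, h ω)) μ) (h2 : IndepFun g h μ) :
    IndepFun (fun ω => (f ω, g ω)) h μ := by
  haveI i1 : IsProbabilityMeasure (μ.map f) := Measure.isProbabilityMeasure_map hf.aemeasurable
  haveI i2 : IsProbabilityMeasure (μ.map g) := Measure.isProbabilityMeasure_map hg.aemeasurable
  haveI i3 : IsProbabilityMeasure (μ.map h) := Measure.isProbabilityMeasure_map hh.aemeasurable
  rw [indepFun_iff_map_prod_eq_prod_map_map (hf.prodMk hg).aemeasurable hh.aemeasurable]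
  have e1 := (indepFun_iff_map_prod_eq_prod_map_map hf.aemeasurable
    ((hg.prodMk hh)).aemeasurable).mp h1
  have e2 := (indepFun_iff_map_prod_eq_prod_map_map hg.aemeasurable hh.aemeasurable).mp h2
  have e3 : IndepFun f g μ := by
    have := h1.comp (measurable_id (α := α)) (measurable_fst (α := β) (β := γ))
    exact this
  have e4 := (indepFun_iff_map_prod_eq_prod_map_map hf.aemeasurable hg.aemeasurable).mp e3
  have hcomp : (fun ω => ((f ω, g ω), h ω)) =
      (MeasurableEquiv.prodAssoc.symm) ∘ (fun ω => (f ω, (g ω, h ω))) := rfl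
  rw [hcomp, ← Measure.map_map MeasurableEquiv.prodAssoc.symm.measurable
    (hf.prodMk (hg.prodMk hh)), e1, e2, e4]
  have := Measure.prodAssoc_prod (μ := μ.map f) (ν := μ.map g) (τ := μ.map h)
  rw [← this, Measure.map_map MeasurableEquiv.prodAssoc.symm.measurable
    MeasurableEquiv.prodAssoc.measurable]
  simp

/-- From an i.i.d.-type family, the restriction to `Fin t` is independent of coordinate `t`. -/
lemma indepFun_restrict_eval {Ω E : Type*} [MeasurableSpace Ω] [MeasurableSpace E]
    {μ : Measure Ω} [IsProbabilityMeasure μ] {P : ℕ → Ω → E}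
    (hindep : iIndepFun P μ) (hP : ∀ t, Measurable (P t)) (t : ℕ) :
    IndepFun (fun ω => fun s : Fin t => P s ω) (P t) μ := by
  have hdisj : Disjoint (Finset.range t) ({t} : Finset ℕ) := by
    simp only [Finset.disjoint_left, Finset.mem_range, Finset.mem_singleton]
    exact fun a ha => Nat.ne_of_lt ha
  have h := hindep.indepFun_finset (Finset.range t) {t} hdisj hP
  have h1 : Measurable (fun (g : (i : (Finset.range t : Finset ℕ)) → E) =>
      fun s : Fin t => g ⟨(s : ℕ), Finset.mem_range.mpr s.isLt⟩) := by
    exact measurable_pi_lambda _ fun s => measurable_pi_apply _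
  have h2 : Measurable (fun (g : (i : ({t} : Finset ℕ)) → E) =>
      g ⟨t, Finset.mem_singleton_self t⟩) := measurable_pi_apply _
  exact h.comp h1 h2

section meas
variable {α : Type*} [MeasurableSpace α] {a b : ℕ}

lemma measurable_entry {f : α → Matrix (Fin a) (Fin b) ℝ} (hf : Measurable f) (i j) :
    Measurable (fun x => f x i j) :=
  (measurable_pi_apply j).comp ((measurable_pi_apply i).comp hf)

lemma measurable_of_entries {f : α → Matrix (Fin a) (Fin b) ℝ}
    (h : ∀ i j, Measurable fun x => f x i j) : Measurable f :=
  measurable_pi_lambda _ fun i => measurable_pi_lambda _ fun j => h i j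

lemma measurable_fsq : Measurable (fun M : Matrix (Fin a) (Fin b) ℝ => fsq M) := by
  refine Finset.measurable_sum _ fun i _ => Finset.measurable_sum _ fun j _ => ?_
  exact (measurable_entry measurable_id i j).pow_const 2

end meas

section psdextra
variable {k : ℕ}

lemma abs_mul_entry_le_fsq {a b : ℕ} (M : Matrix (Fin a) (Fin b) ℝ) (i j i' j') :
    |M i j * M i' j'| ≤ fsq M := by
  have h := sq_entry_le_fsq M i j
  have h' := sq_entry_le_fsq M i' j'
  have : |M i j * M i' j'| ≤ ((M i j) ^ 2 + (M i' j') ^ 2) / 2 := by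
    rw [abs_mul]; nlinarith [abs_nonneg (M i j), abs_nonneg (M i' j'), sq_abs (M i j),
      sq_abs (M i' j'), sq_nonneg (|M i j| - |M i' j'|)]
  linarith

lemma vecMulVec_psd (v : Fin k → ℝ) : (Matrix.vecMulVec v v).PosSemidef := by
  refine (psd_iff _).mpr ⟨hermitian_of_issymm ?_, fun w => ?_⟩
  · ext i j; simp [Matrix.vecMulVec_apply, Matrix.transpose_apply, mul_comm]
  · have : w ⬝ᵥ (Matrix.vecMulVec v v).mulVec w = (∑ i, w i * v i) ^ 2 := by
      simp only [dotProduct, Matrix.mulVec, Matrix.vecMulVec_apply, sq,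
        Finset.mul_sum, Finset.sum_mul]
      rw [Finset.sum_comm]
      refine Finset.sum_congr rfl fun i _ => Finset.sum_congr rfl fun j _ => by ring
    rw [this]; exact sq_nonneg _

lemma psd_smul_one {c : ℝ} (hc : 0 ≤ c) : (c • (1 : Matrix (Fin k) (Fin k) ℝ)).PosSemidef := by
  refine (psd_iff _).mpr ⟨hermitian_of_issymm (by simp [Matrix.IsSymm]), fun v => ?_⟩
  rw [quadform_smul_one]
  exact mul_nonneg hc (Finset.sum_nonneg fun i _ => sq_nonneg _)

lemma smul_one_sub_psd_of_trace {Z : Matrix (Fin k) (Fin k) ℝ} (hZ : Z.PosSemidef) {c : ℝ}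
    (hc : Z.trace ≤ c) : (c • (1 : Matrix (Fin k) (Fin k) ℝ) - Z).PosSemidef := by
  refine (psd_iff _).mpr ⟨?_, fun v => ?_⟩
  · exact (hermitian_of_issymm (by simp [Matrix.IsSymm])).sub hZ.1
  · rw [Matrix.sub_mulVec, dotProduct_sub, quadform_smul_one]
    have h1 := quadform_le_trace hZ v
    have h2 : Z.trace * ∑ i, (v i) ^ 2 ≤ c * ∑ i, (v i) ^ 2 :=
      mul_le_mul_of_nonneg_right hc (Finset.sum_nonneg fun i _ => sq_nonneg _)
    linarith

lemma trace_le_of_psd_sub {Z W : Matrix (Fin k) (Fin k) ℝ} (h : (W - Z).PosSemidef) :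
    Z.trace ≤ W.trace := by
  have := psd_trace_nonneg h
  rw [Matrix.trace_sub] at this
  linarith

end psdextra

section ematsec
variable {Ω : Type*} [MeasurableSpace Ω] {μ : Measure Ω} [IsProbabilityMeasure μ] {k : ℕ}
variable {f : Ω → Matrix (Fin k) (Fin k) ℝ}

lemma Emat_entry (i j : Fin k) : Emat μ f i j = ∫ ω, f ω i j ∂μ := rfl

lemma quadform_expand (M : Matrix (Fin k) (Fin k) ℝ) (v : Fin k → ℝ) :
    v ⬝ᵥ M.mulVec v = ∑ i, ∑ j, M i j * (v i * v j) := by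
  simp only [dotProduct, Matrix.mulVec, Finset.mul_sum]
  refine Finset.sum_congr rfl fun i _ => Finset.sum_congr rfl fun j _ => by ring

lemma Emat_quadform (hint : ∀ i j, Integrable (fun ω => f ω i j) μ) (v : Fin k → ℝ) :
    v ⬝ᵥ (Emat μ f).mulVec v = ∫ ω, v ⬝ᵥ (f ω).mulVec v ∂μ := by
  rw [quadform_expand]
  have : ∀ ω, v ⬝ᵥ (f ω).mulVec v = ∑ i, ∑ j, f ω i j * (v i * v j) :=
    fun ω => quadform_expand _ v
  simp_rw [this]
  rw [integral_finset_sum _ fun i _ => integrable_finset_sum _ fun j _ =>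
    (hint i j).mul_const _]
  refine Finset.sum_congr rfl fun i _ => ?_
  rw [integral_finset_sum _ fun j _ => (hint i j).mul_const _]
  refine Finset.sum_congr rfl fun j _ => ?_
  rw [Emat_entry, integral_mul_const]

lemma Emat_trace (hint : ∀ i j, Integrable (fun ω => f ω i j) μ) :
    (Emat μ f).trace = ∫ ω, (f ω).trace ∂μ := by
  have h1 : (Emat μ f).trace = ∑ i, ∫ ω, f ω i i ∂μ := rfl
  rw [h1, ← integral_finset_sum _ fun i _ => hint i i]
  refine integral_congr_ae (Filter.Eventually.of_forall fun ω => ?_)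
  simp [Matrix.trace, Matrix.diag]

lemma Emat_psd (hint : ∀ i j, Integrable (fun ω => f ω i j) μ)
    (hpsd : ∀ᵐ ω ∂μ, (f ω).PosSemidef) : (Emat μ f).PosSemidef := by
  refine (psd_iff _).mpr ⟨hermitian_of_issymm ?_, fun v => ?_⟩
  · ext i j
    show Emat μ f j i = Emat μ f i j
    rw [Emat_entry, Emat_entry]
    refine integral_congr_ae ?_
    filter_upwards [hpsd] with ω hω
    have := issymm_of_hermitian hω.1
    calc f ω j i = (f ω)ᵀ i j := rfl
      _ = f ω i j := by rw [this]
  · rw [Emat_quadform hint]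
    refine integral_nonneg_of_ae ?_
    filter_upwards [hpsd] with ω hω
    exact ((psd_iff _).mp hω).2 v

end ematsec

end AggAux

section Fop
variable {Ω : Type*} [MeasurableSpace Ω] (μ : Measure Ω) [IsProbabilityMeasure μ] {k : ℕ}
variable (Mr : Ω → Matrix (Fin k) (Fin k) ℝ)

noncomputable def Fop (Z : Matrix (Fin k) (Fin k) ℝ) : Matrix (Fin k) (Fin k) ℝ :=
  Emat μ (fun ω => Mr ω * Z * (Mr ω)ᵀ)

lemma conj_entry (M Z : Matrix (Fin k) (Fin k) ℝ) (i j : Fin k) :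
    (M * Z * Mᵀ) i j = ∑ a, ∑ b, M i a * Z a b * M j b := by
  simp only [Matrix.mul_apply, Matrix.transpose_apply, Finset.sum_mul]
  rw [Finset.sum_comm]

variable {Mr}

lemma Fop_term_integrable (hM : Measurable Mr)
    (hint : Integrable (fun ω => AggAux.fsq (Mr ω)) μ) (i a j b : Fin k) :
    Integrable (fun ω => Mr ω i a * Mr ω j b) μ := by
  refine Integrable.mono' hint ?_ ?_
  · exact ((AggAux.measurable_entry hM i a).mul
      (AggAux.measurable_entry hM j b)).aestronglyMeasurable
  · refine Filter.Eventually.of_forall fun ω => ?_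
    rw [Real.norm_eq_abs]
    exact AggAux.abs_mul_entry_le_fsq (Mr ω) i a j b

lemma Fop_entry_term_integrable (hM : Measurable Mr)
    (hint : Integrable (fun ω => AggAux.fsq (Mr ω)) μ) (Z : Matrix (Fin k) (Fin k) ℝ)
    (i a j b : Fin k) :
    Integrable (fun ω => Mr ω i a * Z a b * Mr ω j b) μ := by
  have h := (Fop_term_integrable μ hM hint i a j b).const_mul (Z a b)
  refine h.congr (Filter.Eventually.of_forall fun ω => by ring)

lemma Fop_entry_integrable (hM : Measurable Mr)
    (hint : Integrable (fun ω => AggAux.fsq (Mr ω)) μ) (Z : Matrix (Fin k) (Fin k) ℝ)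
    (i j : Fin k) : Integrable (fun ω => (Mr ω * Z * (Mr ω)ᵀ) i j) μ := by
  have : (fun ω => (Mr ω * Z * (Mr ω)ᵀ) i j)
      = fun ω => ∑ a, ∑ b, Mr ω i a * Z a b * Mr ω j b := by
    funext ω; exact conj_entry _ _ _ _
  rw [this]
  exact integrable_finset_sum _ fun a _ => integrable_finset_sum _ fun b _ =>
    Fop_entry_term_integrable μ hM hint Z i a j b

lemma Fop_entry (hM : Measurable Mr) (hint : Integrable (fun ω => AggAux.fsq (Mr ω)) μ)
    (Z : Matrix (Fin k) (Fin k) ℝ) (i j : Fin k) :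
    Fop μ Mr Z i j = ∑ a, ∑ b, Z a b * ∫ ω, Mr ω i a * Mr ω j b ∂μ := by
  have h0 : Fop μ Mr Z i j = ∫ ω, (Mr ω * Z * (Mr ω)ᵀ) i j ∂μ := rfl
  rw [h0]
  have : (fun ω => (Mr ω * Z * (Mr ω)ᵀ) i j)
      = fun ω => ∑ a, ∑ b, Mr ω i a * Z a b * Mr ω j b := by
    funext ω; exact conj_entry _ _ _ _
  rw [this, integral_finset_sum _ fun a _ => integrable_finset_sum _ fun b _ =>
    Fop_entry_term_integrable μ hM hint Z i a j b]
  refine Finset.sum_congr rfl fun a _ => ?_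
  rw [integral_finset_sum _ fun b _ => Fop_entry_term_integrable μ hM hint Z i a j b]
  refine Finset.sum_congr rfl fun b _ => ?_
  rw [← MeasureTheory.integral_const_mul]
  refine integral_congr_ae (Filter.Eventually.of_forall fun ω => by ring)

lemma Fop_add (hM : Measurable Mr) (hint : Integrable (fun ω => AggAux.fsq (Mr ω)) μ)
    (Z W : Matrix (Fin k) (Fin k) ℝ) :
    Fop μ Mr (Z + W) = Fop μ Mr Z + Fop μ Mr W := by
  ext i j
  show Fop μ Mr (Z + W) i j = Fop μ Mr Z i j + Fop μ Mr W i j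
  rw [Fop_entry μ hM hint, Fop_entry μ hM hint, Fop_entry μ hM hint,
    ← Finset.sum_add_distrib]
  refine Finset.sum_congr rfl fun a _ => ?_
  rw [← Finset.sum_add_distrib]
  refine Finset.sum_congr rfl fun b _ => ?_
  rw [Matrix.add_apply]; ring

lemma Fop_smul (hM : Measurable Mr) (hint : Integrable (fun ω => AggAux.fsq (Mr ω)) μ)
    (c : ℝ) (Z : Matrix (Fin k) (Fin k) ℝ) :
    Fop μ Mr (c • Z) = c • Fop μ Mr Z := by
  ext i j
  show Fop μ Mr (c • Z) i j = c * Fop μ Mr Z i j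
  rw [Fop_entry μ hM hint, Fop_entry μ hM hint, Finset.mul_sum]
  refine Finset.sum_congr rfl fun a _ => ?_
  rw [Finset.mul_sum]
  refine Finset.sum_congr rfl fun b _ => ?_
  rw [Matrix.smul_apply, smul_eq_mul]; ring

lemma Fop_sub (hM : Measurable Mr) (hint : Integrable (fun ω => AggAux.fsq (Mr ω)) μ)
    (Z W : Matrix (Fin k) (Fin k) ℝ) :
    Fop μ Mr (Z - W) = Fop μ Mr Z - Fop μ Mr W := by
  have h := Fop_add μ hM hint (Z - W) W
  rw [sub_add_cancel] at h
  rw [h]; abel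

lemma Fop_psd (hM : Measurable Mr) (hint : Integrable (fun ω => AggAux.fsq (Mr ω)) μ)
    {Z : Matrix (Fin k) (Fin k) ℝ} (hZ : Z.PosSemidef) : (Fop μ Mr Z).PosSemidef := by
  refine AggAux.Emat_psd (fun i j => Fop_entry_integrable μ hM hint Z i j) ?_
  refine Filter.Eventually.of_forall fun ω => ?_
  have := hZ.mul_mul_conjTranspose_same (Mr ω)
  rwa [Matrix.conjTranspose_eq_transpose_of_trivial] at this

end Fop
namespace AggAux

lemma fsq_sub_le {a b : ℕ} (M N : Matrix (Fin a) (Fin b) ℝ) :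
    fsq (M - N) ≤ 2 * fsq M + 2 * fsq N := by
  have h : ∀ i j, ((M - N) i j) ^ 2 ≤ 2 * (M i j) ^ 2 + 2 * (N i j) ^ 2 := by
    intro i j
    rw [Matrix.sub_apply]
    nlinarith [sq_nonneg (M i j + N i j)]
  calc fsq (M - N) ≤ ∑ i, ∑ j, (2 * (M i j) ^ 2 + 2 * (N i j) ^ 2) :=
        Finset.sum_le_sum fun i _ => Finset.sum_le_sum fun j _ => h i j
    _ = 2 * fsq M + 2 * fsq N := by
        simp only [Finset.sum_add_distrib, ← Finset.mul_sum, fsq]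

lemma fsq_mul_le {a b c : ℕ} (M : Matrix (Fin a) (Fin b) ℝ) (N : Matrix (Fin b) (Fin c) ℝ) :
    fsq (M * N) ≤ fsq M * fsq N := by
  have h : ∀ i j, ((M * N) i j) ^ 2 ≤ (∑ q, (M i q) ^ 2) * ∑ q, (N q j) ^ 2 := by
    intro i j
    rw [Matrix.mul_apply]
    exact Finset.sum_mul_sq_le_sq_mul_sq Finset.univ (fun q => M i q) (fun q => N q j)
  calc fsq (M * N) ≤ ∑ i, ∑ j, (∑ q, (M i q) ^ 2) * ∑ q, (N q j) ^ 2 :=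
        Finset.sum_le_sum fun i _ => Finset.sum_le_sum fun j _ => h i j
    _ = fsq M * fsq N := by
        rw [fsq, fsq, Finset.sum_mul]
        refine Finset.sum_congr rfl fun i _ => ?_
        rw [← Finset.mul_sum]
        congr 1
        rw [Finset.sum_comm]

lemma fsq_le_card_opNorm {a b : ℕ} (M : Matrix (Fin a) (Fin b) ℝ) :
    fsq M ≤ (a * b : ℕ) * opNorm M ^ 2 := by
  have h : ∀ i j, (M i j) ^ 2 ≤ opNorm M ^ 2 := by
    intro i j
    have := abs_entry_le_opNorm M i j
    nlinarith [abs_nonneg (M i j), sq_abs (M i j)]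
  calc fsq M ≤ ∑ _i : Fin a, ∑ _j : Fin b, opNorm M ^ 2 :=
        Finset.sum_le_sum fun i _ => Finset.sum_le_sum fun j _ => h i j
    _ = (a * b : ℕ) * opNorm M ^ 2 := by
        simp only [Finset.sum_const, Finset.card_univ, Fintype.card_fin, nsmul_eq_mul]
        push_cast
        ring

end AggAux
namespace AggAux
lemma measurable_mulVec {α : Type*} [MeasurableSpace α] {k l : ℕ}
    {f : α → Matrix (Fin k) (Fin l) ℝ} {v : α → Fin l → ℝ}
    (hf : Measurable f) (hv : Measurable v) :
    Measurable fun x => (f x).mulVec (v x) := by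
  refine measurable_pi_lambda _ fun i => ?_
  have : (fun x => (f x).mulVec (v x) i) = fun x => ∑ j, f x i j * v x j := by
    funext x; rfl
  rw [this]
  exact Finset.measurable_sum _ fun j _ =>
    (measurable_entry hf i j).mul ((measurable_pi_apply j).comp hv)
end AggAux
namespace AggAux
lemma entry_sum_eq_trace {k : ℕ} {N S : Matrix (Fin k) (Fin k) ℝ} (hS : S.IsSymm) :
    ∑ i, ∑ j, N i j * S i j = (N * S).trace := by
  have hab : ∀ a b, S a b = S b a := fun a b => (congrFun (congrFun hS a) b).symm
  rw [Matrix.trace]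
  simp only [Matrix.diag, Matrix.mul_apply]
  refine Finset.sum_congr rfl fun i _ => Finset.sum_congr rfl fun j _ => ?_
  rw [hab i j]
end AggAux
namespace AggAux
variable {k : ℕ}

lemma matrix_summable {f : ℕ → Matrix (Fin k) (Fin k) ℝ}
    (h : ∀ i j, Summable fun t => f t i j) : Summable f := by
  rw [show Summable f ↔ _ from Pi.summable]
  intro i
  rw [show _ ↔ _ from Pi.summable]
  exact fun j => h i j

lemma matrix_tsum_apply {f : ℕ → Matrix (Fin k) (Fin k) ℝ} (hf : Summable f) (i j : Fin k) :
    (∑' t, f t) i j = ∑' t, f t i j := by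
  have h1 : (∑' t, f t) i = ∑' t, f t i := tsum_apply hf
  rw [h1]
  exact tsum_apply (Pi.summable.mp hf i)

lemma trace_of_tsum {f : ℕ → Matrix (Fin k) (Fin k) ℝ}
    (h : ∀ i j, Summable fun t => f t i j) :
    (Matrix.of fun i j => ∑' t, f t i j).trace = ∑' t, (f t).trace := by
  have h1 : (Matrix.of fun i j => ∑' t, f t i j).trace = ∑ i, ∑' t, f t i i := rfl
  rw [h1, ← Summable.tsum_finsetSum (fun i _ => h i i)]
  rfl

lemma psd_tsum {f : ℕ → Matrix (Fin k) (Fin k) ℝ} (hpsd : ∀ t, (f t).PosSemidef)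
    (hsum : ∀ i j, Summable fun t => f t i j) :
    (Matrix.of fun i j => ∑' t, f t i j).PosSemidef := by
  refine (psd_iff _).mpr ⟨hermitian_of_issymm ?_, fun v => ?_⟩
  · ext i j
    show (∑' t, f t j i) = ∑' t, f t i j
    refine tsum_congr fun t => ?_
    have hs := issymm_of_hermitian (hpsd t).1
    calc f t j i = (f t)ᵀ i j := rfl
      _ = f t i j := by rw [hs]
  · rw [quadform_expand]
    have h1 : ∀ i j, (Matrix.of fun i j => ∑' t, f t i j) i j * (v i * v j)
        = ∑' t, f t i j * (v i * v j) := by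
      intro i j
      show (∑' t, f t i j) * (v i * v j) = _
      rw [tsum_mul_right]
    have h2 : ∑ i, ∑ j, (Matrix.of fun i j => ∑' t, f t i j) i j * (v i * v j)
        = ∑' t, ∑ i, ∑ j, f t i j * (v i * v j) := by
      rw [Finset.sum_congr rfl fun i _ => Finset.sum_congr rfl fun j _ => h1 i j]
      have hinner : ∀ i, ∑ j, ∑' t, f t i j * (v i * v j)
          = ∑' t, ∑ j, f t i j * (v i * v j) :=
        fun i => (Summable.tsum_finsetSum (fun j _ => (hsum i j).mul_right _)).symm
      rw [Finset.sum_congr rfl fun i _ => hinner i]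
      exact (Summable.tsum_finsetSum (fun i _ => summable_sum fun j _ => (hsum i j).mul_right _)).symm
    rw [h2]
    refine tsum_nonneg fun t => ?_
    rw [← quadform_expand]
    exact ((psd_iff _).mp (hpsd t)).2 v

end AggAux

set_option maxHeartbeats 1000000 in
/-- Norm bound for the aggregate operator `T_L = ∑_t F_L^t`:
`‖T_L‖ ≤ C(L)/(μ·σ_min(E[Q]))`. -/
theorem aggregate_operator_norm_bound
    {Ω : Type*} [MeasurableSpace Ω] (μ : Measure Ω) [IsProbabilityMeasure μ]
    (n m : ℕ)
    -- the i.i.d. random parameters of the LQ problem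
    (A : ℕ → Ω → Matrix (Fin n) (Fin n) ℝ) (B : ℕ → Ω → Matrix (Fin n) (Fin m) ℝ)
    (Qp : ℕ → Ω → Matrix (Fin n) (Fin n) ℝ) (Rp : ℕ → Ω → Matrix (Fin m) (Fin m) ℝ)
    (hAmeas : ∀ t, Measurable (A t)) (hBmeas : ∀ t, Measurable (B t))
    (hQmeas : ∀ t, Measurable (Qp t)) (hRmeas : ∀ t, Measurable (Rp t))
    (hiid : ∀ s t : ℕ,
      μ.map (fun ω => (A (s + 1) ω, B (s + 1) ω, Qp (s + 1) ω, Rp (s + 1) ω)) =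
      μ.map (fun ω => (A (t + 1) ω, B (t + 1) ω, Qp (t + 1) ω, Rp (t + 1) ω)))
    (hindep : iIndepFun
      (fun t ω => (A (t + 1) ω, B (t + 1) ω, Qp (t + 1) ω, Rp (t + 1) ω)) μ)
    -- the initial state, independent of the parameters
    (x0 : Ω → Fin n → ℝ) (hx0meas : Measurable x0)
    (hindep0 : IndepFun x0
      (fun ω => fun t : ℕ => (A (t + 1) ω, B (t + 1) ω, Qp (t + 1) ω, Rp (t + 1) ω)) μ)
    -- positive semidefinite weights
    (hpsd : ∀ t, ∀ᵐ ω ∂μ, (Qp (t + 1) ω).PosSemidef ∧ (Rp (t + 1) ω).PosSemidef)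
    -- finite second moments
    (hA2 : Integrable (fun ω => opNorm (A 1 ω) ^ 2) μ)
    (hB2 : Integrable (fun ω => opNorm (B 1 ω) ^ 2) μ)
    (hQ1 : Integrable (fun ω => opNorm (Qp 1 ω)) μ)
    (hR1 : Integrable (fun ω => opNorm (Rp 1 ω)) μ)
    (hx0L2 : Integrable (fun ω => ∑ i, (x0 ω i) ^ 2) μ)
    -- the closed-loop trajectory generated by an arbitrary feedback matrix
    (X : Matrix (Fin m) (Fin n) ℝ → ℕ → Ω → Fin n → ℝ)
    (hX0 : ∀ M ω, X M 0 ω = x0 ω)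
    (hXrec : ∀ M t ω,
      X M (t + 1) ω = (A (t + 1) ω - B (t + 1) ω * M).mulVec (X M t ω))
    -- the total expected cost of a feedback matrix
    (C : Matrix (Fin m) (Fin n) ℝ → ℝ)
    (hC : ∀ M, C M = ∑' t : ℕ, ∫ ω,
      (X M t ω) ⬝ᵥ ((Qp (t + 1) ω + Mᵀ * Rp (t + 1) ω * M).mulVec (X M t ω)) ∂μ)
    -- mean-square stabilization
    (Stab : Matrix (Fin m) (Fin n) ℝ → Prop)
    (hStabDef : ∀ M, Stab M ↔ Tendsto
      (fun t => ∫⁻ ω, ENNReal.ofReal (∑ i, (X M t ω i) ^ 2) ∂μ) atTop (nhds 0))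
    -- `qmin` is a positive lower bound for the eigenvalues of `E[Q]` (so `E[Q]` is PD)
    (qmin : ℝ) (hqmin : 0 < qmin)
    (hEQ : (Emat μ (fun ω => Qp 1 ω) - qmin • (1 : Matrix (Fin n) (Fin n) ℝ)).PosSemidef)
    -- `μ₀` is a positive lower bound for the eigenvalues of `Σ₀` (so `Σ₀` is PD)
    (μ₀ : ℝ) (hμ₀ : 0 < μ₀)
    (hS0 : ((Emat μ (fun ω => Matrix.vecMulVec (x0 ω) (x0 ω))) -
      μ₀ • (1 : Matrix (Fin n) (Fin n) ℝ)).PosSemidef)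
    (L : Matrix (Fin m) (Fin n) ℝ) (hstab : Stab L) :
    ∀ Y : Matrix (Fin n) (Fin n) ℝ, Y.IsSymm →
      opNorm (∑' t : ℕ,
          ((fun Z => Emat μ (fun ω =>
            (A 1 ω - B 1 ω * L) * Z * (A 1 ω - B 1 ω * L)ᵀ))^[t]) Y) ≤
        (C L / (μ₀ * qmin)) * opNorm Y := by
  classical
  intro Y hYsymm
  -- abbreviations
  set P : ℕ → Ω → (Matrix (Fin n) (Fin n) ℝ × Matrix (Fin n) (Fin m) ℝ ×
      Matrix (Fin n) (Fin n) ℝ × Matrix (Fin m) (Fin m) ℝ) :=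
    fun t ω => (A (t + 1) ω, B (t + 1) ω, Qp (t + 1) ω, Rp (t + 1) ω) with hPdef
  set mfun : (Matrix (Fin n) (Fin n) ℝ × Matrix (Fin n) (Fin m) ℝ ×
      Matrix (Fin n) (Fin n) ℝ × Matrix (Fin m) (Fin m) ℝ) → Matrix (Fin n) (Fin n) ℝ :=
    fun e => e.1 - e.2.1 * L with hmfundef
  set Mr : Ω → Matrix (Fin n) (Fin n) ℝ := fun ω => A 1 ω - B 1 ω * L with hMrdef
  have hFeq : (fun Z : Matrix (Fin n) (Fin n) ℝ => Emat μ (fun ω =>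
      (A 1 ω - B 1 ω * L) * Z * (A 1 ω - B 1 ω * L)ᵀ)) = Fop μ Mr := rfl
  rw [hFeq]
  set G := Fop μ Mr with hGdef
  -- measurability of the parameter process
  have hPmeas : ∀ t, Measurable (P t) := fun t =>
    (hAmeas (t + 1)).prodMk ((hBmeas (t + 1)).prodMk
      ((hQmeas (t + 1)).prodMk (hRmeas (t + 1))))
  have hmfunmeas : Measurable mfun := by
    refine AggAux.measurable_of_entries fun i j => ?_
    have : (fun e : (Matrix (Fin n) (Fin n) ℝ × Matrix (Fin n) (Fin m) ℝ ×
        Matrix (Fin n) (Fin n) ℝ × Matrix (Fin m) (Fin m) ℝ) => mfun e i j)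
        = fun e => e.1 i j - ∑ c, e.2.1 i c * L c j := by
      funext e
      simp [hmfundef, Matrix.sub_apply, Matrix.mul_apply]
    rw [this]
    exact (AggAux.measurable_entry measurable_fst i j).sub
      (Finset.measurable_sum _ fun c _ =>
        (AggAux.measurable_entry (measurable_snd.fst) i c).mul_const _)
  have hMrmeas : Measurable Mr := hmfunmeas.comp (hPmeas 0)
  -- integrability of the squared Frobenius norm of the closed-loop matrix
  have hMrfsq : Integrable (fun ω => AggAux.fsq (Mr ω)) μ := by
    have hbint : Integrable (fun ω => 2 * ((n * n : ℕ) * opNorm (A 1 ω) ^ 2) +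
        2 * (((n * m : ℕ) * opNorm (B 1 ω) ^ 2) * AggAux.fsq L)) μ := by
      exact (((hA2.const_mul _).const_mul 2).add
        (((hB2.const_mul _).mul_const _).const_mul 2))
    refine Integrable.mono' hbint
      ((AggAux.measurable_fsq.comp hMrmeas).aestronglyMeasurable) ?_
    refine Filter.Eventually.of_forall fun ω => ?_
    rw [Real.norm_eq_abs, abs_of_nonneg (AggAux.fsq_nonneg _)]
    have h1 : AggAux.fsq (Mr ω) ≤ 2 * AggAux.fsq (A 1 ω) + 2 * AggAux.fsq (B 1 ω * L) :=
      AggAux.fsq_sub_le _ _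
    have h2 : AggAux.fsq (B 1 ω * L) ≤ AggAux.fsq (B 1 ω) * AggAux.fsq L :=
      AggAux.fsq_mul_le _ _
    have h3 : AggAux.fsq (A 1 ω) ≤ (n * n : ℕ) * opNorm (A 1 ω) ^ 2 :=
      AggAux.fsq_le_card_opNorm _
    have h4 : AggAux.fsq (B 1 ω) ≤ (n * m : ℕ) * opNorm (B 1 ω) ^ 2 :=
      AggAux.fsq_le_card_opNorm _
    have h5 : AggAux.fsq (B 1 ω) * AggAux.fsq L ≤
        ((n * m : ℕ) * opNorm (B 1 ω) ^ 2) * AggAux.fsq L :=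
      mul_le_mul_of_nonneg_right h4 (AggAux.fsq_nonneg _)
    linarith
  -- trajectory: measurable representation in terms of (x0, P 0, ..., P (t-1))
  have hrep : ∀ t : ℕ, ∃ Φ : ((Fin n → ℝ) × (Fin t → (Matrix (Fin n) (Fin n) ℝ ×
      Matrix (Fin n) (Fin m) ℝ × Matrix (Fin n) (Fin n) ℝ × Matrix (Fin m) (Fin m) ℝ))) →
      (Fin n → ℝ), Measurable Φ ∧ ∀ ω, X L t ω = Φ (x0 ω, fun s : Fin t => P s ω) := by
    intro t
    induction t with
    | zero =>
      exact ⟨Prod.fst, measurable_fst, fun ω => hX0 L ω⟩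
    | succ t ih =>
      obtain ⟨Φ, hΦ, hΦeq⟩ := ih
      refine ⟨fun p => (mfun (p.2 ⟨t, Nat.lt_succ_self t⟩)).mulVec
        (Φ (p.1, fun s : Fin t => p.2 s.castSucc)), ?_, ?_⟩
      · exact AggAux.measurable_mulVec
          (hmfunmeas.comp ((measurable_pi_apply _).comp measurable_snd))
          (hΦ.comp (measurable_fst.prodMk (measurable_pi_lambda _ fun s =>
            (measurable_pi_apply (s.castSucc)).comp measurable_snd)))
      · intro ω
        rw [hXrec L t ω, hΦeq ω]
        rfl
  have hxmeas : ∀ t, Measurable (X L t) := by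
    intro t
    obtain ⟨Φ, hΦ, heq⟩ := hrep t
    have : X L t = fun ω => Φ (x0 ω, fun s : Fin t => P s ω) := funext heq
    rw [this]
    exact hΦ.comp (hx0meas.prodMk (measurable_pi_lambda _ fun s => hPmeas s))
  -- independence of the state from the future parameters
  have hIndepXP : ∀ t, IndepFun (X L t) (P t) μ := by
    intro t
    obtain ⟨Φ, hΦ, heq⟩ := hrep t
    have h1 : IndepFun x0 (fun ω => ((fun s : Fin t => P s ω), P t ω)) μ := by
      have hψ : Measurable (fun q : ℕ → (Matrix (Fin n) (Fin n) ℝ × Matrix (Fin n) (Fin m) ℝ ×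
          Matrix (Fin n) (Fin n) ℝ × Matrix (Fin m) (Fin m) ℝ) =>
          ((fun s : Fin t => q s), q t)) :=
        (measurable_pi_lambda _ fun s => measurable_pi_apply _).prodMk (measurable_pi_apply t)
      exact hindep0.comp measurable_id hψ
    have h2 : IndepFun (fun ω => fun s : Fin t => P s ω) (P t) μ :=
      AggAux.indepFun_restrict_eval hindep hPmeas t
    have h3 : IndepFun (fun ω => (x0 ω, fun s : Fin t => P s ω)) (P t) μ :=
      AggAux.indepFun_pair_of_indepFun μ hx0meas
        (measurable_pi_lambda _ fun s => hPmeas s) (hPmeas t) h1 h2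
    have h4 := h3.comp hΦ measurable_id
    have : X L t = fun ω => Φ (x0 ω, fun s : Fin t => P s ω) := funext heq
    rw [this]
    exact h4
  -- identical distribution transfer
  have transfer : ∀ (t : ℕ) (φ : (Matrix (Fin n) (Fin n) ℝ × Matrix (Fin n) (Fin m) ℝ ×
      Matrix (Fin n) (Fin n) ℝ × Matrix (Fin m) (Fin m) ℝ) → ℝ), Measurable φ →
      Integrable (fun ω => φ (P 0 ω)) μ →
      Integrable (fun ω => φ (P t ω)) μ ∧
        ∫ ω, φ (P t ω) ∂μ = ∫ ω, φ (P 0 ω) ∂μ := by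
    intro t φ hφ h0
    have hmapeq : μ.map (P t) = μ.map (P 0) := hiid t 0
    constructor
    · refine (integrable_map_measure hφ.aestronglyMeasurable (hPmeas t).aemeasurable).mp ?_
      rw [hmapeq]
      exact (integrable_map_measure hφ.aestronglyMeasurable (hPmeas 0).aemeasurable).mpr h0
    · calc ∫ ω, φ (P t ω) ∂μ = ∫ y, φ y ∂(μ.map (P t)) :=
          (integral_map (hPmeas t).aemeasurable hφ.aestronglyMeasurable).symm
        _ = ∫ y, φ y ∂(μ.map (P 0)) := by rw [hmapeq]
        _ = ∫ ω, φ (P 0 ω) ∂μ :=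
          integral_map (hPmeas 0).aemeasurable hφ.aestronglyMeasurable
  -- second moments of the state
  have hφmeas : ∀ a c b d, Measurable (fun e => mfun e a c * mfun e b d) :=
    fun a c b d => (AggAux.measurable_entry hmfunmeas a c).mul
      (AggAux.measurable_entry hmfunmeas b d)
  have hφint0 : ∀ a c b d, Integrable (fun ω => mfun (P 0 ω) a c * mfun (P 0 ω) b d) μ := by
    intro a c b d
    refine Integrable.mono' hMrfsq
      (((hφmeas a c b d).comp (hPmeas 0)).aestronglyMeasurable) ?_
    refine Filter.Eventually.of_forall fun ω => ?_
    rw [Real.norm_eq_abs]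
    exact AggAux.abs_mul_entry_le_fsq (mfun (P 0 ω)) a c b d
  have hφint : ∀ t a c b d, Integrable (fun ω => mfun (P t ω) a c * mfun (P t ω) b d) μ :=
    fun t a c b d => (transfer t _ (hφmeas a c b d) (hφint0 a c b d)).1
  have hindepφψ : ∀ t a c b d, IndepFun (fun ω => mfun (P t ω) a c * mfun (P t ω) b d)
      (fun ω => X L t ω c * X L t ω d) μ := by
    intro t a c b d
    have hψ : Measurable (fun v : Fin n → ℝ => v c * v d) :=
      (measurable_pi_apply c).mul (measurable_pi_apply d)
    exact (hIndepXP t).symm.comp (hφmeas a c b d) hψ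
  have hexp : ∀ t a b ω, X L (t + 1) ω a * X L (t + 1) ω b =
      ∑ c, ∑ d, (mfun (P t ω) a c * mfun (P t ω) b d) * (X L t ω c * X L t ω d) := by
    intro t a b ω
    rw [hXrec L t ω]
    show (∑ c, (A (t + 1) ω - B (t + 1) ω * L) a c * X L t ω c) *
      (∑ d, (A (t + 1) ω - B (t + 1) ω * L) b d * X L t ω d) = _
    rw [Finset.sum_mul_sum]
    refine Finset.sum_congr rfl fun c _ => Finset.sum_congr rfl fun d _ => by ring
  have hxInt : ∀ t a b, Integrable (fun ω => X L t ω a * X L t ω b) μ := by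
    intro t
    induction t with
    | zero =>
      intro a b
      have hx00 : X L 0 = x0 := funext (hX0 L)
      rw [hx00]
      refine Integrable.mono' hx0L2
        (((measurable_pi_apply a).comp hx0meas).mul
          ((measurable_pi_apply b).comp hx0meas)).aestronglyMeasurable ?_
      refine Filter.Eventually.of_forall fun ω => ?_
      rw [Real.norm_eq_abs, abs_mul]
      have h1 : (x0 ω a) ^ 2 ≤ ∑ i, (x0 ω i) ^ 2 :=
        Finset.single_le_sum (f := fun i => (x0 ω i) ^ 2) (fun i _ => sq_nonneg _)
          (Finset.mem_univ a)
      have h2 : (x0 ω b) ^ 2 ≤ ∑ i, (x0 ω i) ^ 2 :=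
        Finset.single_le_sum (f := fun i => (x0 ω i) ^ 2) (fun i _ => sq_nonneg _)
          (Finset.mem_univ b)
      nlinarith [abs_nonneg (x0 ω a), abs_nonneg (x0 ω b), sq_abs (x0 ω a), sq_abs (x0 ω b),
        sq_nonneg (|x0 ω a| - |x0 ω b|)]
    | succ t ih =>
      intro a b
      have : (fun ω => X L (t + 1) ω a * X L (t + 1) ω b) = fun ω =>
          ∑ c, ∑ d, (mfun (P t ω) a c * mfun (P t ω) b d) * (X L t ω c * X L t ω d) :=
        funext fun ω => hexp t a b ω
      rw [this]
      refine integrable_finset_sum _ fun c _ => integrable_finset_sum _ fun d _ => ?_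
      exact (hindepφψ t a c b d).integrable_mul (hφint t a c b d) (ih c d)
  have hterm_int : ∀ t a b c d, Integrable (fun ω =>
      (mfun (P t ω) a c * mfun (P t ω) b d) * (X L t ω c * X L t ω d)) μ :=
    fun t a b c d => (hindepφψ t a c b d).integrable_mul (hφint t a c b d) (hxInt t c d)
  -- the matrix-valued second moment
  set Sg : ℕ → Matrix (Fin n) (Fin n) ℝ :=
    fun t => Emat μ (fun ω => Matrix.vecMulVec (X L t ω) (X L t ω)) with hSgdef
  have hSg_psd : ∀ t, (Sg t).PosSemidef := by
    intro t
    refine AggAux.Emat_psd (fun i j => hxInt t i j) ?_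
    exact Filter.Eventually.of_forall fun ω => AggAux.vecMulVec_psd _
  have hSgrec : ∀ t, Sg (t + 1) = G (Sg t) := by
    intro t
    ext a b
    have l1 : Sg (t + 1) a b = ∫ ω, ∑ c, ∑ d,
        (mfun (P t ω) a c * mfun (P t ω) b d) * (X L t ω c * X L t ω d) ∂μ := by
      refine integral_congr_ae (Filter.Eventually.of_forall fun ω => ?_)
      exact hexp t a b ω
    rw [l1, integral_finset_sum _ fun c _ => integrable_finset_sum _ fun d _ =>
      hterm_int t a b c d]
    have l2 : ∀ c, ∫ ω, ∑ d, (mfun (P t ω) a c * mfun (P t ω) b d) *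
        (X L t ω c * X L t ω d) ∂μ = ∑ d,
        (∫ ω, mfun (P 0 ω) a c * mfun (P 0 ω) b d ∂μ) * Sg t c d := by
      intro c
      rw [integral_finset_sum _ fun d _ => hterm_int t a b c d]
      refine Finset.sum_congr rfl fun d _ => ?_
      rw [show (fun ω => (mfun (P t ω) a c * mfun (P t ω) b d) * (X L t ω c * X L t ω d))
        = ((fun ω => mfun (P t ω) a c * mfun (P t ω) b d) *
          (fun ω => X L t ω c * X L t ω d)) from rfl]
      rw [(hindepφψ t a c b d).integral_mul_eq_mul_integral (hφint t a c b d).aestronglyMeasurable (hxInt t c d).aestronglyMeasurable]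
      rw [(transfer t _ (hφmeas a c b d) (hφint0 a c b d)).2]
      rfl
    have l3 : (G (Sg t)) a b = ∑ c, ∑ d, Sg t c d * ∫ ω, Mr ω a c * Mr ω b d ∂μ :=
      Fop_entry μ hMrmeas hMrfsq (Sg t) a b
    rw [l3]
    refine Finset.sum_congr rfl fun c _ => ?_
    rw [l2 c]
    refine Finset.sum_congr rfl fun d _ => mul_comm _ _
  have hSgiter : ∀ t, Sg t = G^[t] (Sg 0) := by
    intro t
    induction t with
    | zero => simp
    | succ t ih => rw [hSgrec t, ih, ← Function.iterate_succ_apply' G t (Sg 0)]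
  -- linearity and positivity of the iterates of G
  have hGadd' : ∀ Z W, G (Z + W) = G Z + G W := fun Z W => by
    rw [hGdef]; exact Fop_add μ hMrmeas hMrfsq Z W
  have hGsub' : ∀ Z W, G (Z - W) = G Z - G W := fun Z W => by
    rw [hGdef]; exact Fop_sub μ hMrmeas hMrfsq Z W
  have hGsmul' : ∀ (c : ℝ) Z, G (c • Z) = c • G Z := fun c Z => by
    rw [hGdef]; exact Fop_smul μ hMrmeas hMrfsq c Z
  have hGpsd' : ∀ {Z}, Z.PosSemidef → (G Z).PosSemidef := fun hZ => by
    rw [hGdef]; exact Fop_psd μ hMrmeas hMrfsq hZ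
  have hGiter_add : ∀ t (Z W : Matrix (Fin n) (Fin n) ℝ),
      G^[t] (Z + W) = G^[t] Z + G^[t] W := by
    intro t
    induction t with
    | zero => intro Z W; simp
    | succ t ih =>
      intro Z W
      rw [Function.iterate_succ_apply' G t, Function.iterate_succ_apply' G t,
        Function.iterate_succ_apply' G t, ih, hGadd']
  have hGiter_sub : ∀ t (Z W : Matrix (Fin n) (Fin n) ℝ),
      G^[t] (Z - W) = G^[t] Z - G^[t] W := by
    intro t
    induction t with
    | zero => intro Z W; simp
    | succ t ih =>
      intro Z W
      rw [Function.iterate_succ_apply' G t, Function.iterate_succ_apply' G t,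
        Function.iterate_succ_apply' G t, ih, hGsub']
  have hGiter_smul : ∀ t (c : ℝ) (Z : Matrix (Fin n) (Fin n) ℝ),
      G^[t] (c • Z) = c • G^[t] Z := by
    intro t
    induction t with
    | zero => intro c Z; simp
    | succ t ih =>
      intro c Z
      rw [Function.iterate_succ_apply' G t, Function.iterate_succ_apply' G t, ih, hGsmul']
  have hGiter_psd : ∀ t {Z : Matrix (Fin n) (Fin n) ℝ}, Z.PosSemidef →
      (G^[t] Z).PosSemidef := by
    intro t
    induction t with
    | zero => intro Z hZ; simpa using hZ
    | succ t ih =>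
      intro Z hZ
      rw [Function.iterate_succ_apply' G t]
      exact hGpsd' (ih hZ)
  -- expectations of the weight matrices
  set EQ : Matrix (Fin n) (Fin n) ℝ := Emat μ (fun ω => Qp 1 ω) with hEQdef
  set ER : Matrix (Fin m) (Fin m) ℝ := Emat μ (fun ω => Rp 1 ω) with hERdef
  have hEQint : ∀ i j, Integrable (fun ω => Qp 1 ω i j) μ := by
    intro i j
    refine Integrable.mono' hQ1 (AggAux.measurable_entry (hQmeas 1) i j).aestronglyMeasurable ?_
    exact Filter.Eventually.of_forall fun ω => by
      rw [Real.norm_eq_abs]; exact AggAux.abs_entry_le_opNorm _ i j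
  have hERint : ∀ i j, Integrable (fun ω => Rp 1 ω i j) μ := by
    intro i j
    refine Integrable.mono' hR1 (AggAux.measurable_entry (hRmeas 1) i j).aestronglyMeasurable ?_
    exact Filter.Eventually.of_forall fun ω => by
      rw [Real.norm_eq_abs]; exact AggAux.abs_entry_le_opNorm _ i j
  have hEQpsd : EQ.PosSemidef := AggAux.Emat_psd hEQint ((hpsd 0).mono fun ω h => h.1)
  have hERpsd : ER.PosSemidef := AggAux.Emat_psd hERint ((hpsd 0).mono fun ω h => h.2)
  have hLERL_psd : (Lᵀ * ER * L).PosSemidef := by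
    have h := hERpsd.mul_mul_conjTranspose_same Lᵀ
    rwa [Matrix.conjTranspose_eq_transpose_of_trivial, Matrix.transpose_transpose] at h
  -- the per-step cost
  set ν : (Matrix (Fin n) (Fin n) ℝ × Matrix (Fin n) (Fin m) ℝ ×
      Matrix (Fin n) (Fin n) ℝ × Matrix (Fin m) (Fin m) ℝ) → Matrix (Fin n) (Fin n) ℝ :=
    fun e => e.2.2.1 + Lᵀ * e.2.2.2 * L with hνdef
  have hνentry : ∀ (e : Matrix (Fin n) (Fin n) ℝ × Matrix (Fin n) (Fin m) ℝ ×
      Matrix (Fin n) (Fin n) ℝ × Matrix (Fin m) (Fin m) ℝ) i j,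
      ν e i j = e.2.2.1 i j + ∑ v, ∑ u, Lᵀ i u * e.2.2.2 u v * L v j := by
    intro e i j
    show (e.2.2.1 + Lᵀ * e.2.2.2 * L) i j = _
    rw [Matrix.add_apply]
    congr 1
    simp only [Matrix.mul_apply, Finset.sum_mul]
  have hνmeas : ∀ i j, Measurable (fun e : Matrix (Fin n) (Fin n) ℝ ×
      Matrix (Fin n) (Fin m) ℝ × Matrix (Fin n) (Fin n) ℝ × Matrix (Fin m) (Fin m) ℝ =>
      ν e i j) := by
    intro i j
    have : (fun e : Matrix (Fin n) (Fin n) ℝ × Matrix (Fin n) (Fin m) ℝ ×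
        Matrix (Fin n) (Fin n) ℝ × Matrix (Fin m) (Fin m) ℝ => ν e i j)
        = fun e => e.2.2.1 i j + ∑ v, ∑ u, Lᵀ i u * e.2.2.2 u v * L v j :=
      funext fun e => hνentry e i j
    rw [this]
    refine (AggAux.measurable_entry (measurable_snd.snd.fst) i j).add ?_
    refine Finset.measurable_sum _ fun v _ => Finset.measurable_sum _ fun u _ => ?_
    exact ((AggAux.measurable_entry (measurable_snd.snd.snd) u v).const_mul _).mul_const _
  have hνint0 : ∀ i j, Integrable (fun ω => ν (P 0 ω) i j) μ := by
    intro i j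
    have he : (fun ω => ν (P 0 ω) i j)
        = fun ω => Qp 1 ω i j + ∑ v, ∑ u, Lᵀ i u * Rp 1 ω u v * L v j :=
      funext fun ω => hνentry (P 0 ω) i j
    rw [he]
    refine (hEQint i j).add ?_
    refine integrable_finset_sum _ fun v _ => integrable_finset_sum _ fun u _ => ?_
    have := ((hERint u v).const_mul (Lᵀ i u)).mul_const (L v j)
    exact this.congr (Filter.Eventually.of_forall fun ω => rfl)
  have hνbar : ∀ i j, ∫ ω, ν (P 0 ω) i j ∂μ = (EQ + Lᵀ * ER * L) i j := by
    intro i j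
    have he : (fun ω => ν (P 0 ω) i j)
        = fun ω => Qp 1 ω i j + ∑ v, ∑ u, Lᵀ i u * Rp 1 ω u v * L v j :=
      funext fun ω => hνentry (P 0 ω) i j
    rw [he, integral_add (hEQint i j) (integrable_finset_sum _ fun v _ =>
      integrable_finset_sum _ fun u _ =>
      (((hERint u v).const_mul (Lᵀ i u)).mul_const (L v j)).congr
        (Filter.Eventually.of_forall fun ω => rfl))]
    have h2 : (EQ + Lᵀ * ER * L) i j = EQ i j + ∑ v, ∑ u, Lᵀ i u * ER u v * L v j := by
      rw [Matrix.add_apply]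
      congr 1
      simp only [Matrix.mul_apply, Finset.sum_mul]
    rw [h2]
    congr 1
    rw [integral_finset_sum _ fun v _ => integrable_finset_sum _ fun u _ =>
      (((hERint u v).const_mul (Lᵀ i u)).mul_const (L v j)).congr
        (Filter.Eventually.of_forall fun ω => rfl)]
    refine Finset.sum_congr rfl fun v _ => ?_
    rw [integral_finset_sum _ fun u _ =>
      (((hERint u v).const_mul (Lᵀ i u)).mul_const (L v j)).congr
        (Filter.Eventually.of_forall fun ω => rfl)]
    refine Finset.sum_congr rfl fun u _ => ?_
    rw [show (fun ω => Lᵀ i u * Rp 1 ω u v * L v j)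
      = fun ω => (Lᵀ i u * L v j) * Rp 1 ω u v from funext fun ω => by ring]
    rw [MeasureTheory.integral_const_mul]
    have : ER u v = ∫ ω, Rp 1 ω u v ∂μ := rfl
    rw [← this]; ring
  have hνint : ∀ t i j, Integrable (fun ω => ν (P t ω) i j) μ :=
    fun t i j => (transfer t _ (hνmeas i j) (hνint0 i j)).1
  set cost : ℕ → ℝ := fun t => ∫ ω, (X L t ω) ⬝ᵥ ((Qp (t + 1) ω +
      Lᵀ * Rp (t + 1) ω * L).mulVec (X L t ω)) ∂μ with hcostdef
  have hcost_eq : ∀ t, cost t = ((EQ + Lᵀ * ER * L) * Sg t).trace := by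
    intro t
    have hint : ∀ i j, Integrable (fun ω => ν (P t ω) i j * (X L t ω i * X L t ω j)) μ := by
      intro i j
      have hi : IndepFun (fun ω => ν (P t ω) i j) (fun ω => X L t ω i * X L t ω j) μ :=
        (hIndepXP t).symm.comp (hνmeas i j)
          ((measurable_pi_apply i).mul (measurable_pi_apply j))
      exact hi.integrable_mul (hνint t i j) (hxInt t i j)
    have l1 : cost t = ∫ ω, ∑ i, ∑ j, ν (P t ω) i j * (X L t ω i * X L t ω j) ∂μ := by
      refine integral_congr_ae (Filter.Eventually.of_forall fun ω => ?_)
      exact AggAux.quadform_expand (ν (P t ω)) (X L t ω)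
    rw [l1, integral_finset_sum _ fun i _ => integrable_finset_sum _ fun j _ => hint i j]
    have l2 : ∀ i, ∫ ω, ∑ j, ν (P t ω) i j * (X L t ω i * X L t ω j) ∂μ
        = ∑ j, (EQ + Lᵀ * ER * L) i j * Sg t i j := by
      intro i
      rw [integral_finset_sum _ fun j _ => hint i j]
      refine Finset.sum_congr rfl fun j _ => ?_
      have hi : IndepFun (fun ω => ν (P t ω) i j) (fun ω => X L t ω i * X L t ω j) μ :=
        (hIndepXP t).symm.comp (hνmeas i j)
          ((measurable_pi_apply i).mul (measurable_pi_apply j))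
      rw [show (fun ω => ν (P t ω) i j * (X L t ω i * X L t ω j))
        = ((fun ω => ν (P t ω) i j) * (fun ω => X L t ω i * X L t ω j)) from rfl]
      rw [hi.integral_mul_eq_mul_integral (hνint t i j).aestronglyMeasurable (hxInt t i j).aestronglyMeasurable]
      rw [(transfer t _ (hνmeas i j) (hνint0 i j)).2, hνbar i j]
      rfl
    rw [Finset.sum_congr rfl fun i _ => l2 i]
    exact AggAux.entry_sum_eq_trace (AggAux.issymm_of_hermitian (hSg_psd t).1)
  have hcost_lower : ∀ t, qmin * (Sg t).trace ≤ cost t := by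
    intro t
    rw [hcost_eq t]
    have h1 : 0 ≤ ((Lᵀ * ER * L) * Sg t).trace :=
      AggAux.trace_mul_nonneg hLERL_psd (hSg_psd t)
    have h2 : 0 ≤ ((EQ - qmin • 1) * Sg t).trace :=
      AggAux.trace_mul_nonneg hEQ (hSg_psd t)
    have e1 : (EQ + Lᵀ * ER * L) * Sg t = EQ * Sg t + (Lᵀ * ER * L) * Sg t := by
      rw [Matrix.add_mul]
    have e2 : (EQ - qmin • 1) * Sg t = EQ * Sg t - qmin • Sg t := by
      rw [Matrix.sub_mul, Matrix.smul_mul, Matrix.one_mul]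
    rw [e1, Matrix.trace_add]
    rw [e2, Matrix.trace_sub, Matrix.trace_smul, smul_eq_mul] at h2
    linarith
  have hcost_upper : ∀ t, cost t ≤ (EQ + Lᵀ * ER * L).trace * (Sg t).trace := by
    intro t
    rw [hcost_eq t]
    exact AggAux.trace_mul_le (hEQpsd.add hLERL_psd) (hSg_psd t)
  -- traces and stability
  have hone_psd : (1 : Matrix (Fin n) (Fin n) ℝ).PosSemidef := by
    simpa using AggAux.psd_smul_one (zero_le_one (α := ℝ))
  set trS : ℕ → ℝ := fun t => (Sg t).trace with htrSdef
  set b : ℕ → ℝ := fun t => (G^[t] (1 : Matrix (Fin n) (Fin n) ℝ)).trace with hbdef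
  have hb_nonneg : ∀ t, 0 ≤ b t := fun t =>
    AggAux.psd_trace_nonneg (hGiter_psd t hone_psd)
  have htrS_nonneg : ∀ t, 0 ≤ trS t := fun t => AggAux.psd_trace_nonneg (hSg_psd t)
  have htrS_eq : ∀ t, trS t = ∫ ω, ∑ i, (X L t ω i) ^ 2 ∂μ := by
    intro t
    have h1 : trS t = ∑ i, ∫ ω, X L t ω i * X L t ω i ∂μ := rfl
    rw [h1, ← integral_finset_sum _ fun i _ => hxInt t i i]
    refine integral_congr_ae (Filter.Eventually.of_forall fun ω => ?_)
    exact Finset.sum_congr rfl fun i _ => (sq (X L t ω i)).symm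
  have htrS_tend : Tendsto trS atTop (nhds 0) := by
    have hstab' : Tendsto (fun t => ∫⁻ ω, ENNReal.ofReal (∑ i, (X L t ω i) ^ 2) ∂μ)
        atTop (nhds 0) := (hStabDef L).mp hstab
    have h2 := (ENNReal.tendsto_toReal (by norm_num : (0 : ENNReal) ≠ ⊤)).comp hstab'
    rw [ENNReal.toReal_zero] at h2
    refine h2.congr fun t => ?_
    have hnn : 0 ≤ᵐ[μ] fun ω => ∑ i, (X L t ω i) ^ 2 :=
      Filter.Eventually.of_forall fun ω => Finset.sum_nonneg fun i _ => sq_nonneg _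
    have hms : AEStronglyMeasurable (fun ω => ∑ i, (X L t ω i) ^ 2) μ :=
      (Finset.measurable_sum _ fun i _ =>
        ((measurable_pi_apply i).comp (hxmeas t)).pow_const 2).aestronglyMeasurable
    show ENNReal.toReal (∫⁻ ω, ENNReal.ofReal (∑ i, (X L t ω i) ^ 2) ∂μ) = trS t
    rw [htrS_eq t, integral_eq_lintegral_of_nonneg_ae hnn hms]
  have hS0' : (Sg 0 - μ₀ • (1 : Matrix (Fin n) (Fin n) ℝ)).PosSemidef := by
    have hx00 : X L 0 = x0 := funext (hX0 L)
    have he : Sg 0 = Emat μ (fun ω => Matrix.vecMulVec (x0 ω) (x0 ω)) := by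
      show Emat μ (fun ω => Matrix.vecMulVec (X L 0 ω) (X L 0 ω)) = _
      have hfg : (fun ω => Matrix.vecMulVec (X L 0 ω) (X L 0 ω))
          = fun ω => Matrix.vecMulVec (x0 ω) (x0 ω) :=
        funext fun ω => by rw [hX0 L ω]
      rw [hfg]
    rw [he]
    exact hS0
  have hb_le : ∀ t, μ₀ * b t ≤ trS t := by
    intro t
    have h : (Sg t - μ₀ • G^[t] 1).PosSemidef := by
      have e : Sg t - μ₀ • G^[t] 1 = G^[t] (Sg 0 - μ₀ • 1) := by
        rw [hGiter_sub, hGiter_smul, ← hSgiter t]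
      rw [e]
      exact hGiter_psd t hS0'
    have h2 := AggAux.trace_le_of_psd_sub h
    rwa [Matrix.trace_smul, smul_eq_mul] at h2
  have hb_tend : Tendsto b atTop (nhds 0) := by
    have hub : Tendsto (fun t => μ₀⁻¹ * trS t) atTop (nhds 0) := by
      have := htrS_tend.const_mul μ₀⁻¹
      simpa using this
    refine tendsto_of_tendsto_of_tendsto_of_le_of_le (tendsto_const_nhds) hub
      hb_nonneg fun t => ?_
    have h3 := hb_le t
    calc b t = μ₀⁻¹ * (μ₀ * b t) := by field_simp
      _ ≤ μ₀⁻¹ * trS t := mul_le_mul_of_nonneg_left h3 (inv_nonneg.mpr hμ₀.le)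
  obtain ⟨T, hThalf, hT1⟩ : ∃ T, b T < 1/2 ∧ 1 ≤ T := by
    have hev : ∀ᶠ t in atTop, b t < 1/2 := hb_tend.eventually_lt_const (by norm_num)
    exact (hev.and (eventually_ge_atTop 1)).exists
  have hhalf : ((1/2 : ℝ) • (1 : Matrix (Fin n) (Fin n) ℝ) - G^[T] 1).PosSemidef :=
    AggAux.smul_one_sub_psd_of_trace (hGiter_psd T hone_psd) hThalf.le
  have hstep : ∀ s, b (s + T) ≤ (1/2) * b s := by
    intro s
    have e : G^[s + T] (1 : Matrix (Fin n) (Fin n) ℝ) = G^[s] (G^[T] 1) :=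
      Function.iterate_add_apply G s T 1
    have hp : ((1/2 : ℝ) • G^[s] 1 - G^[s] (G^[T] 1)).PosSemidef := by
      have h := hGiter_psd s hhalf
      rwa [hGiter_sub, hGiter_smul] at h
    have htr := AggAux.trace_le_of_psd_sub hp
    rw [Matrix.trace_smul, smul_eq_mul] at htr
    calc b (s + T) = (G^[s] (G^[T] 1)).trace := by
          show (G^[s + T] (1 : Matrix (Fin n) (Fin n) ℝ)).trace = _
          rw [e]
      _ ≤ 1/2 * (G^[s] 1).trace := htr
      _ = 1/2 * b s := rfl
  have hgeo : ∀ k r, b (r + k * T) ≤ (1/2 : ℝ)^k * b r := by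
    intro k
    induction k with
    | zero => intro r; simp
    | succ k ih =>
      intro r
      have e : r + (k + 1) * T = (r + k * T) + T := by ring
      rw [e]
      calc b ((r + k * T) + T) ≤ 1/2 * b (r + k * T) := hstep _
        _ ≤ 1/2 * ((1/2 : ℝ)^k * b r) := by
            have := ih r
            nlinarith [ih r]
        _ = (1/2 : ℝ)^(k + 1) * b r := by ring
  set Bs := ∑ r ∈ Finset.range T, b r with hBsdef
  have hBs_nonneg : 0 ≤ Bs := Finset.sum_nonneg fun r _ => hb_nonneg r
  have hpartial : ∀ K, ∑ t ∈ Finset.range (K * T), b t ≤ 2 * Bs := by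
    have key : ∀ K, ∑ t ∈ Finset.range (K * T), b t ≤
        (∑ j ∈ Finset.range K, (1/2 : ℝ)^j) * Bs := by
      intro K
      induction K with
      | zero => simp
      | succ K ih =>
        have hsplit : ∑ t ∈ Finset.range ((K + 1) * T), b t =
            ∑ t ∈ Finset.range (K * T), b t + ∑ r ∈ Finset.range T, b (K * T + r) := by
          rw [Nat.succ_mul, Finset.range_eq_Ico,
            ← Finset.sum_Ico_consecutive _ (Nat.zero_le (K * T)) (Nat.le_add_right _ T)]
          congr 1
          rw [Finset.sum_Ico_eq_sum_range]
          simp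
          rw [Finset.sum_Ico_eq_sum_range]
          simp
        rw [hsplit]
        have h2 : ∑ r ∈ Finset.range T, b (K * T + r) ≤ (1/2 : ℝ)^K * Bs := by
          rw [hBsdef, Finset.mul_sum]
          refine Finset.sum_le_sum fun r _ => ?_
          rw [show K * T + r = r + K * T from Nat.add_comm _ _]
          exact hgeo K r
        calc ∑ t ∈ Finset.range (K * T), b t + ∑ r ∈ Finset.range T, b (K * T + r)
            ≤ (∑ j ∈ Finset.range K, (1/2 : ℝ)^j) * Bs + (1/2 : ℝ)^K * Bs := by
              exact add_le_add ih h2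
          _ = (∑ j ∈ Finset.range (K + 1), (1/2 : ℝ)^j) * Bs := by
              rw [Finset.sum_range_succ]; ring
    intro K
    refine (key K).trans ?_
    have hgs : ∑ j ∈ Finset.range K, (1/2 : ℝ)^j ≤ 2 := by
      have h := geom_sum_eq (by norm_num : (1/2 : ℝ) ≠ 1) K
      rw [h]
      have hp : (0:ℝ) ≤ (1/2 : ℝ)^K := by positivity
      have : ((1/2:ℝ)^K - 1) / (1/2 - 1) = 2 * (1 - (1/2:ℝ)^K) := by ring
      rw [this]
      nlinarith
    exact mul_le_mul_of_nonneg_right hgs hBs_nonneg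
  have hsum_b : Summable b := by
    refine summable_of_sum_range_le hb_nonneg (c := 2 * Bs) fun N => ?_
    have hsub : Finset.range N ⊆ Finset.range (N * T) :=
      Finset.range_subset_range.mpr (Nat.le_mul_of_pos_right N (by omega))
    calc ∑ t ∈ Finset.range N, b t ≤ ∑ t ∈ Finset.range (N * T), b t :=
          Finset.sum_le_sum_of_subset_of_nonneg hsub fun t _ _ => hb_nonneg t
      _ ≤ 2 * Bs := hpartial N
  have htrS_le : ∀ t, trS t ≤ trS 0 * b t := by
    intro t
    have hS0le : ((trS 0) • (1 : Matrix (Fin n) (Fin n) ℝ) - Sg 0).PosSemidef :=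
      AggAux.smul_one_sub_psd_of_trace (hSg_psd 0) le_rfl
    have h : ((trS 0) • G^[t] 1 - Sg t).PosSemidef := by
      have h2 := hGiter_psd t hS0le
      rwa [hGiter_sub, hGiter_smul, ← hSgiter t] at h2
    have h3 := AggAux.trace_le_of_psd_sub h
    rwa [Matrix.trace_smul, smul_eq_mul] at h3
  have hsum_trS : Summable trS :=
    Summable.of_nonneg_of_le htrS_nonneg htrS_le (hsum_b.mul_left (trS 0))
  have hsum_cost : Summable cost :=
    Summable.of_nonneg_of_le
      (fun t => (mul_nonneg hqmin.le (htrS_nonneg t)).trans (hcost_lower t))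
      hcost_upper (hsum_trS.mul_left _)
  have hCL : C L = ∑' t, cost t := hC L
  have h1 : qmin * ∑' t, trS t ≤ C L := by
    rw [hCL, ← tsum_mul_left]
    exact (hsum_trS.mul_left qmin).tsum_le_tsum (fun t => hcost_lower t) hsum_cost
  have h2 : μ₀ * ∑' t, b t ≤ ∑' t, trS t := by
    rw [← tsum_mul_left]
    exact (hsum_b.mul_left μ₀).tsum_le_tsum hb_le hsum_trS
  have hsum_b_le : ∑' t, b t ≤ C L / (μ₀ * qmin) := by
    rw [le_div_iff₀ (by positivity)]
    nlinarith [h1, h2, hqmin.le, hμ₀.le]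
  -- final: the aggregate operator applied to Y
  have hW1psd : ((opNorm Y) • (1 : Matrix (Fin n) (Fin n) ℝ) - Y).PosSemidef :=
    (AggAux.opNorm_smul_one_sub_psd hYsymm).1
  have hW2psd : ((opNorm Y) • (1 : Matrix (Fin n) (Fin n) ℝ) + Y).PosSemidef :=
    (AggAux.opNorm_smul_one_sub_psd hYsymm).2
  set W1 := (opNorm Y) • (1 : Matrix (Fin n) (Fin n) ℝ) - Y with hW1def
  set W2 := (opNorm Y) • (1 : Matrix (Fin n) (Fin n) ℝ) + Y with hW2def
  have hPt_psd : ∀ t, (G^[t] W1).PosSemidef := fun t => hGiter_psd t hW1psd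
  have hQt_psd : ∀ t, (G^[t] W2).PosSemidef := fun t => hGiter_psd t hW2psd
  have hWsum : W1 + W2 = (2 * opNorm Y) • (1 : Matrix (Fin n) (Fin n) ℝ) := by
    rw [hW1def, hW2def, two_mul, add_smul]; abel
  have htrPQ : ∀ t, (G^[t] W1).trace + (G^[t] W2).trace = 2 * opNorm Y * b t := by
    intro t
    rw [← Matrix.trace_add, ← hGiter_add t, hWsum, hGiter_smul, Matrix.trace_smul,
      smul_eq_mul]
  have hW21 : W2 - W1 = (2 : ℝ) • Y := by rw [hW1def, hW2def, two_smul]; abel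
  have hdiff : ∀ t, G^[t] W2 - G^[t] W1 = (2 : ℝ) • G^[t] Y := by
    intro t; rw [← hGiter_sub t, hW21, hGiter_smul]
  have hent_eq : ∀ t i j, G^[t] Y i j = (G^[t] W2 i j - G^[t] W1 i j) / 2 := by
    intro t i j
    have h2 := congrFun (congrFun (hdiff t) i) j
    rw [Matrix.sub_apply, Matrix.smul_apply, smul_eq_mul] at h2
    linarith
  have hentry : ∀ t i j, |G^[t] Y i j| ≤ opNorm Y * b t := by
    intro t i j
    have h1 := AggAux.abs_entry_le_trace (hPt_psd t) i j
    have h2 := AggAux.abs_entry_le_trace (hQt_psd t) i j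
    have h3 := htrPQ t
    have h4 : |G^[t] W2 i j - G^[t] W1 i j| ≤ |G^[t] W2 i j| + |G^[t] W1 i j| := by
      calc |G^[t] W2 i j - G^[t] W1 i j| = |G^[t] W2 i j + -(G^[t] W1 i j)| := by
            rw [sub_eq_add_neg]
        _ ≤ |G^[t] W2 i j| + |-(G^[t] W1 i j)| := abs_add_le _ _
        _ = |G^[t] W2 i j| + |G^[t] W1 i j| := by rw [abs_neg]
    rw [hent_eq t i j, abs_div, abs_two]
    linarith
  have hsum_oyb : Summable (fun t => opNorm Y * b t) := hsum_b.mul_left _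
  have hsumY_ij : ∀ i j, Summable fun t => G^[t] Y i j := fun i j =>
    Summable.of_abs (Summable.of_nonneg_of_le (fun t => abs_nonneg _)
      (fun t => hentry t i j) hsum_oyb)
  have hsumY : Summable fun t => G^[t] Y := AggAux.matrix_summable hsumY_ij
  have htrP_le : ∀ t, (G^[t] W1).trace ≤ 2 * opNorm Y * b t := by
    intro t
    have := AggAux.psd_trace_nonneg (hQt_psd t)
    linarith [htrPQ t]
  have htrQ_le : ∀ t, (G^[t] W2).trace ≤ 2 * opNorm Y * b t := by
    intro t
    have := AggAux.psd_trace_nonneg (hPt_psd t)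
    linarith [htrPQ t]
  have hsumP_ij : ∀ i j, Summable fun t => G^[t] W1 i j := fun i j =>
    Summable.of_abs (Summable.of_nonneg_of_le (fun t => abs_nonneg _)
      (fun t => (AggAux.abs_entry_le_trace (hPt_psd t) i j).trans (htrP_le t))
      ((hsum_b.mul_left (2 * opNorm Y))))
  have hsumQ_ij : ∀ i j, Summable fun t => G^[t] W2 i j := fun i j =>
    Summable.of_abs (Summable.of_nonneg_of_le (fun t => abs_nonneg _)
      (fun t => (AggAux.abs_entry_le_trace (hQt_psd t) i j).trans (htrQ_le t))
      ((hsum_b.mul_left (2 * opNorm Y))))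
  set PS : Matrix (Fin n) (Fin n) ℝ := Matrix.of (fun i j => ∑' t, G^[t] W1 i j) with hPSdef
  set QS : Matrix (Fin n) (Fin n) ℝ := Matrix.of (fun i j => ∑' t, G^[t] W2 i j) with hQSdef
  have hPS_psd : PS.PosSemidef := AggAux.psd_tsum hPt_psd hsumP_ij
  have hQS_psd : QS.PosSemidef := AggAux.psd_tsum hQt_psd hsumQ_ij
  set D : Matrix (Fin n) (Fin n) ℝ := (1/2 : ℝ) • (QS + PS) with hDdef
  have hXentry : ∀ i j, (∑' t, G^[t] Y) i j = ∑' t, G^[t] Y i j := fun i j =>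
    AggAux.matrix_tsum_apply hsumY i j
  have hXsum_entry : ∀ i j, (∑' t, G^[t] Y) i j = (QS i j - PS i j) / 2 := by
    intro i j
    rw [hXentry i j]
    have hterm : ∀ t, G^[t] Y i j = (G^[t] W2 i j - G^[t] W1 i j) * (1/2) := fun t => by
      rw [hent_eq t i j]; ring
    rw [tsum_congr hterm, tsum_mul_right, (hsumQ_ij i j).tsum_sub (hsumP_ij i j)]
    have hq : QS i j = ∑' t, G^[t] W2 i j := rfl
    have hp : PS i j = ∑' t, G^[t] W1 i j := rfl
    rw [hq, hp]; ring
  have hDX1 : D - (∑' t, G^[t] Y) = PS := by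
    ext i j
    rw [Matrix.sub_apply]
    have hD : D i j = (QS i j + PS i j) * (1/2) := by
      rw [hDdef, Matrix.smul_apply, Matrix.add_apply, smul_eq_mul]; ring
    rw [hD, hXsum_entry i j]; ring
  have hDX2 : D + (∑' t, G^[t] Y) = QS := by
    ext i j
    rw [Matrix.add_apply]
    have hD : D i j = (QS i j + PS i j) * (1/2) := by
      rw [hDdef, Matrix.smul_apply, Matrix.add_apply, smul_eq_mul]; ring
    rw [hD, hXsum_entry i j]; ring
  have hXsymm : (∑' t, G^[t] Y).IsSymm := by
    ext i j
    rw [Matrix.transpose_apply]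
    rw [hXsum_entry i j, hXsum_entry j i]
    have hqsym := AggAux.issymm_of_hermitian hQS_psd.1
    have hpsym := AggAux.issymm_of_hermitian hPS_psd.1
    have hq : QS j i = QS i j := by
      calc QS j i = QSᵀ i j := rfl
        _ = QS i j := by rw [hqsym]
    have hp : PS j i = PS i j := by
      calc PS j i = PSᵀ i j := rfl
        _ = PS i j := by rw [hpsym]
    rw [hq, hp]
  have hop : opNorm (∑' t, G^[t] Y) ≤ D.trace := by
    refine AggAux.opNorm_le_trace_of_sandwich hXsymm ?_ ?_
    · rw [hDX1]; exact hPS_psd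
    · rw [hDX2]; exact hQS_psd
  have hsq : Summable fun t => (G^[t] W2).trace := by
    refine Summable.congr (f := fun t => ∑ i, G^[t] W2 i i) ?_ fun t => rfl
    exact summable_sum fun i _ => hsumQ_ij i i
  have hsp : Summable fun t => (G^[t] W1).trace := by
    refine Summable.congr (f := fun t => ∑ i, G^[t] W1 i i) ?_ fun t => rfl
    exact summable_sum fun i _ => hsumP_ij i i
  have htrD : D.trace = opNorm Y * ∑' t, b t := by
    rw [hDdef, Matrix.trace_smul, Matrix.trace_add, smul_eq_mul]
    have hqtr : QS.trace = ∑' t, (G^[t] W2).trace := AggAux.trace_of_tsum hsumQ_ij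
    have hptr : PS.trace = ∑' t, (G^[t] W1).trace := AggAux.trace_of_tsum hsumP_ij
    rw [hqtr, hptr, ← hsq.tsum_add hsp]
    have hterm : ∀ t, (G^[t] W2).trace + (G^[t] W1).trace = (2 * opNorm Y) * b t := by
      intro t
      have := htrPQ t
      linarith
    rw [tsum_congr hterm, tsum_mul_left]
    ring
  rw [htrD] at hop
  calc opNorm (∑' t, G^[t] Y) ≤ opNorm Y * ∑' t, b t := hop
    _ ≤ opNorm Y * (C L / (μ₀ * qmin)) :=
        mul_le_mul_of_nonneg_left hsum_b_le (AggAux.opNorm_nonneg' Y)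
    _ = C L / (μ₀ * qmin) * opNorm Y := mul_comm _ _
end
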